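/- arXiv:2111.10796 — 7 statements merged into one kernel-verified Lean document; each statement's English description precedes it below -/
import Mathlib

section
/- Let k ≥ 1 and let b, c be positive integers such that for every prime q and every positive integer t with q^t dividing (b+c)/gcd(b,c), it holds that b + c ≤ 2k + (b+c)/q^t. Set P = (b+c)/gcd(b,c) if (b+c)/gcd(b,c) is odd, and P = 2(b+c)/gcd(b,c) if (b+c)/gcd(b,c) is even. Then there exist nonnegative integers l_1,...,l_k such that there is a c-multitiling of ℤ/Pℤ with tile u_{l_1,...,l_k;b,c;P}. -/
open Polynomial

open scoped Classical

/-- The product of the cyclotomic polynomials `Φ_n` over all `n ∣ P` such that `n` is a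
prime power and `Φ_n` divides `A` (the polynomial `S̃_P` / `d̃_u` of the paper). -/
noncomputable def cycloProdPP (P : ℕ) (A : Polynomial ℤ) : Polynomial ℤ :=
  ∏ n ∈ (Nat.divisors P).filter
      (fun n => IsPrimePow n ∧ Polynomial.cyclotomic n ℤ ∣ A),
    Polynomial.cyclotomic n ℤ

/-- The polynomial `A(x) = (b+c-2k)·x^M + Σ_i (x^{M+l_i} + x^{M-l_i})`, where
`M = max(l_1,...,l_k)`. -/
noncomputable def polyA (k : ℕ) (l : Fin k → ℕ) (b c : ℕ) : Polynomial ℤ :=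
  Polynomial.C ((b : ℤ) + (c : ℤ) - 2 * (k : ℤ)) * Polynomial.X ^ (Finset.univ.sup l)
    + ∑ i : Fin k,
      (Polynomial.X ^ (Finset.univ.sup l + l i) + Polynomial.X ^ (Finset.univ.sup l - l i))

/-- A perfect 2-colouring (black = `true`, white = `false`) with parameters `(b, c)` of the
circulant graph `C_P(l_1,...,l_k)` on `ℤ/Pℤ`: every black vertex has exactly `b` white
neighbours and every white vertex has exactly `c` black neighbours, counted with
multiplicity. -/
def IsPerfectColouring (P k : ℕ) (l : Fin k → ℕ) (b c : ℕ) (f : ZMod P → Bool) : Prop :=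
  (∀ v : ZMod P, f v = true →
    (∑ i : Fin k, ((if f (v + (l i : ZMod P)) = false then 1 else 0)
      + (if f (v - (l i : ZMod P)) = false then 1 else 0)) = b)) ∧
  (∀ v : ZMod P, f v = false →
    (∑ i : Fin k, ((if f (v + (l i : ZMod P)) = true then 1 else 0)
      + (if f (v - (l i : ZMod P)) = true then 1 else 0)) = c))

/-- A perfect 2-colouring (black = `true`, white = `false`) with parameters `(b, c)` of the
infinite circulant graph `C_∞(l_1,...,l_k)` on `ℤ`. -/
def IsPerfectColouringInt (k : ℕ) (l : Fin k → ℕ) (b c : ℕ) (f : ℤ → Bool) : Prop :=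
  (∀ n : ℤ, f n = true →
    (∑ i : Fin k, ((if f (n + (l i : ℤ)) = false then 1 else 0)
      + (if f (n - (l i : ℤ)) = false then 1 else 0)) = b)) ∧
  (∀ n : ℤ, f n = false →
    (∑ i : Fin k, ((if f (n + (l i : ℤ)) = true then 1 else 0)
      + (if f (n - (l i : ℤ)) = true then 1 else 0)) = c))

/-- `v` is an `m`-multitiling of `ℤ/Pℤ` with tile `u`:
`Σ_{h ∈ ℤ/Pℤ} u(g-h)·v(h) = m` for every `g` (the residues `0,…,P-1` enumerate `ℤ/Pℤ`,
so we sum over `Finset.range P`). -/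
def IsMultitiling (P : ℕ) (u v : ZMod P → ℤ) (m : ℤ) : Prop :=
  ∀ g : ZMod P, ∑ a ∈ Finset.range P, u (g - (a : ZMod P)) * v ((a : ZMod P)) = m

/-- The tile `u_{l_1,...,l_k;b,c;P}(h) = (b+c-2k)·δ_M(h) + Σ_i (δ_{M+l_i}(h) + δ_{M-l_i}(h))`
on `ℤ/Pℤ`, where `M = max(l_1,...,l_k)`. -/
def tileU (P k : ℕ) (l : Fin k → ℕ) (b c : ℕ) : ZMod P → ℤ :=
  fun h =>
    ((b : ℤ) + (c : ℤ) - 2 * (k : ℤ)) * (if ((Finset.univ.sup l : ℕ) : ZMod P) = h then 1 else 0)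
      + ∑ i : Fin k,
        ((if ((Finset.univ.sup l + l i : ℕ) : ZMod P) = h then 1 else 0)
          + (if ((Finset.univ.sup l - l i : ℕ) : ZMod P) = h then 1 else 0))

/-- The mask polynomial `Q_u(x) = Σ_{a=0}^{P-1} u(a)·x^a` of a tile `u : ℤ/Pℤ → ℤ`. -/
noncomputable def maskPoly (P : ℕ) (u : ZMod P → ℤ) : Polynomial ℤ :=
  ∑ a ∈ Finset.range P, Polynomial.C (u (a : ZMod P)) * Polynomial.X ^ a

lemma sum_range_zmod' {n : ℕ} [NeZero n] {M : Type*} [AddCommMonoid M] (f : ZMod n → M) :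
    ∑ j ∈ Finset.range n, f (j : ZMod n) = ∑ y : ZMod n, f y := by
  refine Finset.sum_nbij' (fun j => (j : ZMod n)) (fun y => y.val) ?_ ?_ ?_ ?_ ?_
  · intro a _; exact Finset.mem_univ _
  · intro y _; exact Finset.mem_range.mpr (ZMod.val_lt y)
  · intro a ha; exact ZMod.val_cast_of_lt (Finset.mem_range.mp ha)
  · intro y _; exact ZMod.natCast_rightInverse y
  · intro a _; rfl


/-- Realize a prescribed count function by a function `Fin k → α`. -/
lemma exists_count_fun {α : Type*} [DecidableEq α] [Fintype α] :
    ∀ (k : ℕ) (ν : α → ℕ), (∑ y, ν y) = k →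
    ∃ r : Fin k → α, ∀ y, (∑ i, if r i = y then 1 else 0) = ν y := by
  intro k
  induction k with
  | zero =>
    intro ν hν
    refine ⟨Fin.elim0, fun y => ?_⟩
    have := (Finset.sum_eq_zero_iff.mp hν) y (Finset.mem_univ y)
    simp [this]
  | succ k ih =>
    intro ν hν
    have hex : ∃ y0, ν y0 ≠ 0 := by
      by_contra h
      push_neg at h
      simp only [h, Finset.sum_const_zero] at hν
      omega
    obtain ⟨y0, hy0⟩ := hex
    have hsum : ∑ y, Function.update ν y0 (ν y0 - 1) y = k := by
      rw [Finset.sum_update_of_mem (Finset.mem_univ y0), Finset.sdiff_singleton_eq_erase]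
      have h2 := Finset.add_sum_erase Finset.univ ν (Finset.mem_univ y0)
      omega
    obtain ⟨r', hr'⟩ := ih _ hsum
    refine ⟨Fin.cons y0 r', fun y => ?_⟩
    rw [Fin.sum_univ_succ]
    simp only [Fin.cons_zero, Fin.cons_succ]
    rw [hr' y]
    by_cases h : y = y0
    · subst h
      simp only [if_pos rfl, Function.update_self]
      simp only [eq_self_iff_true, if_true]
      omega
    · rw [Function.update_of_ne h, if_neg (fun hc => h hc.symm), zero_add]

/-- Bezout over a finset. -/
lemma finset_bezout (t : Finset ℕ) (f : ℕ → ℕ) :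
    ∃ lam : ℕ → ℤ, ∑ p ∈ t, lam p * (f p : ℤ) = ((t.gcd f : ℕ) : ℤ) := by
  classical
  induction t using Finset.induction with
  | empty => exact ⟨0, by simp⟩
  | insert a t ha ih =>
    obtain ⟨lam, hlam⟩ := ih
    rw [Finset.gcd_insert]
    set G := t.gcd f with hG
    refine ⟨fun p => if p = a then Nat.gcdA (f a) G else Nat.gcdB (f a) G * lam p, ?_⟩
    rw [Finset.sum_insert ha]
    beta_reduce
    rw [if_pos rfl]
    have hne : ∀ p ∈ t, ¬ p = a := fun p hp hc => ha (hc ▸ hp)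
    rw [Finset.sum_congr rfl (fun p hp => by rw [if_neg (hne p hp)])]
    have h2 : ∑ p ∈ t, Nat.gcdB (f a) G * lam p * (f p : ℤ)
        = Nat.gcdB (f a) G * (G : ℤ) := by
      rw [← hlam, Finset.mul_sum]
      exact Finset.sum_congr rfl fun p _ => by ring
    rw [h2]
    rw [show gcd (f a) G = Nat.gcd (f a) G from rfl, Nat.gcd_eq_gcd_ab]
    ring

lemma gcd_ordCompl_eq_one {s : ℕ} (hs : 2 ≤ s) :
    s.primeFactors.gcd (fun p => s / p ^ s.factorization p) = 1 := by
  by_contra h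
  set g := s.primeFactors.gcd (fun p => s / p ^ s.factorization p) with hg
  obtain ⟨p0, hp0⟩ := Nat.nonempty_primeFactors.mpr (by omega : 1 < s)
  have hgdvd : g ∣ s / p0 ^ s.factorization p0 := Finset.gcd_dvd hp0
  have hs0 : s ≠ 0 := by omega
  have hgne : g ≠ 0 := by
    intro hz
    rw [hz] at hgdvd
    exact (Nat.ordCompl_pos p0 hs0).ne' (zero_dvd_iff.mp hgdvd)
  obtain ⟨q, hq, hqg⟩ := Nat.exists_prime_and_dvd h
  have hqs : q ∣ s := hqg.trans (hgdvd.trans (Nat.ordCompl_dvd s p0))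
  have hqmem : q ∈ s.primeFactors := Nat.mem_primeFactors.mpr ⟨hq, hqs, hs0⟩
  have hqoc : q ∣ s / q ^ s.factorization q := hqg.trans (Finset.gcd_dvd hqmem)
  exact Nat.not_dvd_ordCompl hq hs0 hqoc

lemma crt_exists (P : ℕ) (hP0 : P ≠ 0)
    (r : ∀ p : P.primeFactors, ZMod ((p : ℕ) ^ P.factorization (p : ℕ))) :
    ∃ x : ZMod P, ∀ p : P.primeFactors,
      ZMod.castHom (Nat.ordProj_dvd P (p : ℕ)) (ZMod ((p : ℕ) ^ P.factorization (p : ℕ))) x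
        = r p := by
  classical
  have hcop : Pairwise (Function.onFun Nat.Coprime
      fun p : P.primeFactors => (p : ℕ) ^ P.factorization (p : ℕ)) := by
    intro p q hpq
    have hp := Nat.prime_of_mem_primeFactors p.2
    have hq := Nat.prime_of_mem_primeFactors q.2
    have hne : (p : ℕ) ≠ (q : ℕ) := fun h' => hpq (Subtype.ext h')
    exact Nat.Coprime.pow _ _ ((Nat.coprime_primes hp hq).mpr hne)
  have hprod : (∏ p : P.primeFactors, (p : ℕ) ^ P.factorization (p : ℕ)) = P := by
    rw [Finset.univ_eq_attach, Finset.prod_attach P.primeFactors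
      (fun p => p ^ P.factorization p)]
    have := Nat.factorization_prod_pow_eq_self hP0
    simpa [Finsupp.prod, Nat.support_factorization] using this
  set e := ZMod.prodEquivPi (fun p : P.primeFactors => (p : ℕ) ^ P.factorization (p : ℕ)) hcop
    with he
  refine ⟨ZMod.castHom (dvd_of_eq hprod.symm) (ZMod P) (e.symm r), fun p => ?_⟩
  have h1 : (ZMod.castHom (Nat.ordProj_dvd P (p : ℕ))
        (ZMod ((p : ℕ) ^ P.factorization (p : ℕ)))).comp
        (ZMod.castHom (dvd_of_eq hprod.symm) (ZMod P))
      = (Pi.evalRingHom (fun q : P.primeFactors => ZMod ((q : ℕ) ^ P.factorization (q : ℕ))) p).comp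
        e.toRingHom := RingHom.ext_zmod _ _
  have h2 := RingHom.congr_fun h1 (e.symm r)
  simp only [RingHom.comp_apply] at h2
  rw [h2]
  show (e.toRingHom (e.symm r)) p = r p
  rw [show e.toRingHom (e.symm r) = r from e.apply_symm_apply r]

lemma delta_conv (P : ℕ) [NeZero P] (g X : ZMod P) (v : ZMod P → ℤ) :
    ∑ a ∈ Finset.range P, (if X = g - (a : ZMod P) then (1 : ℤ) else 0) * v (a : ZMod P)
      = v (g - X) := by
  rw [sum_range_zmod' (fun x => (if X = g - x then (1 : ℤ) else 0) * v x)]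
  have hiff : ∀ x : ZMod P, (X = g - x) ↔ (x = g - X) := by
    intro x
    constructor
    · intro h; rw [h]; ring
    · intro h; rw [h]; ring
  calc ∑ x : ZMod P, (if X = g - x then (1 : ℤ) else 0) * v x
      = ∑ x : ZMod P, (if x = g - X then v x else 0) := by
        refine Finset.sum_congr rfl fun x _ => ?_
        rw [if_congr (hiff x) rfl rfl, ite_mul, one_mul, zero_mul]
    _ = v (g - X) := by
        rw [Finset.sum_ite_eq' Finset.univ (g - X) v]
        simp

lemma margin_odd (n m k u : ℕ) (hn : Odd n) (h1 : 1 < n) (hu : u * n = m)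
    (hle : m ≤ 2 * k + u) :
    ∃ r : Fin k → ZMod n, ∀ z : ZMod n,
      ((m : ℤ) - 2 * k) * (if z = 0 then 1 else 0)
        + ((∑ i, if r i = -z then (1 : ℤ) else 0) + (∑ i, if r i = z then (1 : ℤ) else 0))
        = u := by
  haveI : NeZero n := ⟨by omega⟩
  obtain ⟨t, ht⟩ := hn
  have hm : m = 2 * (u * t) + u := by rw [← hu, ht]; ring
  have hh0 : 2 * ((u + 2 * k - m) / 2) + m = u + 2 * k := by omega
  set h0 := (u + 2 * k - m) / 2 with hdef
  set ν : ZMod n → ℕ := fun y => if y.val = 0 then h0 else if 2 * y.val < n then u else 0 with hν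
  have hcard : ∑ y : ZMod n, ν y = k := by
    rw [← sum_range_zmod' ν]
    have e2 : ∀ j ∈ Finset.range n, ν (j : ZMod n)
        = (if j = 0 then h0 else 0) + (if j ≠ 0 ∧ 2 * j < n then u else 0) := by
      intro j hj
      have hjv : ((j : ZMod n)).val = j := ZMod.val_cast_of_lt (Finset.mem_range.mp hj)
      rw [hν]
      simp only [hjv]
      split_ifs <;> omega
    rw [Finset.sum_congr rfl e2, Finset.sum_add_distrib]
    have c1 : ∑ j ∈ Finset.range n, (if j = 0 then h0 else 0) = h0 := by
      rw [Finset.sum_ite_eq' (Finset.range n) 0 (fun _ => h0)]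
      rw [if_pos (Finset.mem_range.mpr (by omega))]
    have c2 : ∑ j ∈ Finset.range n, (if j ≠ 0 ∧ 2 * j < n then u else 0) = u * t := by
      have hfil : (Finset.range n).filter (fun j => j ≠ 0 ∧ 2 * j < n) = Finset.Ico 1 (t + 1) := by
        ext j
        simp only [Finset.mem_filter, Finset.mem_range, Finset.mem_Ico]
        omega
      rw [← Finset.sum_filter, hfil, Finset.sum_const, Nat.card_Ico,
        Nat.add_sub_cancel, smul_eq_mul, Nat.mul_comm]
    rw [c1, c2]
    omega
  obtain ⟨r, hr⟩ := exists_count_fun k ν hcard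
  refine ⟨r, fun z => ?_⟩
  have hcast : ∀ y : ZMod n, (∑ i, if r i = y then (1 : ℤ) else 0) = ((ν y : ℕ) : ℤ) := by
    intro y
    rw [← hr y]
    push_cast
    rfl
  rw [hcast, hcast]
  by_cases hz : z = 0
  · subst hz
    rw [if_pos rfl]
    have : ν 0 = h0 := by rw [hν]; simp [ZMod.val_zero]
    rw [neg_zero, this]
    push_cast
    omega
  · rw [if_neg hz]
    have hv0 : z.val ≠ 0 := fun h' => hz (ZMod.val_eq_zero z |>.mp h')
    have hvlt : z.val < n := ZMod.val_lt z
    have hneg : (-z).val = n - z.val := by rw [ZMod.neg_val, if_neg hz]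
    have hνz : ν z + ν (-z) = u := by
      rw [hν]
      simp only [hneg]
      split_ifs <;> omega
    push_cast
    omega

lemma margin_even (v m k u : ℕ) (hv : 1 ≤ v) (hu : u * 2 ^ v = m)
    (hle : m ≤ 2 * k + u) (hm2 : 2 ∣ m) :
    ∃ r : Fin k → ZMod (2 ^ (v + 1)), ∀ z : ZMod (2 ^ (v + 1)),
      ((m : ℤ) - 2 * k) * ((if z = 0 then 1 else 0) + (if z = 1 then 1 else 0))
        + (((∑ i, if r i = -z then (1 : ℤ) else 0) + (∑ i, if r i = z then (1 : ℤ) else 0))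
          + ((∑ i, if r i = 1 - z then (1 : ℤ) else 0)
            + (∑ i, if r i = z - 1 then (1 : ℤ) else 0)))
        = u := by
  obtain ⟨v', rfl⟩ : ∃ v', v = v' + 1 := ⟨v - 1, by omega⟩
  set V := 2 ^ v' with hV
  set n := 2 ^ (v' + 1 + 1) with hn
  haveI : NeZero n := ⟨by positivity⟩
  have hnV : n = 4 * V := by rw [hn, hV, pow_succ, pow_succ]; ring
  have h2V : 2 ^ (v' + 1) = 2 * V := by rw [hV, pow_succ]; ring
  have hVpos : 1 ≤ V := Nat.one_le_two_pow
  have hmuV : 2 * (u * V) = m := by rw [← hu, h2V]; ring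
  clear_value V n
  set a := m - 2 * k with hadef
  set a' := 2 * k - m with ha'def
  set b0 := u - a with hb0def
  have hau : a ≤ u := by omega
  set ν : ZMod n → ℕ := fun y =>
      if y.val = 0 then a' / 2
      else if 2 * y.val = n then a / 2
      else if 2 * y.val < n then (if y.val % 2 = 0 then a else b0) else 0 with hν
  have hcard : ∑ y : ZMod n, ν y = k := by
    rw [← sum_range_zmod' ν]
    have e2 : ∀ j ∈ Finset.range n, ν (j : ZMod n)
        = ((if j = 0 then a' / 2 else 0) + (if j = 2 * V then a / 2 else 0))
          + ((if j ≠ 0 ∧ 2 * j < n ∧ j % 2 = 0 then a else 0)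
            + (if 2 * j < n ∧ j % 2 = 1 then b0 else 0)) := by
      intro j hj
      have hjv : ((j : ZMod n)).val = j := ZMod.val_cast_of_lt (Finset.mem_range.mp hj)
      rw [hν]
      simp only [hjv]
      split_ifs <;> omega
    rw [Finset.sum_congr rfl e2, Finset.sum_add_distrib, Finset.sum_add_distrib,
      Finset.sum_add_distrib]
    have c1 : ∑ j ∈ Finset.range n, (if j = 0 then a' / 2 else 0) = a' / 2 := by
      rw [Finset.sum_ite_eq' (Finset.range n) 0 (fun _ => a' / 2)]
      rw [if_pos (Finset.mem_range.mpr (by omega))]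
    have c2 : ∑ j ∈ Finset.range n, (if j = 2 * V then a / 2 else 0) = a / 2 := by
      rw [Finset.sum_ite_eq' (Finset.range n) (2 * V) (fun _ => a / 2)]
      rw [if_pos (Finset.mem_range.mpr (by omega))]
    have c3 : ∑ j ∈ Finset.range n, (if j ≠ 0 ∧ 2 * j < n ∧ j % 2 = 0 then a else 0)
        = a * (V - 1) := by
      have hfil : (Finset.range n).filter (fun j => j ≠ 0 ∧ 2 * j < n ∧ j % 2 = 0)
          = (Finset.Ico 1 V).image (fun i => 2 * i) := by
        ext j
        simp only [Finset.mem_filter, Finset.mem_range, Finset.mem_image, Finset.mem_Ico]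
        constructor
        · rintro ⟨hjn, hj0, hjlt, hje⟩
          exact ⟨j / 2, by omega, by omega⟩
        · rintro ⟨i, hi, rfl⟩
          omega
      rw [← Finset.sum_filter, hfil, Finset.sum_const,
        Finset.card_image_of_injective _ (fun x y h => by omega), Nat.card_Ico, smul_eq_mul,
        Nat.mul_comm]
    have c4 : ∑ j ∈ Finset.range n, (if 2 * j < n ∧ j % 2 = 1 then b0 else 0) = b0 * V := by
      have hfil : (Finset.range n).filter (fun j => 2 * j < n ∧ j % 2 = 1)
          = (Finset.range V).image (fun i => 2 * i + 1) := by
        ext j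
        simp only [Finset.mem_filter, Finset.mem_range, Finset.mem_image]
        constructor
        · rintro ⟨hjn, hjlt, hjo⟩
          exact ⟨j / 2, by omega, by omega⟩
        · rintro ⟨i, hi, rfl⟩
          omega
      rw [← Finset.sum_filter, hfil, Finset.sum_const,
        Finset.card_image_of_injective _ (fun x y h => by omega), Finset.card_range, smul_eq_mul,
        Nat.mul_comm]
    rw [c1, c2, c3, c4]
    have e5 : a * (V - 1) + a * 1 = a * V := by rw [← Nat.mul_add]; congr 1; omega
    have e6 : b0 * V + a * V = u * V := by rw [← Nat.add_mul]; congr 1; omega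
    omega
  obtain ⟨r, hr⟩ := exists_count_fun k ν hcard
  refine ⟨r, fun z => ?_⟩
  have hcast : ∀ y : ZMod n, (∑ i, if r i = y then (1 : ℤ) else 0) = ((ν y : ℕ) : ℤ) := by
    intro y; rw [← hr y]; push_cast; rfl
  rw [hcast, hcast, hcast, hcast]
  have hn2 : 1 < n := by omega
  haveI : Fact (1 < n) := ⟨hn2⟩
  have hB : ∀ y : ZMod n, ((m : ℤ) - 2 * k) * (if y = 0 then 1 else 0)
      + (((ν (-y) : ℕ) : ℤ) + ((ν y : ℕ) : ℤ))
      = if y.val % 2 = 0 then (a : ℤ) else (b0 : ℤ) := by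
    intro y
    by_cases hy : y = 0
    · subst hy
      rw [if_pos rfl, neg_zero]
      have h0 : (0 : ZMod n).val = 0 := ZMod.val_zero
      have hν0 : ν 0 = a' / 2 := by rw [hν]; simp [h0]
      rw [hν0, if_pos (show (0 : ZMod n).val % 2 = 0 by rw [h0])]
      push_cast
      omega
    · rw [if_neg hy]
      have hv0 : y.val ≠ 0 := fun h' => hy (ZMod.val_eq_zero y |>.mp h')
      have hvlt : y.val < n := ZMod.val_lt y
      have hneg : (-y).val = n - y.val := by rw [ZMod.neg_val, if_neg hy]
      by_cases hhalf : 2 * y.val = n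
      · have hyy : -y = y := by
          have h2 : (-y).val = y.val := by rw [hneg]; omega
          exact ZMod.val_injective n h2
        have hνy : ν y = a / 2 := by rw [hν]; simp only [if_neg hv0, if_pos hhalf]
        rw [hyy, hνy, if_pos (show y.val % 2 = 0 by omega)]
        push_cast
        omega
      · have hνsum : ν (-y) + ν y = if y.val % 2 = 0 then a else b0 := by
          rw [hν]
          simp only [hneg]
          split_ifs <;> omega
        rw [mul_zero, zero_add, ← Nat.cast_add, hνsum]
        split_ifs <;> push_cast <;> ring
  have hBz := hB z
  have hBz1 := hB (z - 1)
  rw [neg_sub] at hBz1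
  simp only [sub_eq_zero] at hBz1
  have hval1 : (z - 1).val = (z.val + (n - 1)) % n := by
    have hzrw : z - 1 = z + (-1) := by ring
    have hvm1 : ((-1 : ZMod n)).val = n - 1 := by
      rw [ZMod.neg_val, if_neg (one_ne_zero), ZMod.val_one]
    rw [hzrw, ZMod.val_add, hvm1]
  have hzvlt : z.val < n := ZMod.val_lt z
  have hval2 : (z - 1).val = if z.val = 0 then n - 1 else z.val - 1 := by
    rw [hval1]
    by_cases h0 : z.val = 0
    · rw [if_pos h0, h0, zero_add, Nat.mod_eq_of_lt (by omega)]
    · rw [if_neg h0, show z.val + (n - 1) = n + (z.val - 1) by omega, Nat.add_mod_left,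
        Nat.mod_eq_of_lt (by omega)]
  have hpar1 : ((z - 1).val % 2 = 0) ↔ (z.val % 2 = 1) := by
    rw [hval2]
    split_ifs <;> omega
  have hab : (a : ℤ) + (b0 : ℤ) = u := by push_cast; omega
  by_cases hpz : z.val % 2 = 0
  · rw [if_pos hpz] at hBz
    rw [if_neg (show ¬ ((z - 1).val % 2 = 0) by rw [hpar1]; omega)] at hBz1
    linarith [hBz, hBz1, hab]
  · rw [if_neg hpz] at hBz
    rw [if_pos (show (z - 1).val % 2 = 0 by rw [hpar1]; omega)] at hBz1
    linarith [hBz, hBz1, hab]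

/-- Under the necessary condition, one can take `P = (b+c)/gcd(b,c)` if this number is
odd and `P = 2(b+c)/gcd(b,c)` if it is even: for this `P` there are distances
`l_1,...,l_k` with a `c`-multitiling of `ℤ/Pℤ` with tile `u_{l_1,...,l_k;b,c;P}`. -/
theorem stmt11 (k : ℕ) (hk : 1 ≤ k) (b c : ℕ) (hb : 0 < b) (hc : 0 < c)
    (hcond : ∀ q t : ℕ, q.Prime → 0 < t → q ^ t ∣ (b + c) / Nat.gcd b c →
      b + c ≤ 2 * k + (b + c) / q ^ t)
    (P : ℕ)
    (hP : P = if Odd ((b + c) / Nat.gcd b c) then (b + c) / Nat.gcd b c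
      else 2 * ((b + c) / Nat.gcd b c)) :
    ∃ (l : Fin k → ℕ) (v : ZMod P → ℤ), IsMultitiling P (tileU P k l b c) v (c : ℤ) := by
  classical
  set m : ℕ := b + c with hm
  set d : ℕ := Nat.gcd b c with hd
  set s : ℕ := m / d with hs
  have hd0 : 0 < d := Nat.gcd_pos_of_pos_left c hb
  have hdm : d ∣ m := Nat.dvd_add (Nat.gcd_dvd_left b c) (Nat.gcd_dvd_right b c)
  have hsd : s * d = m := Nat.div_mul_cancel hdm
  have hdb : d ≤ b := Nat.le_of_dvd hb (Nat.gcd_dvd_left b c)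
  have hdc : d ≤ c := Nat.le_of_dvd hc (Nat.gcd_dvd_right b c)
  have hs2 : 2 ≤ s := by
    by_contra hcon
    push_neg at hcon
    interval_cases s <;> omega
  set cp : ℕ := c / d with hcp
  have hcpd : cp * d = c := Nat.div_mul_cancel (Nat.gcd_dvd_right b c)
  have hP2 : (Odd s ∧ P = s) ∨ (¬ Odd s ∧ P = 2 * s) := by
    rw [hP]
    split_ifs with h
    · exact Or.inl ⟨h, rfl⟩
    · exact Or.inr ⟨h, rfl⟩
  have hsP : s ∣ P := by
    rcases hP2 with ⟨_, h⟩ | ⟨_, h⟩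
    · rw [h]
    · rw [h]; exact dvd_mul_left s 2
  have hP1 : 1 < P := by
    rcases hP2 with ⟨_, h⟩ | ⟨_, h⟩ <;> omega
  haveI : NeZero P := ⟨by omega⟩
  have hs0 : s ≠ 0 := by omega
  have hpfeq : P.primeFactors = s.primeFactors := by
    rcases hP2 with ⟨_, h⟩ | ⟨hodd, h⟩
    · rw [h]
    · rw [h, Nat.primeFactors_mul (by norm_num) hs0, Nat.Prime.primeFactors Nat.prime_two]
      apply Finset.union_eq_right.mpr
      intro x hx
      rw [Finset.mem_singleton] at hx
      subst hx
      exact Nat.mem_primeFactors.mpr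
        ⟨Nat.prime_two, (Nat.not_odd_iff_even.mp hodd).two_dvd, hs0⟩
  have hfac_odd : ∀ p : ℕ, p ≠ 2 → P.factorization p = s.factorization p := by
    intro p hp2
    rcases hP2 with ⟨_, h⟩ | ⟨hodd, h⟩
    · rw [h]
    · rw [h, Nat.factorization_mul (by norm_num) hs0]
      simp only [Finsupp.coe_add, Pi.add_apply]
      rw [Nat.Prime.factorization Nat.prime_two, Finsupp.single_apply,
        if_neg (fun h' => hp2 h'.symm), zero_add]
  have hfac_two : ¬ Odd s → P.factorization 2 = s.factorization 2 + 1 := by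
    intro hodd
    rcases hP2 with ⟨ho, _⟩ | ⟨_, h⟩
    · exact absurd ho hodd
    · rw [h, Nat.factorization_mul (by norm_num) hs0]
      simp only [Finsupp.coe_add, Pi.add_apply]
      rw [Nat.Prime.factorization Nat.prime_two, Finsupp.single_apply, if_pos rfl]
      omega
  -- the per-prime-power construction of residues
  have key : ∀ p ∈ P.primeFactors, ∃ r : Fin k → ZMod (p ^ P.factorization p),
      ∀ z : ZMod (p ^ P.factorization p),
        ((m : ℤ) - 2 * k) *
            (∑ y ∈ (if p = 2 then ({0, 1} : Finset (ZMod (p ^ P.factorization p))) else {0}),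
              if z = y then 1 else 0)
          + ∑ y ∈ (if p = 2 then ({0, 1} : Finset (ZMod (p ^ P.factorization p))) else {0}),
              ((∑ i, if r i = y - z then (1 : ℤ) else 0)
                + (∑ i, if r i = z - y then (1 : ℤ) else 0))
          = (d : ℤ) * ((s / p ^ s.factorization p : ℕ) : ℤ) := by
    intro p hp
    have hpprime : p.Prime := Nat.prime_of_mem_primeFactors hp
    have hps : p ∈ s.primeFactors := by rwa [hpfeq] at hp
    have hpdvds : p ∣ s := Nat.dvd_of_mem_primeFactors hps
    have hfs : 1 ≤ s.factorization p :=
      Nat.Prime.factorization_pos_of_dvd hpprime hs0 hpdvds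
    have horddvd : p ^ s.factorization p ∣ s := Nat.ordProj_dvd s p
    have hsm : s ∣ m := ⟨d, hsd.symm⟩
    have hudvd : p ^ s.factorization p ∣ m := horddvd.trans hsm
    have huval : (m / p ^ s.factorization p) * p ^ s.factorization p = m :=
      Nat.div_mul_cancel hudvd
    have hdms : m / p ^ s.factorization p = d * (s / p ^ s.factorization p) := by
      have h1 : m = d * s := by rw [← hsd]; ring
      rw [h1, Nat.mul_div_assoc d horddvd]
    have hle : m ≤ 2 * k + m / p ^ s.factorization p :=
      hcond p (s.factorization p) hpprime hfs horddvd
    by_cases hp2 : p = 2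
    · subst hp2
      have hsodd : ¬ Odd s := by
        intro ho
        rw [Nat.odd_iff] at ho
        omega
      have hPfac : P.factorization 2 = s.factorization 2 + 1 := hfac_two hsodd
      rw [hPfac]
      have hm2 : 2 ∣ m := hpdvds.trans hsm
      obtain ⟨r, hr⟩ := margin_even (s.factorization 2) m k (m / 2 ^ s.factorization 2)
        hfs huval hle hm2
      refine ⟨r, fun z => ?_⟩
      have h0 := hr z
      rw [if_pos rfl]
      have hnontriv : (0 : ZMod (2 ^ (s.factorization 2 + 1))) ≠ 1 := by
        haveI : Fact (1 < 2 ^ (s.factorization 2 + 1)) :=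
          ⟨Nat.one_lt_pow (by omega) (by norm_num)⟩
        exact zero_ne_one
      rw [Finset.sum_insert (by simpa using hnontriv),
        Finset.sum_insert (by simpa using hnontriv),
        Finset.sum_singleton, Finset.sum_singleton]
      rw [zero_sub, sub_zero]
      rw [hdms] at h0
      push_cast at h0 ⊢
      linarith [h0]
    · have hfacP : P.factorization p = s.factorization p := hfac_odd p hp2
      rw [hfacP]
      have hoddn : Odd (p ^ s.factorization p) := Odd.pow (hpprime.odd_of_ne_two hp2)
      have h1n : 1 < p ^ s.factorization p := Nat.one_lt_pow (by omega) hpprime.two_le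
      obtain ⟨r, hr⟩ := margin_odd (p ^ s.factorization p) m k (m / p ^ s.factorization p)
        hoddn h1n huval hle
      refine ⟨r, fun z => ?_⟩
      have h0 := hr z
      rw [if_neg hp2, Finset.sum_singleton, Finset.sum_singleton]
      rw [zero_sub, sub_zero]
      rw [hdms] at h0
      push_cast at h0 ⊢
      linarith [h0]
  choose rfun hrfun using key
  -- CRT-combine into distances
  have hcrt : ∀ i : Fin k, ∃ x : ZMod P, ∀ p : P.primeFactors,
      ZMod.castHom (Nat.ordProj_dvd P (p : ℕ)) (ZMod ((p : ℕ) ^ P.factorization (p : ℕ))) x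
        = rfun (p : ℕ) p.2 i :=
    fun i => crt_exists P (by omega) (fun p => rfun (p : ℕ) p.2 i)
  choose X hX using hcrt
  set l : Fin k → ℕ := fun i => (X i).val with hldef
  have hlcast : ∀ i, ((l i : ℕ) : ZMod P) = X i := fun i => ZMod.natCast_rightInverse (X i)
  -- Bezout coefficients
  obtain ⟨lam, hlam⟩ := finset_bezout s.primeFactors (fun p => s / p ^ s.factorization p)
  rw [gcd_ordCompl_eq_one hs2] at hlam
  -- the dual function w
  set ψ : ℕ → ZMod P → ℤ := fun p x =>
    ∑ y ∈ (if p = 2 then ({0, 1} : Finset (ZMod (p ^ P.factorization p))) else {0}),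
      (if ZMod.castHom (Nat.ordProj_dvd P p) (ZMod (p ^ P.factorization p)) x = y
        then (1 : ℤ) else 0) with hψ
  set w : ZMod P → ℤ := fun x => (cp : ℤ) * ∑ p ∈ P.primeFactors, lam p * ψ p x with hw
  -- per-prime identity for shifts
  have hper : ∀ p ∈ P.primeFactors, ∀ x : ZMod P,
      ((m : ℤ) - 2 * k) * ψ p x + ∑ i : Fin k, (ψ p (x - X i) + ψ p (x + X i))
        = (d : ℤ) * ((s / p ^ s.factorization p : ℕ) : ℤ) := by
    intro p hp x
    have hXp : ∀ i : Fin k,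
        ZMod.castHom (Nat.ordProj_dvd P p) (ZMod (p ^ P.factorization p)) (X i)
          = rfun p hp i := fun i => hX i ⟨p, hp⟩
    set φ := ZMod.castHom (Nat.ordProj_dvd P p) (ZMod (p ^ P.factorization p)) with hφ
    have e1 : ∀ i : Fin k, ψ p (x - X i)
        = ∑ y ∈ (if p = 2 then ({0, 1} : Finset (ZMod (p ^ P.factorization p))) else {0}),
            (if rfun p hp i = φ x - y then (1 : ℤ) else 0) := by
      intro i
      rw [hψ]
      refine Finset.sum_congr rfl fun y _ => ?_
      rw [show φ (x - X i) = φ x - rfun p hp i by rw [map_sub, hXp i]]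
      refine if_congr ?_ rfl rfl
      constructor
      · intro h'; linear_combination -h'
      · intro h'; linear_combination -h'
    have e2 : ∀ i : Fin k, ψ p (x + X i)
        = ∑ y ∈ (if p = 2 then ({0, 1} : Finset (ZMod (p ^ P.factorization p))) else {0}),
            (if rfun p hp i = y - φ x then (1 : ℤ) else 0) := by
      intro i
      rw [hψ]
      refine Finset.sum_congr rfl fun y _ => ?_
      rw [show φ (x + X i) = φ x + rfun p hp i by rw [map_add, hXp i]]
      refine if_congr ?_ rfl rfl
      constructor
      · intro h'; linear_combination h'
      · intro h'; linear_combination h'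
    have e3 : ∑ i : Fin k, (ψ p (x - X i) + ψ p (x + X i))
        = ∑ y ∈ (if p = 2 then ({0, 1} : Finset (ZMod (p ^ P.factorization p))) else {0}),
            ((∑ i, if rfun p hp i = y - φ x then (1 : ℤ) else 0)
              + (∑ i, if rfun p hp i = φ x - y then (1 : ℤ) else 0)) := by
      rw [Finset.sum_add_distrib]
      rw [Finset.sum_congr rfl fun i _ => e1 i, Finset.sum_congr rfl fun i _ => e2 i]
      rw [Finset.sum_comm, Finset.sum_comm (s := Finset.univ)]
      rw [← Finset.sum_add_distrib]
      refine Finset.sum_congr rfl fun y _ => ?_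
      ring
    rw [e3]
    have hkey := hrfun p hp (φ x)
    rw [hψ]
    exact hkey
  -- the core convolution identity
  have hcore : ∀ x : ZMod P,
      ((m : ℤ) - 2 * k) * w x + ∑ i : Fin k, (w (x - X i) + w (x + X i)) = (c : ℤ) := by
    intro x
    have exp1 : ((m : ℤ) - 2 * k) * w x + ∑ i : Fin k, (w (x - X i) + w (x + X i))
        = ∑ p ∈ P.primeFactors, (cp : ℤ) * lam p *
            (((m : ℤ) - 2 * k) * ψ p x + ∑ i : Fin k, (ψ p (x - X i) + ψ p (x + X i))) := by
      rw [hw]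
      simp only [Finset.mul_sum, mul_add]
      have stepA : ∀ i : Fin k,
          (∑ p ∈ P.primeFactors, (cp : ℤ) * (lam p * ψ p (x - X i)))
            + (∑ p ∈ P.primeFactors, (cp : ℤ) * (lam p * ψ p (x + X i)))
          = ∑ p ∈ P.primeFactors,
              ((cp : ℤ) * (lam p * ψ p (x - X i)) + (cp : ℤ) * (lam p * ψ p (x + X i))) :=
        fun i => Finset.sum_add_distrib.symm
      rw [Finset.sum_congr rfl fun i _ => stepA i]
      rw [Finset.sum_comm]
      rw [← Finset.sum_add_distrib]
      refine Finset.sum_congr rfl fun p _ => ?_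
      have stepB : ∀ i : Fin k,
          (cp : ℤ) * (lam p * ψ p (x - X i)) + (cp : ℤ) * (lam p * ψ p (x + X i))
          = (cp : ℤ) * lam p * (ψ p (x - X i) + ψ p (x + X i)) := fun i => by ring
      rw [Finset.sum_congr rfl fun i _ => stepB i]
      rw [Finset.sum_congr rfl fun i (_ : i ∈ Finset.univ) =>
        mul_add ((cp : ℤ) * lam p) (ψ p (x - X i)) (ψ p (x + X i))]
      ring
    rw [exp1]
    rw [Finset.sum_congr rfl fun p hp => by rw [hper p hp x]]
    have exp2 : ∑ p ∈ P.primeFactors, (cp : ℤ) * lam p *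
          ((d : ℤ) * ((s / p ^ s.factorization p : ℕ) : ℤ))
        = (cp : ℤ) * (d : ℤ) *
            ∑ p ∈ P.primeFactors, lam p * ((s / p ^ s.factorization p : ℕ) : ℤ) := by
      rw [Finset.mul_sum]
      refine Finset.sum_congr rfl fun p _ => by ring
    rw [exp2, hpfeq, hlam]
    have : (cp : ℤ) * d = c := by
      rw [← hcpd]; push_cast; ring
    push_cast
    rw [mul_one]
    exact this
  -- final assembly
  refine ⟨l, w, fun g => ?_⟩
  set M : ℕ := Finset.univ.sup l with hM
  have hMl : ∀ i : Fin k, l i ≤ M := fun i => Finset.le_sup (Finset.mem_univ i)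
  have expand : ∀ a ∈ Finset.range P,
      tileU P k l b c (g - (a : ZMod P)) * w (a : ZMod P)
      = ((b : ℤ) + (c : ℤ) - 2 * (k : ℤ)) *
          ((if ((M : ℕ) : ZMod P) = g - (a : ZMod P) then (1 : ℤ) else 0) * w (a : ZMod P))
        + ∑ i : Fin k,
            (((if ((M + l i : ℕ) : ZMod P) = g - (a : ZMod P) then (1 : ℤ) else 0)
                * w (a : ZMod P))
              + ((if ((M - l i : ℕ) : ZMod P) = g - (a : ZMod P) then (1 : ℤ) else 0)
                * w (a : ZMod P))) := by
    intro a _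
    rw [tileU]
    rw [add_mul, Finset.sum_mul, mul_assoc]
    congr 1
    refine Finset.sum_congr rfl fun i _ => ?_
    rw [add_mul]
  rw [Finset.sum_congr rfl expand, Finset.sum_add_distrib, ← Finset.mul_sum]
  rw [delta_conv P g ((M : ℕ) : ZMod P) w]
  rw [Finset.sum_comm]
  have inner : ∀ i : Fin k,
      ∑ a ∈ Finset.range P,
        (((if ((M + l i : ℕ) : ZMod P) = g - (a : ZMod P) then (1 : ℤ) else 0)
            * w (a : ZMod P))
          + ((if ((M - l i : ℕ) : ZMod P) = g - (a : ZMod P) then (1 : ℤ) else 0)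
            * w (a : ZMod P)))
      = w ((g - (M : ZMod P)) - X i) + w ((g - (M : ZMod P)) + X i) := by
    intro i
    rw [Finset.sum_add_distrib]
    rw [delta_conv P g (((M + l i : ℕ)) : ZMod P) w, delta_conv P g (((M - l i : ℕ)) : ZMod P) w]
    have c1 : (((M + l i : ℕ)) : ZMod P) = (M : ZMod P) + X i := by
      push_cast
      rw [hlcast i]
    have c2 : (((M - l i : ℕ)) : ZMod P) = (M : ZMod P) - X i := by
      rw [Nat.cast_sub (hMl i), hlcast i]
    rw [c1, c2]
    congr 1 <;> ring
  rw [Finset.sum_congr rfl fun i _ => inner i]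
  have hfin := hcore (g - (M : ZMod P))
  have hmc : ((m : ℤ) - 2 * k) = ((b : ℤ) + (c : ℤ) - 2 * (k : ℤ)) := by
    rw [hm]; push_cast; ring
  rw [← hmc]
  exact hfin
end

section
/- Let k ≥ 1, let l_1,...,l_k be nonnegative integers with M = max(l_1,...,l_k), let b, c be positive integers, and let P > 1 be an integer. Define A(x) = (b+c-2k)·x^M + Σ_{i=1}^{k} (x^{M+l_i} + x^{M-l_i}) ∈ ℤ[x], and define S̃_P(x) = Π Φ_n(x), where the product is over all n dividing P such that n is a prime power and the cyclotomic polynomial Φ_n(x) divides A(x). Then there exists a c-multitiling of ℤ/Pℤ with tile u_{l_1,...,l_k;b,c;P} if and only if (b+c)/gcd(b,c) divides S̃_P(1). -/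
open Polynomial

open scoped Classical

set_option linter.unusedSectionVars false
set_option maxHeartbeats 1000000

/- ### Auxiliary machinery -/

section Aux

variable {P : ℕ} [NeZero P]

/-- The "fold" algebra map from `ℤ[X]` to the group algebra of `ℤ/Pℤ`, sending `X` to the
generator `δ_1`. -/
noncomputable def zfold (P : ℕ) : Polynomial ℤ →ₐ[ℤ] AddMonoidAlgebra ℤ (ZMod P) :=
  Polynomial.aeval (AddMonoidAlgebra.single (1 : ZMod P) (1 : ℤ))

lemma sum_range_zmod {β : Type*} [AddCommMonoid β] (f : ZMod P → β) :
    ∑ a ∈ Finset.range P, f ((a : ℕ) : ZMod P) = ∑ h : ZMod P, f h := by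
  refine Finset.sum_bij' (fun a _ => ((a : ℕ) : ZMod P)) (fun h _ => h.val)
    (fun a ha => Finset.mem_univ _) (fun h _ => Finset.mem_range.mpr (ZMod.val_lt h))
    (fun a ha => ZMod.val_cast_of_lt (Finset.mem_range.mp ha))
    (fun h _ => ZMod.natCast_rightInverse h) (fun a ha => rfl)

lemma zfold_C_mul_X_pow (r : ℤ) (a : ℕ) :
    zfold P (Polynomial.C r * Polynomial.X ^ a)
      = AddMonoidAlgebra.single ((a : ℕ) : ZMod P) r := by
  simp only [zfold, map_mul, map_pow, Polynomial.aeval_X, Polynomial.aeval_C]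
  rw [Algebra.algebraMap_eq_smul_one, AddMonoidAlgebra.one_def, AddMonoidAlgebra.single_pow,
    AddMonoidAlgebra.smul_single, AddMonoidAlgebra.single_mul_single]
  simp [nsmul_eq_mul]

lemma zfold_X_pow (a : ℕ) :
    zfold P (Polynomial.X ^ a) = AddMonoidAlgebra.single ((a : ℕ) : ZMod P) (1 : ℤ) := by
  simpa using zfold_C_mul_X_pow (P := P) 1 a

lemma zfold_X_pow_sub_one : zfold P (Polynomial.X ^ P - 1) = 0 := by
  rw [map_sub, map_one, zfold_X_pow]
  simp [AddMonoidAlgebra.one_def]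

lemma zfold_sum_apply (w : ℕ → ℤ) (h : ZMod P) :
    (zfold P (∑ a ∈ Finset.range P, Polynomial.C (w a) * Polynomial.X ^ a)).coeff h
      = ∑ a ∈ Finset.range P, (if ((a : ℕ) : ZMod P) = h then w a else 0) := by
  rw [map_sum, AddMonoidAlgebra.coeff_sum, Finsupp.finset_sum_apply]
  exact Finset.sum_congr rfl fun a _ => by rw [zfold_C_mul_X_pow, AddMonoidAlgebra.coeff_single, Finsupp.single_apply]

lemma dvd_of_zfold_eq_zero (q : Polynomial ℤ) (h : zfold P q = 0) :
    (Polynomial.X ^ P - 1 : Polynomial ℤ) ∣ q := by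
  have hP0 : P ≠ 0 := NeZero.ne P
  have hmonic : (Polynomial.X ^ P - 1 : Polynomial ℤ).Monic := by
    simpa using monic_X_pow_sub_C (1 : ℤ) hP0
  set r := q %ₘ (Polynomial.X ^ P - 1) with hrdef
  have hdegP : (Polynomial.X ^ P - 1 : Polynomial ℤ).degree = (P : ℕ) := by
    simpa using degree_X_pow_sub_C (Nat.pos_of_ne_zero hP0) (1 : ℤ)
  have hdeg : r.degree < (P : ℕ) := hdegP ▸ degree_modByMonic_lt q hmonic
  have hq : r + (Polynomial.X ^ P - 1) * (q /ₘ (Polynomial.X ^ P - 1)) = q :=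
    modByMonic_add_div q _
  have hfr : zfold P r = 0 := by
    have := congrArg (zfold P) hq
    rw [map_add, map_mul, zfold_X_pow_sub_one, zero_mul, add_zero, h] at this
    exact this
  have hr0 : r = 0 := by
    by_cases hz : r = 0
    · exact hz
    have hnat : r.natDegree < P := by
      exact (Polynomial.natDegree_lt_iff_degree_lt hz).mpr hdeg
    have hrepr : r = ∑ i ∈ Finset.range P, Polynomial.C (r.coeff i) * Polynomial.X ^ i :=
      (Polynomial.as_sum_range' r P hnat).trans
        (Finset.sum_congr rfl fun i _ => (Polynomial.C_mul_X_pow_eq_monomial).symm)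
    have hcoeff : ∀ a ∈ Finset.range P, r.coeff a = 0 := by
      intro a ha
      have h1 : (zfold P r).coeff ((a : ℕ) : ZMod P) = 0 := by rw [hfr]; rfl
      rw [hrepr, zfold_sum_apply] at h1
      rw [Finset.sum_eq_single a (fun b hb hba => ?_) (fun ha' => absurd ha ha')] at h1
      · simpa using h1
      · have : ¬ ((b : ℕ) : ZMod P) = ((a : ℕ) : ZMod P) := by
          intro hcast
          exact hba (by
            have := congrArg ZMod.val hcast
            rwa [ZMod.val_cast_of_lt (Finset.mem_range.mp hb),
              ZMod.val_cast_of_lt (Finset.mem_range.mp ha)] at this)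
        simp [this]
    apply Polynomial.ext
    intro n
    by_cases hn : n < P
    · simpa using hcoeff n (Finset.mem_range.mpr hn)
    · exact Polynomial.coeff_eq_zero_of_degree_lt
        (lt_of_lt_of_le hdeg (by exact_mod_cast Nat.le_of_not_lt hn))
  rw [hr0, zero_add] at hq
  exact ⟨q /ₘ (Polynomial.X ^ P - 1), hq.symm⟩

lemma amg_mul_apply (U V : AddMonoidAlgebra ℤ (ZMod P)) (g : ZMod P) :
    (U * V).coeff g = ∑ h : ZMod P, U.coeff (g - h) * V.coeff h := by
  have hinj : Function.Injective (fun h : ZMod P => ((g - h, h) : ZMod P × ZMod P)) :=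
    fun x y hxy => congrArg Prod.snd hxy
  rw [AddMonoidAlgebra.coeff_mul_antidiag U V g
    (Finset.univ.map ⟨fun h : ZMod P => (g - h, h), hinj⟩) ?_, Finset.sum_map]
  · rfl
  · intro p
    constructor
    · intro hmem
      obtain ⟨h, _, rfl⟩ := Finset.mem_map.mp hmem
      simp
    · intro hp
      exact Finset.mem_map.mpr ⟨p.2, Finset.mem_univ _, by
        rw [Function.Embedding.coeFn_mk, ← eq_sub_of_add_eq hp]⟩

lemma zfold_polyA_apply (k : ℕ) (l : Fin k → ℕ) (b c : ℕ) (h : ZMod P) :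
    (zfold P (polyA k l b c)).coeff h = tileU P k l b c h := by
  rw [polyA, map_add, map_sum]
  simp only [map_add, zfold_C_mul_X_pow, zfold_X_pow]
  rw [AddMonoidAlgebra.coeff_add, Finsupp.add_apply, AddMonoidAlgebra.coeff_sum, Finsupp.finset_sum_apply, tileU]
  simp only [AddMonoidAlgebra.coeff_add, AddMonoidAlgebra.coeff_single, Finsupp.coe_add, Pi.add_apply, Finsupp.single_apply, mul_ite, mul_one, mul_zero]

lemma zfold_geom_apply (m : ℤ) (g : ZMod P) :
    (zfold P (Polynomial.C m * ∑ i ∈ Finset.range P, Polynomial.X ^ i)).coeff g = m := by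
  rw [Finset.mul_sum, map_sum, AddMonoidAlgebra.coeff_sum, Finsupp.finset_sum_apply]
  simp only [zfold_C_mul_X_pow, AddMonoidAlgebra.coeff_single, Finsupp.single_apply]
  rw [sum_range_zmod (f := fun x => if x = g then m else 0)]
  simp

lemma cyclo_prime {n : ℕ} (hn : 0 < n) : Prime (Polynomial.cyclotomic n ℤ) :=
  UniqueFactorizationMonoid.irreducible_iff_prime.mp (Polynomial.cyclotomic.irreducible hn)

lemma prod_cyclo_dvd (F : Finset ℕ) (q : Polynomial ℤ) (hpos : ∀ n ∈ F, 0 < n)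
    (h : ∀ n ∈ F, Polynomial.cyclotomic n ℤ ∣ q) :
    (∏ n ∈ F, Polynomial.cyclotomic n ℤ) ∣ q := by
  induction F using Finset.induction generalizing q with
  | empty => simpa using one_dvd q
  | @insert a s hans ih =>
    obtain ⟨q', rfl⟩ := h a (Finset.mem_insert_self a s)
    rw [Finset.prod_insert hans]
    refine mul_dvd_mul_left _ (ih q' (fun n hn => hpos n (Finset.mem_insert_of_mem hn)) ?_)
    intro n hn
    have hprime : Prime (Polynomial.cyclotomic n ℤ) :=
      cyclo_prime (hpos n (Finset.mem_insert_of_mem hn))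
    have hdvd := h n (Finset.mem_insert_of_mem hn)
    rcases hprime.2.2 _ _ hdvd with h1 | h2
    · exfalso
      have hassoc := (Polynomial.cyclotomic.irreducible
          (hpos n (Finset.mem_insert_of_mem hn))).associated_of_dvd
          (Polynomial.cyclotomic.irreducible (hpos a (Finset.mem_insert_self a s))) h1
      have heq := Polynomial.eq_of_monic_of_associated
        (Polynomial.cyclotomic.monic n ℤ) (Polynomial.cyclotomic.monic a ℤ) hassoc
      exact hans ((Polynomial.cyclotomic_injective heq) ▸ hn)
    · exact h2

lemma S1_mul_E1 (P : ℕ) (hP : 0 < P) (A : Polynomial ℤ) :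
    (cycloProdPP P A).eval 1 *
      (∏ n ∈ (Nat.divisors P).filter
          (fun n => IsPrimePow n ∧ ¬ Polynomial.cyclotomic n ℤ ∣ A),
        Polynomial.cyclotomic n ℤ).eval 1 = (P : ℤ) := by
  have h1 : ∏ n ∈ (Nat.divisors P).erase 1, Polynomial.cyclotomic n ℤ
      = ∑ i ∈ Finset.range P, Polynomial.X ^ i := Polynomial.prod_cyclotomic_eq_geom_sum hP ℤ
  have hPval : ∏ n ∈ (Nat.divisors P).erase 1, (Polynomial.cyclotomic n ℤ).eval 1 = (P : ℤ) := by
    have := congrArg (Polynomial.eval (1 : ℤ)) h1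
    rw [Polynomial.eval_prod] at this
    simpa using this
  have h2 : ((Nat.divisors P).erase 1).filter IsPrimePow
      = (Nat.divisors P).filter IsPrimePow := by
    ext n
    simp only [Finset.mem_filter, Finset.mem_erase]
    constructor
    · rintro ⟨⟨_, hd⟩, hpp⟩; exact ⟨hd, hpp⟩
    · rintro ⟨hd, hpp⟩; exact ⟨⟨hpp.one_lt.ne', hd⟩, hpp⟩
  have hnp : ∏ n ∈ ((Nat.divisors P).erase 1).filter (fun n => ¬ IsPrimePow n),
      (Polynomial.cyclotomic n ℤ).eval 1 = 1 := by
    apply Finset.prod_eq_one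
    intro n hn
    obtain ⟨hn1, hnpp⟩ := Finset.mem_filter.mp hn
    apply Polynomial.eval_one_cyclotomic_not_prime_pow
    intro p hp j hj
    rcases Nat.eq_zero_or_pos j with rfl | hj0
    · exact (Finset.mem_erase.mp hn1).1 (by simpa using hj.symm)
    · exact hnpp ⟨p, j, hp.prime, hj0, hj⟩
  have hsplit1 := Finset.prod_filter_mul_prod_filter_not ((Nat.divisors P).erase 1)
    IsPrimePow (fun n => (Polynomial.cyclotomic n ℤ).eval 1)
  have hsplit2 := Finset.prod_filter_mul_prod_filter_not ((Nat.divisors P).filter IsPrimePow)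
    (fun n => Polynomial.cyclotomic n ℤ ∣ A) (fun n => (Polynomial.cyclotomic n ℤ).eval 1)
  have hf1 : ((Nat.divisors P).filter IsPrimePow).filter
      (fun n => Polynomial.cyclotomic n ℤ ∣ A)
      = (Nat.divisors P).filter (fun n => IsPrimePow n ∧ Polynomial.cyclotomic n ℤ ∣ A) := by
    rw [Finset.filter_filter]
  have hf2 : ((Nat.divisors P).filter IsPrimePow).filter
      (fun n => ¬ Polynomial.cyclotomic n ℤ ∣ A)
      = (Nat.divisors P).filter (fun n => IsPrimePow n ∧ ¬ Polynomial.cyclotomic n ℤ ∣ A) := by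
    rw [Finset.filter_filter]
  calc (cycloProdPP P A).eval 1 *
      (∏ n ∈ (Nat.divisors P).filter
          (fun n => IsPrimePow n ∧ ¬ Polynomial.cyclotomic n ℤ ∣ A),
        Polynomial.cyclotomic n ℤ).eval 1
      = (∏ n ∈ ((Nat.divisors P).filter IsPrimePow).filter
            (fun n => Polynomial.cyclotomic n ℤ ∣ A), (Polynomial.cyclotomic n ℤ).eval 1)
        * ∏ n ∈ ((Nat.divisors P).filter IsPrimePow).filter
            (fun n => ¬ Polynomial.cyclotomic n ℤ ∣ A), (Polynomial.cyclotomic n ℤ).eval 1 := by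
        rw [cycloProdPP, Polynomial.eval_prod, Polynomial.eval_prod, hf1, hf2]
    _ = ∏ n ∈ (Nat.divisors P).filter IsPrimePow, (Polynomial.cyclotomic n ℤ).eval 1 := hsplit2
    _ = ∏ n ∈ ((Nat.divisors P).erase 1).filter IsPrimePow,
          (Polynomial.cyclotomic n ℤ).eval 1 := by rw [h2]
    _ = (∏ n ∈ ((Nat.divisors P).erase 1).filter IsPrimePow,
          (Polynomial.cyclotomic n ℤ).eval 1)
        * ∏ n ∈ ((Nat.divisors P).erase 1).filter (fun n => ¬ IsPrimePow n),
            (Polynomial.cyclotomic n ℤ).eval 1 := by rw [hnp, mul_one]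
    _ = ∏ n ∈ (Nat.divisors P).erase 1, (Polynomial.cyclotomic n ℤ).eval 1 := hsplit1
    _ = (P : ℤ) := hPval

lemma arith_equiv (b c : ℕ) (hb : 0 < b) (hc : 0 < c) (S1 : ℤ) :
    (((b + c) / Nat.gcd b c : ℕ) : ℤ) ∣ S1 ↔ ((b : ℤ) + c) ∣ (c : ℤ) * S1 := by
  set g := Nat.gcd b c with hg
  have hg0 : 0 < g := Nat.gcd_pos_of_pos_left c hb
  have hgbc : g ∣ b + c := Nat.dvd_add (Nat.gcd_dvd_left b c) (Nat.gcd_dvd_right b c)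
  have hm : (g : ℤ) * ((b + c) / g : ℕ) = (b : ℤ) + c := by
    rw [← Nat.cast_mul, Nat.mul_div_cancel' hgbc]; push_cast; ring
  have hcg : (g : ℤ) * (c / g : ℕ) = (c : ℤ) := by
    rw [← Nat.cast_mul, Nat.mul_div_cancel' (Nat.gcd_dvd_right b c)]
  have hcop : Nat.Coprime ((b + c) / g) (c / g) := by
    have hgadd : Nat.gcd (b + c) c = g := by rw [hg, Nat.gcd_add_self_left]
    have := Nat.coprime_div_gcd_div_gcd (m := b + c) (n := c) (hgadd ▸ hg0)
    rwa [hgadd] at this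
  constructor
  · rintro ⟨s, hs⟩
    refine ⟨(c / g : ℕ) * s, ?_⟩
    rw [hs, ← hm, ← hcg]; ring
  · rintro ⟨t, ht⟩
    have hgz : (g : ℤ) ≠ 0 := by exact_mod_cast hg0.ne'
    have h1 : ((c / g : ℕ) : ℤ) * S1 = ((b + c) / g : ℕ) * t := by
      apply mul_left_cancel₀ hgz
      rw [← mul_assoc, ← mul_assoc, hcg, hm]; exact ht
    have hiscop : IsCoprime (((b + c) / g : ℕ) : ℤ) ((c / g : ℕ) : ℤ) :=
      Nat.isCoprime_iff_coprime.mpr hcop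
    exact hiscop.dvd_of_dvd_mul_left ⟨t, h1⟩

lemma polyA_eval_one (k : ℕ) (l : Fin k → ℕ) (b c : ℕ) :
    (polyA k l b c).eval 1 = (b : ℤ) + c := by
  rw [polyA]
  simp [Polynomial.eval_finset_sum, Finset.sum_const, Finset.card_univ]
  ring

end Aux

/-- There is a `c`-multitiling of `ℤ/Pℤ` with tile `u_{l_1,...,l_k;b,c;P}` if and only if
`(b+c)/gcd(b,c)` divides `S̃_P(1)`. -/
theorem stmt12 (k : ℕ) (hk : 1 ≤ k) (l : Fin k → ℕ) (b c : ℕ) (hb : 0 < b) (hc : 0 < c)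
    (P : ℕ) (hP : 1 < P) :
    (∃ v : ZMod P → ℤ, IsMultitiling P (tileU P k l b c) v (c : ℤ)) ↔
      (((b + c) / Nat.gcd b c : ℕ) : ℤ) ∣ (cycloProdPP P (polyA k l b c)).eval 1 := by
  haveI : NeZero P := ⟨by omega⟩
  set A := polyA k l b c with hA
  set St := cycloProdPP P A with hSt
  set S1 := St.eval 1 with hS1
  set Tp : Polynomial ℤ := ∑ i ∈ Finset.range P, Polynomial.X ^ i with hTp
  have hTgeom : Tp * (Polynomial.X - 1) = Polynomial.X ^ P - 1 := geom_sum_mul _ P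
  set Fc := (Nat.divisors P).filter
      (fun n => IsPrimePow n ∧ ¬ Polynomial.cyclotomic n ℤ ∣ A) with hFc
  have hE : S1 * (∏ n ∈ Fc, Polynomial.cyclotomic n ℤ).eval 1 = (P : ℤ) :=
    S1_mul_E1 P (by omega) A
  set E1 := (∏ n ∈ Fc, Polynomial.cyclotomic n ℤ).eval 1 with hE1
  have hPne : (P : ℤ) ≠ 0 := by exact_mod_cast (by omega : P ≠ 0)
  have hS1ne : S1 ≠ 0 := fun h0 => hPne (by rw [← hE, h0, zero_mul])
  have hE1ne : E1 ≠ 0 := fun h0 => hPne (by rw [← hE, h0, mul_zero])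
  have hA1 : A.eval 1 = (b : ℤ) + c := polyA_eval_one k l b c
  have hU : ∀ h : ZMod P, (zfold P A).coeff h = tileU P k l b c h := zfold_polyA_apply k l b c
  constructor
  · rintro ⟨v, hv⟩
    set Vp : Polynomial ℤ :=
      ∑ a ∈ Finset.range P, Polynomial.C (v ((a : ℕ) : ZMod P)) * Polynomial.X ^ a with hVp
    have hVf : ∀ h : ZMod P, (zfold P Vp).coeff h = v h := by
      intro h
      rw [hVp, zfold_sum_apply,
        sum_range_zmod (f := fun x => if x = h then v x else 0)]
      simp
    have hconv : ∀ g : ZMod P, (zfold P A * zfold P Vp).coeff g = (c : ℤ) := by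
      intro g
      rw [amg_mul_apply]
      calc ∑ h : ZMod P, (zfold P A).coeff (g - h) * (zfold P Vp).coeff h
          = ∑ h : ZMod P, tileU P k l b c (g - h) * v h :=
            Finset.sum_congr rfl fun h _ => by rw [hU, hVf]
        _ = ∑ a ∈ Finset.range P, tileU P k l b c (g - (a : ZMod P)) * v ((a : ZMod P)) :=
            (sum_range_zmod (f := fun h => tileU P k l b c (g - h) * v h)).symm
        _ = (c : ℤ) := hv g
    have hker : zfold P (A * Vp - Polynomial.C (c : ℤ) * Tp) = 0 := by
      refine AddMonoidAlgebra.ext (Finsupp.ext fun g => ?_)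
      rw [map_sub, map_mul, AddMonoidAlgebra.coeff_sub, Finsupp.sub_apply, hconv g, hTp, zfold_geom_apply]
      simp
    obtain ⟨W, hW⟩ := dvd_of_zfold_eq_zero _ hker
    have hAV : A * Vp = Polynomial.C (c : ℤ) * Tp + (Polynomial.X ^ P - 1) * W := by
      linear_combination hW
    have hdvdVp : ∀ n ∈ Fc, Polynomial.cyclotomic n ℤ ∣ Vp := by
      intro n hn
      obtain ⟨hnmem, hnpp, hnnd⟩ :
          n ∈ Nat.divisors P ∧ IsPrimePow n ∧ ¬ Polynomial.cyclotomic n ℤ ∣ A := by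
        have := Finset.mem_filter.mp hn
        exact ⟨this.1, this.2.1, this.2.2⟩
      have hn1 : 1 < n := hnpp.one_lt
      have hprime := cyclo_prime (by omega : 0 < n)
      have hdT : Polynomial.cyclotomic n ℤ ∣ Tp := by
        rw [hTp, ← Polynomial.prod_cyclotomic_eq_geom_sum (by omega) ℤ]
        exact Finset.dvd_prod_of_mem _ (Finset.mem_erase.mpr ⟨by omega, hnmem⟩)
      have hdX : Polynomial.cyclotomic n ℤ ∣ Polynomial.X ^ P - 1 := by
        rw [← hTgeom]; exact hdT.mul_right _
      have hdAV : Polynomial.cyclotomic n ℤ ∣ A * Vp := by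
        rw [hAV]; exact dvd_add (hdT.mul_left _) (hdX.mul_right _)
      rcases hprime.2.2 _ _ hdAV with h1 | h2
      · exact absurd h1 hnnd
      · exact h2
    have hEdvd : (∏ n ∈ Fc, Polynomial.cyclotomic n ℤ) ∣ Vp :=
      prod_cyclo_dvd Fc Vp
        (fun n hn => Nat.pos_of_mem_divisors (Finset.mem_filter.mp hn).1) hdvdVp
    obtain ⟨t0, ht0⟩ := hEdvd
    have heval := congrArg (Polynomial.eval (1 : ℤ)) hAV
    have hTp1 : Polynomial.eval (1 : ℤ) Tp = (P : ℤ) := by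
      rw [hTp]; simp [Polynomial.eval_finset_sum]
    rw [Polynomial.eval_mul, Polynomial.eval_add, Polynomial.eval_mul, Polynomial.eval_mul,
      Polynomial.eval_C, Polynomial.eval_sub, Polynomial.eval_pow, Polynomial.eval_X,
      Polynomial.eval_one, one_pow, sub_self, zero_mul, add_zero, hA1, hTp1, ht0,
      Polynomial.eval_mul] at heval
    have hkey : ((b : ℤ) + c) * t0.eval 1 = (c : ℤ) * S1 := by
      apply mul_right_cancel₀ hE1ne
      calc ((b : ℤ) + c) * t0.eval 1 * E1
          = ((b : ℤ) + c) * (E1 * t0.eval 1) := by ring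
        _ = (c : ℤ) * (P : ℤ) := heval
        _ = (c : ℤ) * S1 * E1 := by rw [← hE]; ring
    exact (arith_equiv b c hb hc S1).mpr ⟨t0.eval 1, hkey.symm⟩
  · intro hdvd
    obtain ⟨t, ht⟩ := (arith_equiv b c hb hc S1).mp hdvd
    set F := (Nat.divisors P).filter
        (fun n => IsPrimePow n ∧ Polynomial.cyclotomic n ℤ ∣ A) with hF
    have hcyc : St = ∏ n ∈ F, Polynomial.cyclotomic n ℤ := rfl
    have hFsub : F ⊆ (Nat.divisors P).erase 1 := by
      intro n hn
      have h' := Finset.mem_filter.mp hn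
      exact Finset.mem_erase.mpr ⟨h'.2.1.one_lt.ne', h'.1⟩
    have hSA : St ∣ A := by
      rw [hcyc]
      exact prod_cyclo_dvd F A
        (fun n hn => Nat.pos_of_mem_divisors (Finset.mem_filter.mp hn).1)
        (fun n hn => (Finset.mem_filter.mp hn).2.2)
    obtain ⟨B, hB⟩ := hSA
    set G0 := ∏ n ∈ (Nat.divisors P).erase 1 \ F, Polynomial.cyclotomic n ℤ with hG0
    have hTfact : G0 * St = Tp := by
      rw [hG0, hcyc, hTp, ← Polynomial.prod_cyclotomic_eq_geom_sum (by omega : 0 < P) ℤ]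
      exact Finset.prod_sdiff hFsub
    have hB1 : S1 * B.eval 1 = (b : ℤ) + c := by
      have h' := congrArg (Polynomial.eval (1 : ℤ)) hB
      rw [Polynomial.eval_mul, hA1] at h'
      exact h'.symm
    have hBt : B.eval 1 * t = (c : ℤ) := by
      apply mul_left_cancel₀ hS1ne
      calc S1 * (B.eval 1 * t) = (S1 * B.eval 1) * t := by ring
        _ = ((b : ℤ) + c) * t := by rw [hB1]
        _ = (c : ℤ) * S1 := ht.symm
        _ = S1 * c := by ring
    have hroot : (Polynomial.X - Polynomial.C (1 : ℤ)) ∣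
        (B * Polynomial.C t - Polynomial.C (c : ℤ)) :=
      Polynomial.dvd_iff_isRoot.mpr (by simp [Polynomial.IsRoot, hBt])
    obtain ⟨W, hW⟩ := hroot
    have hexpand : A * (Polynomial.C t * G0) - Polynomial.C (c : ℤ) * Tp
        = (St * G0) * (B * Polynomial.C t - Polynomial.C (c : ℤ)) := by
      rw [hB, ← hTfact]; ring
    have h2 : (St * G0) * ((Polynomial.X - Polynomial.C (1 : ℤ)) * W)
        = (Polynomial.X ^ P - 1) * W := by
      rw [Polynomial.C_1, ← hTgeom, ← hTfact]; ring
    have hkey : A * (Polynomial.C t * G0)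
        = Polynomial.C (c : ℤ) * Tp + (Polynomial.X ^ P - 1) * W := by
      calc A * (Polynomial.C t * G0)
          = (A * (Polynomial.C t * G0) - Polynomial.C (c : ℤ) * Tp)
            + Polynomial.C (c : ℤ) * Tp := by ring
        _ = (St * G0) * ((Polynomial.X - Polynomial.C (1 : ℤ)) * W)
            + Polynomial.C (c : ℤ) * Tp := by rw [hexpand, hW]
        _ = Polynomial.C (c : ℤ) * Tp + (Polynomial.X ^ P - 1) * W := by rw [h2]; ring
    have hfold := congrArg (zfold P) hkey
    rw [map_add] at hfold
    rw [show zfold P ((Polynomial.X ^ P - 1) * W) = 0 from by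
        rw [map_mul, zfold_X_pow_sub_one, zero_mul],
      add_zero, map_mul] at hfold
    refine ⟨fun h => (zfold P (Polynomial.C t * G0)).coeff h, ?_⟩
    intro g
    calc ∑ a ∈ Finset.range P,
          tileU P k l b c (g - (a : ZMod P)) * (zfold P (Polynomial.C t * G0)).coeff ((a : ZMod P))
        = ∑ h : ZMod P, tileU P k l b c (g - h) * (zfold P (Polynomial.C t * G0)).coeff h :=
          sum_range_zmod (f := fun h => tileU P k l b c (g - h) * (zfold P (Polynomial.C t * G0)).coeff h)
      _ = ∑ h : ZMod P, (zfold P A).coeff (g - h) * (zfold P (Polynomial.C t * G0)).coeff h :=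
          Finset.sum_congr rfl fun h _ => by rw [hU]
      _ = (zfold P A * zfold P (Polynomial.C t * G0)).coeff g := (amg_mul_apply _ _ g).symm
      _ = (zfold P (Polynomial.C (c : ℤ) * Tp)).coeff g := by rw [hfold]
      _ = (c : ℤ) := by rw [hTp]; exact zfold_geom_apply _ g
end

section
/- Let k ≥ 1, let l_1,...,l_k be nonnegative integers with M = max(l_1,...,l_k), let b, c be positive integers, let q be a prime and t a positive integer, and set P = q^t. Define A(x) = (b+c-2k)·x^M + Σ_{i=1}^{k} (x^{M+l_i} + x^{M-l_i}) ∈ ℤ[x], and define S̃_P(x) = Π Φ_n(x), where the product is over all n dividing P such that n is a prime power and the cyclotomic polynomial Φ_n(x) divides A(x). If (b+c)/gcd(b,c) divides S̃_P(1), then there exists a c-tiling of ℤ/Pℤ with tile u_{l_1,...,l_k;b,c;P}, that is, a c-multitiling v with v(h) ∈ {0,1} for every h ∈ ℤ/Pℤ. -/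
open Polynomial

open scoped Classical

section Stmt13Machinery
open Finset
namespace Stmt13Aux

def digit (q s j : ℕ) : ℕ := j / q^(s-1) % q

def enc (q : ℕ) (V : Finset ℕ) (f : ℕ → ℕ) : ℕ := ∑ s ∈ V, f s * q^(s-1)

lemma digit_lt {q : ℕ} (hq : 2 ≤ q) (s j : ℕ) : digit q s j < q :=
  Nat.mod_lt _ (by omega)

lemma geom_bound {q : ℕ} (hq : 2 ≤ q) (n : ℕ) :
    ∑ s ∈ Finset.Icc 1 n, (q-1) * q^(s-1) = q^n - 1 := by
  induction n with
  | zero => simp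
  | succ n ih =>
      rw [show Finset.Icc 1 (n+1) = insert (n+1) (Finset.Icc 1 n) by
        ext x; simp [Finset.mem_Icc]; omega]
      rw [Finset.sum_insert (by simp)]
      rw [ih]
      have h1 : 1 ≤ q^n := Nat.one_le_pow _ _ (by omega)
      have h3 : q^(n+1) = q * q^n := by ring
      simp only [Nat.add_sub_cancel]
      have h4 : (q-1) * q^n + q^n = q * q^n := by
        have : q - 1 + 1 = q := by omega
        calc (q-1) * q^n + q^n = ((q-1)+1) * q^n := by ring
          _ = q * q^n := by rw [this]
      omega

lemma enc_lt {q t : ℕ} (hq : 2 ≤ q) {V : Finset ℕ} (hV : V ⊆ Finset.Icc 1 t)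
    {f : ℕ → ℕ} (hf : ∀ s ∈ V, f s < q) : enc q V f < q^t := by
  have h0 : enc q V f ≤ ∑ s ∈ V, (q-1) * q^(s-1) := by
    apply Finset.sum_le_sum
    intro s hs
    exact Nat.mul_le_mul_right _ (by have := hf s hs; omega)
  have h1 : ∑ s ∈ V, (q-1) * q^(s-1) ≤ ∑ s ∈ Finset.Icc 1 t, (q-1) * q^(s-1) :=
    Finset.sum_le_sum_of_subset hV
  rw [geom_bound hq t] at h1
  have : 1 ≤ q^t := Nat.one_le_pow _ _ (by omega)
  omega

/-- digit extraction from an encoding -/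
lemma digit_enc {q : ℕ} (hq : 2 ≤ q) {V : Finset ℕ} (hV1 : ∀ s ∈ V, 1 ≤ s)
    {f : ℕ → ℕ} (hf : ∀ s ∈ V, f s < q) (s0 : ℕ) (hs0 : 1 ≤ s0) :
    digit q s0 (enc q V f) = if s0 ∈ V then f s0 else 0 := by
  classical
  set A := ∑ s ∈ V.filter (· < s0), f s * q^(s-1) with hA
  set u := if s0 ∈ V then f s0 else 0 with hu
  set m := ∑ s ∈ V.filter (s0 < ·), f s * q^(s-1-s0) with hm
  have hsplit : enc q V f = A + (u * q^(s0-1) + q^s0 * m) := by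
    have e1 : enc q V f = A + ∑ s ∈ V.filter (¬ · < s0), f s * q^(s-1) :=
      (Finset.sum_filter_add_sum_filter_not V (· < s0) _).symm
    have e2 : ∑ s ∈ V.filter (¬ · < s0), f s * q^(s-1)
        = (∑ s ∈ (V.filter (¬ · < s0)).filter (· = s0), f s * q^(s-1))
          + ∑ s ∈ (V.filter (¬ · < s0)).filter (¬ · = s0), f s * q^(s-1) :=
      (Finset.sum_filter_add_sum_filter_not _ (· = s0) _).symm
    have e3 : (V.filter (¬ · < s0)).filter (· = s0) = if s0 ∈ V then {s0} else ∅ := by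
      split_ifs with h
      · ext x
        simp only [Finset.mem_filter, Finset.mem_singleton]
        constructor
        · rintro ⟨_, rfl⟩; rfl
        · rintro rfl; exact ⟨⟨h, by omega⟩, rfl⟩
      · ext x
        simp only [Finset.mem_filter, Finset.notMem_empty, iff_false, not_and]
        rintro ⟨hxV, _⟩ rfl; exact h hxV
    have e4 : (V.filter (¬ · < s0)).filter (¬ · = s0) = V.filter (s0 < ·) := by
      ext x
      simp only [Finset.mem_filter]
      constructor
      · rintro ⟨⟨hxV, h1⟩, h2⟩; exact ⟨hxV, by omega⟩
      · rintro ⟨hxV, h1⟩; exact ⟨⟨hxV, by omega⟩, by omega⟩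
    have e5 : ∑ s ∈ (if s0 ∈ V then ({s0} : Finset ℕ) else ∅), f s * q^(s-1) = u * q^(s0-1) := by
      by_cases h : s0 ∈ V <;> simp [h, hu]
    have e6 : ∑ s ∈ V.filter (s0 < ·), f s * q^(s-1) = q^s0 * m := by
      rw [hm, Finset.mul_sum]
      apply Finset.sum_congr rfl
      intro s hs
      simp only [Finset.mem_filter] at hs
      have hpow : q^s0 * q^(s-1-s0) = q^(s-1) := by
        rw [← pow_add]; congr 1; omega
      calc f s * q^(s-1) = f s * (q^s0 * q^(s-1-s0)) := by rw [hpow]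
        _ = q^s0 * (f s * q^(s-1-s0)) := by ring
    rw [e1, e2, e3, e4, e5, e6]
  have hAlt : A < q^(s0-1) := by
    apply enc_lt (t := s0 - 1) hq (V := V.filter (· < s0)) (f := f)
    · intro s hs
      simp only [Finset.mem_filter] at hs
      rw [Finset.mem_Icc]
      exact ⟨hV1 s hs.1, by omega⟩
    · intro s hs; exact hf s (Finset.mem_filter.mp hs).1
  have hult : u < q := by
    by_cases h : s0 ∈ V <;> simp only [hu, h, if_true, if_false]
    · exact hf s0 h
    · omega
  have key : enc q V f = A + (u + q * m) * q^(s0-1) := by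
    rw [hsplit]
    have : q^s0 = q * q^(s0-1) := by
      conv_lhs => rw [show s0 = 1 + (s0 - 1) by omega]
      rw [pow_add, pow_one]
    rw [this]; ring
  rw [key]
  unfold digit
  have hpow : 0 < q^(s0-1) := Nat.pow_pos (by omega)
  rw [Nat.add_mul_div_right _ _ hpow, Nat.div_eq_of_lt hAlt, zero_add,
    Nat.add_mul_mod_self_left]
  exact Nat.mod_eq_of_lt hult

/-- completeness of digit expansion -/
lemma enc_digits {q : ℕ} (hq : 2 ≤ q) (t : ℕ) {j : ℕ} (hj : j < q^t) :
    enc q (Finset.Icc 1 t) (fun s => digit q s j) = j := by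
  induction t generalizing j with
  | zero => simp at hj; simp [hj, enc]
  | succ t ih =>
      have hqt : 0 < q^t := Nat.pow_pos (by omega)
      have hmlt : j % q^t < q^t := Nat.mod_lt _ hqt
      have hdlt : j / q^t < q := by
        rw [Nat.div_lt_iff_lt_mul hqt]
        calc j < q^(t+1) := hj
          _ = q * q^t := by ring
      have hdig_low : ∀ s, 1 ≤ s → s ≤ t → digit q s j = digit q s (j % q^t) := by
        intro s h1 h2
        unfold digit
        conv_lhs => rw [← Nat.mod_add_div j (q^t)]
        have hdvd : q^(s-1) ∣ q^t := pow_dvd_pow q (by omega)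
        obtain ⟨w, hw⟩ := hdvd
        have hw0 : 0 < q^(s-1) := Nat.pow_pos (by omega)
        rw [hw, show j % (q^(s-1) * w) + q^(s-1) * w * (j / (q^(s-1) * w))
            = j % (q^(s-1) * w) + q^(s-1) * (w * (j / (q^(s-1) * w))) by ring,
          Nat.add_mul_div_left _ _ hw0]
        have hqdvd : q ∣ w := by
          have hd : q^s ∣ q^t := pow_dvd_pow q h2
          rw [hw] at hd
          have hss : q^s = q^(s-1) * q := by
            rw [← pow_succ]; congr 1; omega
          rw [hss] at hd
          exact (mul_dvd_mul_iff_left (a := q^(s-1)) (by positivity)).mp hd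
        obtain ⟨w', rfl⟩ := hqdvd
        rw [show j % (q^(s-1) * (q*w')) / q^(s-1) + q * w' * (j / (q^(s-1) * (q*w')))
            = j % (q^(s-1) * (q*w')) / q^(s-1) + q * (w' * (j / (q^(s-1) * (q*w')))) by ring,
          Nat.add_mul_mod_self_left]
      have hdig_top : digit q (t+1) j = j / q^t := by
        unfold digit
        simp only [Nat.add_sub_cancel]
        exact Nat.mod_eq_of_lt hdlt
      have hins : Finset.Icc 1 (t+1) = insert (t+1) (Finset.Icc 1 t) := by
        ext x; simp only [Finset.mem_Icc, Finset.mem_insert]; omega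
      rw [show enc q (Finset.Icc 1 (t+1)) (fun s => digit q s j)
          = ∑ s ∈ Finset.Icc 1 (t+1), digit q s j * q^(s-1) from rfl, hins,
        Finset.sum_insert (by simp)]
      have : ∑ s ∈ Finset.Icc 1 t, digit q s j * q^(s-1)
          = ∑ s ∈ Finset.Icc 1 t, digit q s (j % q^t) * q^(s-1) := by
        apply Finset.sum_congr rfl
        intro s hs
        rw [Finset.mem_Icc] at hs
        rw [hdig_low s hs.1 hs.2]
      rw [this, show (∑ s ∈ Finset.Icc 1 t, digit q s (j % q^t) * q^(s-1))
          = enc q (Finset.Icc 1 t) (fun s => digit q s (j % q^t)) from rfl, ih hmlt,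
        hdig_top, Nat.add_sub_cancel]
      exact Nat.div_add_mod' j (q^t)


noncomputable def suppF (q t : ℕ) (U : Finset ℕ) : Finset ℕ :=
  (Finset.range (q^t)).filter (fun j => ∀ s ∈ Finset.Icc 1 t, s ∉ U → digit q s j = 0)

noncomputable def proj (q : ℕ) (U : Finset ℕ) (j : ℕ) : ℕ := enc q U (fun s => digit q s j)

lemma mem_suppF {q t : ℕ} {U : Finset ℕ} {j : ℕ} :
    j ∈ suppF q t U ↔ j < q^t ∧ ∀ s ∈ Finset.Icc 1 t, s ∉ U → digit q s j = 0 := by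
  simp [suppF]

/-- an element of `suppF U` equals the encoding of its `U`-digits -/
lemma enc_digits_suppF {q t : ℕ} (hq : 2 ≤ q) {U : Finset ℕ} (hU : U ⊆ Finset.Icc 1 t)
    {j : ℕ} (hj : j ∈ suppF q t U) : enc q U (fun s => digit q s j) = j := by
  rw [mem_suppF] at hj
  obtain ⟨hlt, hzero⟩ := hj
  have h1 : enc q (Finset.Icc 1 t) (fun s => digit q s j) = j := enc_digits hq t hlt
  have hU' : (Finset.Icc 1 t).filter (· ∈ U) = U := by
    ext x
    simp only [Finset.mem_filter]
    exact ⟨fun h => h.2, fun h => ⟨hU h, h⟩⟩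
  have hsplit : enc q (Finset.Icc 1 t) (fun s => digit q s j)
      = enc q U (fun s => digit q s j)
        + ∑ s ∈ (Finset.Icc 1 t).filter (¬ · ∈ U), digit q s j * q^(s-1) := by
    rw [show enc q (Finset.Icc 1 t) (fun s => digit q s j)
        = ∑ s ∈ Finset.Icc 1 t, digit q s j * q^(s-1) from rfl,
      ← Finset.sum_filter_add_sum_filter_not (Finset.Icc 1 t) (· ∈ U), hU']
    rfl
  have hrest : ∑ s ∈ (Finset.Icc 1 t).filter (¬ · ∈ U), digit q s j * q^(s-1) = 0 := by
    apply Finset.sum_eq_zero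
    intro s hs
    simp only [Finset.mem_filter] at hs
    rw [hzero s hs.1 hs.2, zero_mul]
  omega

lemma proj_self {q t : ℕ} (hq : 2 ≤ q) {U : Finset ℕ} (hU : U ⊆ Finset.Icc 1 t)
    {j : ℕ} (hj : j ∈ suppF q t U) : proj q U j = j := enc_digits_suppF hq hU hj

lemma proj_mem_suppF {q t : ℕ} (hq : 2 ≤ q) {U : Finset ℕ} (hU : U ⊆ Finset.Icc 1 t)
    (j : ℕ) : proj q U j ∈ suppF q t U := by
  rw [mem_suppF]
  constructor
  · exact enc_lt hq hU (fun s _ => digit_lt hq s j)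
  · intro s hs hsU
    rw [Finset.mem_Icc] at hs
    unfold proj
    rw [digit_enc hq (fun s hs' => (Finset.mem_Icc.mp (hU hs')).1)
      (fun s _ => digit_lt hq s j) s hs.1]
    simp [hsU]

lemma digit_proj {q t : ℕ} (hq : 2 ≤ q) {U : Finset ℕ} (hU : U ⊆ Finset.Icc 1 t)
    (j s0 : ℕ) (hs0 : 1 ≤ s0) :
    digit q s0 (proj q U j) = if s0 ∈ U then digit q s0 j else 0 := by
  unfold proj
  exact digit_enc hq (fun s hs' => (Finset.mem_Icc.mp (hU hs')).1)
    (fun s _ => digit_lt hq s j) s0 hs0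

/-- digits of a disjoint-support sum -/
lemma digit_add {q t : ℕ} (hq : 2 ≤ q) {U V : Finset ℕ}
    (hU : U ⊆ Finset.Icc 1 t) (hV : V ⊆ Finset.Icc 1 t) (hd : Disjoint U V)
    {a b : ℕ} (ha : a ∈ suppF q t U) (hb : b ∈ suppF q t V) (s0 : ℕ) (hs0 : 1 ≤ s0) :
    digit q s0 (a + b) =
      (if s0 ∈ U then digit q s0 a else 0) + (if s0 ∈ V then digit q s0 b else 0) := by
  classical
  have hab : a + b = enc q (U ∪ V)
      (fun s => if s ∈ U then digit q s a else digit q s b) := by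
    rw [enc, Finset.sum_union hd]
    have h1 : ∑ s ∈ U, (if s ∈ U then digit q s a else digit q s b) * q^(s-1)
        = enc q U (fun s => digit q s a) := by
      apply Finset.sum_congr rfl; intro s hs; rw [if_pos hs]
    have h2 : ∑ s ∈ V, (if s ∈ U then digit q s a else digit q s b) * q^(s-1)
        = enc q V (fun s => digit q s b) := by
      apply Finset.sum_congr rfl; intro s hs
      rw [if_neg (fun h => (Finset.disjoint_left.mp hd) h hs)]
    rw [h1, h2, enc_digits_suppF hq hU ha, enc_digits_suppF hq hV hb]
  rw [hab, digit_enc hq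
    (fun s hs => by
      rcases Finset.mem_union.mp hs with h|h
      · exact (Finset.mem_Icc.mp (hU h)).1
      · exact (Finset.mem_Icc.mp (hV h)).1)
    (fun s _ => by split_ifs <;> exact digit_lt hq s _) s0 hs0]
  by_cases h1 : s0 ∈ U
  · rw [if_pos (Finset.mem_union_left _ h1), if_pos h1, if_pos h1,
      if_neg (fun h => (Finset.disjoint_left.mp hd) h1 h), add_zero]
  · by_cases h2 : s0 ∈ V
    · rw [if_pos (Finset.mem_union_right _ h2), if_neg h1, if_neg h1, if_pos h2, zero_add]
    · rw [if_neg (fun h => by rcases Finset.mem_union.mp h with h|h <;> [exact h1 h; exact h2 h]),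
        if_neg h1, if_neg h2]

lemma add_mem_suppF {q t : ℕ} (hq : 2 ≤ q) {U V : Finset ℕ}
    (hU : U ⊆ Finset.Icc 1 t) (hV : V ⊆ Finset.Icc 1 t) (hd : Disjoint U V)
    {a b : ℕ} (ha : a ∈ suppF q t U) (hb : b ∈ suppF q t V) :
    a + b ∈ suppF q t (U ∪ V) := by
  rw [mem_suppF]
  constructor
  · -- bound
    rw [mem_suppF] at ha hb
    have h1 : a + b < q^t := by
      have hab : a + b = enc q (U ∪ V)
          (fun s => if s ∈ U then digit q s a else digit q s b) := by
        rw [enc, Finset.sum_union hd]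
        have h1 : ∑ s ∈ U, (if s ∈ U then digit q s a else digit q s b) * q^(s-1)
            = enc q U (fun s => digit q s a) := by
          apply Finset.sum_congr rfl; intro s hs; rw [if_pos hs]
        have h2 : ∑ s ∈ V, (if s ∈ U then digit q s a else digit q s b) * q^(s-1)
            = enc q V (fun s => digit q s b) := by
          apply Finset.sum_congr rfl; intro s hs
          rw [if_neg (fun h => (Finset.disjoint_left.mp hd) h hs)]
        rw [h1, h2, enc_digits_suppF hq hU (mem_suppF.mpr ha),
          enc_digits_suppF hq hV (mem_suppF.mpr hb)]
      rw [hab]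
      exact enc_lt hq (Finset.union_subset hU hV)
        (fun s _ => by split_ifs <;> exact digit_lt hq s _)
    exact h1
  · intro s hs hsUV
    rw [Finset.mem_Icc] at hs
    rw [digit_add hq hU hV hd ha hb s hs.1]
    rw [if_neg (fun h => hsUV (Finset.mem_union_left _ h)),
      if_neg (fun h => hsUV (Finset.mem_union_right _ h))]

lemma proj_add_proj {q t : ℕ} (hq : 2 ≤ q) {U V : Finset ℕ}
    (hUV : U ∪ V = Finset.Icc 1 t) (hd : Disjoint U V) {j : ℕ} (hj : j < q^t) :
    proj q U j + proj q V j = j := by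
  have hU : U ⊆ Finset.Icc 1 t := hUV ▸ Finset.subset_union_left
  have hV : V ⊆ Finset.Icc 1 t := hUV ▸ Finset.subset_union_right
  have : proj q U j + proj q V j = enc q (U ∪ V) (fun s => digit q s j) := by
    rw [enc, Finset.sum_union hd]; rfl
  rw [this, hUV]
  exact enc_digits hq t hj

lemma proj_add_of_suppF {q t : ℕ} (hq : 2 ≤ q) {U V W : Finset ℕ}
    (hU : U ⊆ Finset.Icc 1 t) (hV : V ⊆ Finset.Icc 1 t) (hW : W ⊆ Finset.Icc 1 t)
    (hd : Disjoint U V) (hWU : W ⊆ U)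
    {a b : ℕ} (ha : a ∈ suppF q t U) (hb : b ∈ suppF q t V) :
    proj q W (a + b) = proj q W a := by
  unfold proj enc
  apply Finset.sum_congr rfl
  intro s hs
  have hs1 : 1 ≤ s := (Finset.mem_Icc.mp (hW hs)).1
  show digit q s (a + b) * q^(s-1) = digit q s a * q^(s-1)
  rw [digit_add hq hU hV hd ha hb s hs1, if_pos (hWU hs),
    if_neg (fun h => (Finset.disjoint_left.mp hd) (hWU hs) h), add_zero]

/-- cardinality of `suppF` -/
lemma card_suppF {q t : ℕ} (hq : 2 ≤ q) {U : Finset ℕ} (hU : U ⊆ Finset.Icc 1 t) :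
    (suppF q t U).card = q ^ U.card := by
  classical
  have := Finset.card_bij'
    (s := suppF q t U) (t := U.pi (fun _ => Finset.range q))
    (i := fun j _ => fun s _ => digit q s j)
    (j := fun f _ => enc q U (fun s => if h : s ∈ U then f s h else 0))
    (hi := fun j hj => by
      simp only [Finset.mem_pi, Finset.mem_range]
      intro s _; exact digit_lt hq s j)
    (hj := fun f hf => by
      rw [mem_suppF]
      simp only [Finset.mem_pi, Finset.mem_range] at hf
      have hbd : ∀ s ∈ U, (if h : s ∈ U then f s h else 0) < q := by
        intro s hs; rw [dif_pos hs]; exact hf s hs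
      constructor
      · exact enc_lt hq hU hbd
      · intro s hs hsU
        rw [digit_enc hq (fun s' hs' => (Finset.mem_Icc.mp (hU hs')).1) hbd s
          (Finset.mem_Icc.mp hs).1, if_neg hsU])
    (left_inv := fun j hj => by
      simp only
      have : enc q U (fun s => if h : s ∈ U then digit q s j else 0)
          = enc q U (fun s => digit q s j) :=
        Finset.sum_congr rfl (fun s hs => by simp [dif_pos hs])
      rw [this]; exact enc_digits_suppF hq hU hj)
    (right_inv := fun f hf => by
      simp only [Finset.mem_pi, Finset.mem_range] at hf
      funext s hs
      have hbd : ∀ s' ∈ U, (if h : s' ∈ U then f s' h else 0) < q := by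
        intro s' hs'; rw [dif_pos hs']; exact hf s' hs'
      show digit q s (enc q U fun s => if h : s ∈ U then f s h else 0) = f s hs
      rw [digit_enc hq (fun s' hs' => (Finset.mem_Icc.mp (hU hs')).1)
        hbd s (Finset.mem_Icc.mp (hU hs)).1]
      simp [hs])
  rw [this, Finset.card_pi]
  simp


section Theta

variable (P : ℕ)

noncomputable def theta (f : Polynomial ℤ) : ZMod P → ℤ :=
  fun g => ∑ j ∈ f.support, if (j : ZMod P) = g then f.coeff j else 0

lemma theta_eq_superset {f : Polynomial ℤ} {E : Finset ℕ} (hE : f.support ⊆ E) (g : ZMod P) :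
    theta P f g = ∑ j ∈ E, if (j : ZMod P) = g then f.coeff j else 0 := by
  unfold theta
  apply Finset.sum_subset hE
  intro j _ hj
  rw [Polynomial.notMem_support_iff.mp hj]
  simp

lemma theta_add (f h : Polynomial ℤ) (g : ZMod P) :
    theta P (f + h) g = theta P f g + theta P h g := by
  rw [theta_eq_superset P (E := f.support ∪ h.support)
      (Polynomial.support_add) g,
    theta_eq_superset P (E := f.support ∪ h.support) Finset.subset_union_left g,
    theta_eq_superset P (E := f.support ∪ h.support) Finset.subset_union_right g,
    ← Finset.sum_add_distrib]
  apply Finset.sum_congr rfl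
  intro j _
  rw [Polynomial.coeff_add]
  split_ifs <;> ring

lemma theta_zero (g : ZMod P) : theta P 0 g = 0 := by simp [theta]

lemma theta_sum {ι : Type*} (s : Finset ι) (f : ι → Polynomial ℤ) (g : ZMod P) :
    theta P (∑ i ∈ s, f i) g = ∑ i ∈ s, theta P (f i) g := by
  classical
  induction s using Finset.induction with
  | empty => simp [theta_zero]
  | insert x s hx ih =>
      rw [Finset.sum_insert hx, Finset.sum_insert hx, theta_add, ih]

lemma theta_sub (f h : Polynomial ℤ) (g : ZMod P) :
    theta P (f - h) g = theta P f g - theta P h g := by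
  have := theta_add P (f - h) h g
  rw [sub_add_cancel] at this
  omega

lemma theta_C_mul (r : ℤ) (f : Polynomial ℤ) (g : ZMod P) :
    theta P (Polynomial.C r * f) g = r * theta P f g := by
  rw [theta_eq_superset P (E := f.support)
      (by
        intro j hj
        rw [Polynomial.mem_support_iff] at hj ⊢
        rw [Polynomial.coeff_C_mul] at hj
        exact fun h => hj (by rw [h, mul_zero])) g]
  unfold theta
  rw [Finset.mul_sum]
  apply Finset.sum_congr rfl
  intro j _
  rw [Polynomial.coeff_C_mul]
  split_ifs <;> ring

lemma theta_mul_X_pow (f : Polynomial ℤ) (n : ℕ) (g : ZMod P) :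
    theta P (f * Polynomial.X ^ n) g = theta P f (g - (n : ZMod P)) := by
  have hsupp : (f * Polynomial.X ^ n).support ⊆ f.support.image (· + n) := by
    intro m hm
    rw [Polynomial.mem_support_iff, Polynomial.coeff_mul_X_pow'] at hm
    rw [Finset.mem_image]
    by_cases h : n ≤ m
    · refine ⟨m - n, ?_, by omega⟩
      rw [Polynomial.mem_support_iff]
      rw [if_pos h] at hm
      exact hm
    · rw [if_neg h] at hm; exact absurd rfl hm
  rw [theta_eq_superset P hsupp g,
    Finset.sum_image (by intro a _ b _ h; have h' : a + n = b + n := h; omega)]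
  unfold theta
  apply Finset.sum_congr rfl
  intro j _
  rw [Polynomial.coeff_mul_X_pow]
  have : ((j + n : ℕ) : ZMod P) = g ↔ (j : ZMod P) = g - n := by
    push_cast
    constructor
    · intro h; rw [← h]; ring
    · intro h; rw [h]; ring
  split_ifs with h1 h2 h2
  · rfl
  · exact absurd (this.mp h1) h2
  · exact absurd (this.mpr h2) h1
  · rfl

lemma theta_X_pow (n : ℕ) (g : ZMod P) :
    theta P (Polynomial.X ^ n) g = if (n : ZMod P) = g then 1 else 0 := by
  have : (Polynomial.X ^ n : Polynomial ℤ) = 1 * Polynomial.X ^ n := by ring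
  rw [this, theta_mul_X_pow]
  unfold theta
  rw [show (1 : Polynomial ℤ).support = {0} from Polynomial.support_C (by norm_num)]
  simp only [Finset.sum_singleton, Nat.cast_zero, Polynomial.coeff_one_zero]
  have hiff : (0 : ZMod P) = g - n ↔ (n : ZMod P) = g := by
    constructor <;> intro h
    · have : g - n + n = 0 + n := by rw [← h]
      simpa using this.symm
    · rw [← h]; ring
  split_ifs with h1 h2 h2
  · rfl
  · exact absurd (hiff.mp h1) h2
  · exact absurd (hiff.mpr h2) h1
  · rfl

lemma theta_X_pow_sub_one_mul (D : Polynomial ℤ) (hP : 0 < P) (g : ZMod P) :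
    theta P ((Polynomial.X ^ P - 1) * D) g = 0 := by
  have : (Polynomial.X ^ P - 1) * D = D * Polynomial.X ^ P - D := by ring
  rw [this, theta_sub, theta_mul_X_pow]
  rw [ZMod.natCast_self, sub_zero, sub_self]

end Theta


section Wpoly

variable {q t : ℕ} (hq : 2 ≤ q) (Snat : Finset ℕ) (CS : Finset ℕ)

noncomputable def Bset (q t : ℕ) (Snat CS : Finset ℕ) : Finset ℕ :=
  (Finset.range (q^t)).filter (fun j => proj q Snat j ∈ CS)

noncomputable def Wpoly (q t : ℕ) (Snat CS : Finset ℕ) : Polynomial ℤ :=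
  ∑ j ∈ Bset q t Snat CS, Polynomial.X ^ j

lemma coeff_Wpoly (n : ℕ) :
    (Wpoly q t Snat CS).coeff n = if n ∈ Bset q t Snat CS then 1 else 0 := by
  unfold Wpoly
  rw [Polynomial.finset_sum_coeff,
    Finset.sum_congr rfl (fun j _ => Polynomial.coeff_X_pow j n),
    Finset.sum_ite_eq]

lemma support_Wpoly : (Wpoly q t Snat CS).support ⊆ Finset.range (q^t) := by
  intro n hn
  rw [Polynomial.mem_support_iff, coeff_Wpoly] at hn
  split_ifs at hn with h
  · exact Finset.mem_of_mem_filter n h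
  · exact absurd rfl hn

lemma eval_one_Wpoly : (Wpoly q t Snat CS).eval 1 = (Bset q t Snat CS).card := by
  unfold Wpoly
  rw [Polynomial.eval_finset_sum]
  simp

variable (hS : Snat ⊆ Finset.Icc 1 t) (hCS : CS ⊆ suppF q t Snat)

include hq hS hCS in
lemma card_Bset :
    (Bset q t Snat CS).card = CS.card * q ^ (t - Snat.card) := by
  classical
  set TU : Finset ℕ := Finset.Icc 1 t \ Snat with hTU
  have hT : TU ⊆ Finset.Icc 1 t := Finset.sdiff_subset
  have hdisj : Disjoint Snat TU := Finset.disjoint_sdiff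
  have hunion : Snat ∪ TU = Finset.Icc 1 t := Finset.union_sdiff_of_subset hS
  have hcard : (Bset q t Snat CS).card = (CS ×ˢ suppF q t TU).card := by
    apply Finset.card_bij' (i := fun j _ => (proj q Snat j, proj q TU j))
      (j := fun p _ => p.1 + p.2)
    · -- maps into product
      intro j hj
      simp only [Bset, Finset.mem_filter, Finset.mem_range] at hj
      rw [Finset.mem_product]
      exact ⟨hj.2, proj_mem_suppF hq hT j⟩
    · -- maps back into B
      intro p hp
      rw [Finset.mem_product] at hp
      obtain ⟨h1, h2⟩ := hp
      have h1' : p.1 ∈ suppF q t Snat := hCS h1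
      simp only [Bset, Finset.mem_filter, Finset.mem_range]
      constructor
      · have := add_mem_suppF hq hS hT hdisj h1' h2
        rw [hunion] at this
        exact (mem_suppF.mp this).1
      · rw [proj_add_of_suppF hq hS hT hS hdisj (Finset.Subset.refl _) h1' h2,
          proj_self hq hS h1']
        exact h1
    · -- left inverse
      intro j hj
      simp only [Bset, Finset.mem_filter, Finset.mem_range] at hj
      exact proj_add_proj hq hunion hdisj hj.1
    · -- right inverse
      intro p hp
      rw [Finset.mem_product] at hp
      obtain ⟨h1, h2⟩ := hp
      have h1' : p.1 ∈ suppF q t Snat := hCS h1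
      have e1 : proj q Snat (p.1 + p.2) = p.1 := by
        rw [proj_add_of_suppF hq hS hT hS hdisj (Finset.Subset.refl _) h1' h2,
          proj_self hq hS h1']
      have e2 : proj q TU (p.1 + p.2) = p.2 := by
        rw [add_comm]
        rw [proj_add_of_suppF hq hT hS hT (hdisj.symm) (Finset.Subset.refl _) h2 h1',
          proj_self hq hT h2]
      rw [e1, e2]
  rw [hcard, Finset.card_product, card_suppF hq hT]
  congr 1
  rw [hTU, Finset.card_sdiff_of_subset hS, Nat.card_Icc]
  congr 1

include hq hS hCS in
lemma cyclotomic_dvd_Wpoly (hqp : q.Prime) {s0 : ℕ} (hs0 : s0 ∈ Finset.Icc 1 t)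
    (hs0S : s0 ∉ Snat) : Polynomial.cyclotomic (q^s0) ℤ ∣ Wpoly q t Snat CS := by
  classical
  have hs01 : 1 ≤ s0 := (Finset.mem_Icc.mp hs0).1
  set B0 : Finset ℕ := (Bset q t Snat CS).filter (fun j => digit q s0 j = 0) with hB0
  set E : Finset ℕ := (Finset.Icc 1 t).erase s0 with hE
  have hEsub : E ⊆ Finset.Icc 1 t := Finset.erase_subset _ _
  have hs0sub : ({s0} : Finset ℕ) ⊆ Finset.Icc 1 t := by
    intro x hx; rw [Finset.mem_singleton] at hx; subst hx; exact hs0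
  have hdisjE : Disjoint ({s0} : Finset ℕ) E := by
    simp [hE, Finset.disjoint_left]
  have hunionE : ({s0} : Finset ℕ) ∪ E = Finset.Icc 1 t := by
    rw [hE]; ext x
    simp only [Finset.mem_union, Finset.mem_singleton, Finset.mem_erase]
    constructor
    · rintro (rfl|⟨_,hx⟩) <;> [exact hs0; exact hx]
    · intro hx
      by_cases h : x = s0 <;> [left; right] <;> simp [h, hx]
  have hSsubE : Snat ⊆ E := by
    intro x hx
    rw [hE, Finset.mem_erase]
    exact ⟨fun h => hs0S (h ▸ hx), hS hx⟩
  -- membership fact for i * q^(s0-1)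
  have hsing : ∀ i < q, i * q^(s0-1) ∈ suppF q t {s0} ∧
      (∀ s, 1 ≤ s → digit q s (i * q^(s0-1)) = if s = s0 then i else 0) := by
    intro i hi
    have henc : i * q^(s0-1) = enc q {s0} (fun _ => i) := by
      rw [enc, Finset.sum_singleton]
    have hdig : ∀ s, 1 ≤ s → digit q s (i * q^(s0-1)) = if s = s0 then i else 0 := by
      intro s hs
      rw [henc, digit_enc hq (fun s' hs' => by
          rw [Finset.mem_singleton] at hs'; subst hs'; exact hs01)
        (fun s' _ => hi) s hs]
      simp [Finset.mem_singleton]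
    constructor
    · rw [mem_suppF]
      constructor
      · rw [henc]; exact enc_lt hq hs0sub (fun s _ => hi)
      · intro s hs hsnot
        rw [hdig s (Finset.mem_Icc.mp hs).1, if_neg (fun h => hsnot (by simp [h]))]
    · exact hdig
  -- B0 elements are in suppF E
  have hB0supp : ∀ j₀ ∈ B0, j₀ ∈ suppF q t E := by
    intro j₀ hj₀
    rw [hB0, Finset.mem_filter] at hj₀
    obtain ⟨hjB, hdig0⟩ := hj₀
    simp only [Bset, Finset.mem_filter, Finset.mem_range] at hjB
    rw [mem_suppF]
    refine ⟨hjB.1, ?_⟩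
    intro s hs hsE
    have : s = s0 := by
      by_contra h
      exact hsE (Finset.mem_erase.mpr ⟨h, hs⟩)
    subst this
    exact hdig0
  refine ⟨∑ j₀ ∈ B0, Polynomial.X ^ j₀, ?_⟩
  rw [show q^s0 = q^((s0-1)+1) by congr 1; omega,
    Polynomial.cyclotomic_prime_pow_eq_geom_sum hqp,
    Finset.sum_mul_sum]
  have hterm : ∀ i ∈ Finset.range q, ∀ j₀ ∈ B0,
      ((Polynomial.X : Polynomial ℤ)^(q^(s0-1)))^i * Polynomial.X ^ j₀
      = Polynomial.X ^ (i * q^(s0-1) + j₀) := by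
    intro i _ j₀ _
    rw [← pow_mul, ← pow_add, mul_comm (q^(s0-1)) i]
  rw [Finset.sum_congr rfl (fun i hi => Finset.sum_congr rfl (hterm i hi))]
  rw [← Finset.sum_product']
  unfold Wpoly
  apply Finset.sum_nbij' (i := fun j => (digit q s0 j, proj q E j))
    (j := fun p => p.1 * q^(s0-1) + p.2)
  · -- forward membership
    intro j hj
    simp only [Bset, Finset.mem_filter, Finset.mem_range] at hj
    rw [Finset.mem_product]
    constructor
    · exact Finset.mem_range.mpr (digit_lt hq s0 j)
    · rw [hB0, Finset.mem_filter]
      have hmem := proj_mem_suppF hq hEsub (t := t) j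
      constructor
      · simp only [Bset, Finset.mem_filter, Finset.mem_range]
        constructor
        · exact (mem_suppF.mp hmem).1
        · have : proj q Snat (proj q E j) = proj q Snat j := by
            unfold proj enc
            apply Finset.sum_congr rfl
            intro s hs
            have hs1 : 1 ≤ s := (Finset.mem_Icc.mp (hS hs)).1
            show digit q s (proj q E j) * q^(s-1) = digit q s j * q^(s-1)
            rw [digit_proj hq hEsub j s hs1, if_pos (hSsubE hs)]
          rw [this]; exact hj.2
      · rw [digit_proj hq hEsub j s0 hs01, if_neg (by simp [hE])]
  · -- backward membership
    intro p hp
    rw [Finset.mem_product, Finset.mem_range] at hp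
    obtain ⟨hi, hj₀⟩ := hp
    have hsF := (hsing p.1 hi).1
    have hj₀F := hB0supp p.2 hj₀
    simp only [Bset, Finset.mem_filter, Finset.mem_range]
    constructor
    · have := add_mem_suppF hq hs0sub hEsub hdisjE hsF hj₀F
      rw [hunionE] at this
      exact (mem_suppF.mp this).1
    · rw [add_comm, proj_add_of_suppF hq hEsub hs0sub hS hdisjE.symm hSsubE hj₀F hsF]
      rw [hB0, Finset.mem_filter] at hj₀
      have := hj₀.1
      simp only [Bset, Finset.mem_filter, Finset.mem_range] at this
      exact this.2
  · -- left inverse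
    intro j hj
    simp only [Bset, Finset.mem_filter, Finset.mem_range] at hj
    have hsplit : proj q {s0} j + proj q E j = j := proj_add_proj hq hunionE hdisjE hj.1
    have : proj q {s0} j = digit q s0 j * q^(s0-1) := by
      unfold proj enc; rw [Finset.sum_singleton]
    dsimp only
    omega
  · -- right inverse
    intro p hp
    rw [Finset.mem_product, Finset.mem_range] at hp
    obtain ⟨hi, hj₀⟩ := hp
    have hsF := (hsing p.1 hi).1
    have hj₀F := hB0supp p.2 hj₀
    have e1 : digit q s0 (p.1 * q^(s0-1) + p.2) = p.1 := by
      rw [digit_add hq hs0sub hEsub hdisjE hsF hj₀F s0 hs01,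
        if_pos (Finset.mem_singleton_self s0), if_neg (by simp [hE]),
        (hsing p.1 hi).2 s0 hs01, if_pos rfl, add_zero]
    have e2 : proj q E (p.1 * q^(s0-1) + p.2) = p.2 := by
      rw [add_comm, proj_add_of_suppF hq hEsub hs0sub hEsub hdisjE.symm
        (Finset.Subset.refl _) hj₀F hsF, proj_self hq hEsub hj₀F]
    rw [e1, e2]
  · -- terms agree
    intro j hj
    simp only [Bset, Finset.mem_filter, Finset.mem_range] at hj
    have hsplit : proj q {s0} j + proj q E j = j := proj_add_proj hq hunionE hdisjE hj.1
    have : proj q {s0} j = digit q s0 j * q^(s0-1) := by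
      unfold proj enc; rw [Finset.sum_singleton]
    dsimp only
    congr 1
    omega

end Wpoly


end Stmt13Aux

end Stmt13Machinery

open Stmt13Aux in
/-- For `P = q^t` a prime power, if `(b+c)/gcd(b,c)` divides `S̃_P(1)`, then there exists
a `c`-tiling of `ℤ/Pℤ` with tile `u_{l_1,...,l_k;b,c;P}`. -/
theorem stmt13 (k : ℕ) (hk : 1 ≤ k) (l : Fin k → ℕ) (b c : ℕ) (hb : 0 < b) (hc : 0 < c)
    (q t : ℕ) (hq : q.Prime) (ht : 0 < t)
    (hdvd : (((b + c) / Nat.gcd b c : ℕ) : ℤ) ∣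
      (cycloProdPP (q ^ t) (polyA k l b c)).eval 1) :
    ∃ v : ZMod (q ^ t) → ℤ,
      IsMultitiling (q ^ t) (tileU (q ^ t) k l b c) v (c : ℤ) ∧
        ∀ h : ZMod (q ^ t), v h = 0 ∨ v h = 1 := by
  classical
  have hq2 : 2 ≤ q := hq.two_le
  haveI : Fact q.Prime := ⟨hq⟩
  have hP1 : 1 < q ^ t := Nat.one_lt_pow (by omega) (by omega)
  haveI : NeZero (q ^ t) := ⟨by omega⟩
  set A := polyA k l b c with hA
  set Snat := (Finset.Icc 1 t).filter
    (fun s => Polynomial.cyclotomic (q^s) ℤ ∣ A) with hSnat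
  set r := Snat.card with hr
  have hSsub : Snat ⊆ Finset.Icc 1 t := Finset.filter_subset _ _
  have hrt : r ≤ t := by
    rw [hr]
    calc Snat.card ≤ (Finset.Icc 1 t).card := Finset.card_le_card hSsub
      _ = t := by rw [Nat.card_Icc]; omega
  -- the filter set in cycloProdPP is the image of Snat under q ^ ·
  have hFeq : (Nat.divisors (q^t)).filter
      (fun n => IsPrimePow n ∧ Polynomial.cyclotomic n ℤ ∣ A)
      = Snat.image (q ^ ·) := by
    ext n
    simp only [Finset.mem_filter, Finset.mem_image, Nat.mem_divisors, hSnat]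
    constructor
    · rintro ⟨⟨hdvd', hne⟩, hpp, hdvdA⟩
      obtain ⟨i, hit, rfl⟩ := (Nat.dvd_prime_pow hq).mp hdvd'
      have hi1 : 1 ≤ i := by
        rcases Nat.eq_zero_or_pos i with rfl|h
        · rw [pow_zero] at hpp; exact absurd hpp not_isPrimePow_one
        · exact h
      exact ⟨i, ⟨Finset.mem_Icc.mpr ⟨hi1, hit⟩, hdvdA⟩, rfl⟩
    · rintro ⟨s, ⟨hsmem, hdvdA⟩, rfl⟩
      refine ⟨⟨pow_dvd_pow q (Finset.mem_Icc.mp hsmem).2, by positivity⟩,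
        ⟨q, s, hq.prime, by have := (Finset.mem_Icc.mp hsmem).1; omega, rfl⟩, hdvdA⟩
  have heval : (cycloProdPP (q^t) A).eval 1 = (q : ℤ) ^ r := by
    rw [cycloProdPP, hFeq,
      Finset.prod_image (fun a _ b _ h => Nat.pow_right_injective hq2 h),
      Polynomial.eval_prod]
    have hfac : ∀ s ∈ Snat, Polynomial.eval 1 (Polynomial.cyclotomic (q^s) ℤ) = (q:ℤ) := by
      intro s hs
      have hs1 : 1 ≤ s := (Finset.mem_Icc.mp (hSsub hs)).1
      rw [show q^s = q^((s-1)+1) by congr 1; omega]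
      exact Polynomial.eval_one_cyclotomic_prime_pow _
    rw [Finset.prod_congr rfl hfac, Finset.prod_const, hr]
  rw [heval] at hdvd
  have hdvdnat : (b+c)/Nat.gcd b c ∣ q ^ r := by
    rw [show ((q:ℤ))^r = ((q^r : ℕ) : ℤ) by push_cast; ring] at hdvd
    exact_mod_cast hdvd
  obtain ⟨e, her, hqe⟩ := (Nat.dvd_prime_pow hq).mp hdvdnat
  set g0 := Nat.gcd b c with hg0
  have hg0b : g0 ∣ b := Nat.gcd_dvd_left b c
  have hg0c : g0 ∣ c := Nat.gcd_dvd_right b c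
  have hg0pos : 0 < g0 := Nat.gcd_pos_of_pos_left _ hb
  set b' := b / g0 with hb'
  set c' := c / g0 with hc'
  have hbb' : b = g0 * b' := (Nat.mul_div_cancel' hg0b).symm
  have hcc' : c = g0 * c' := (Nat.mul_div_cancel' hg0c).symm
  have hsum : b' + c' = q ^ e := by
    rw [← hqe, hb', hc', hg0]
    rw [Nat.add_div_of_dvd_right hg0b]
  have hb'pos : 0 < b' := by
    rcases Nat.eq_zero_or_pos b' with h|h
    · rw [h, mul_zero] at hbb'; omega
    · exact h
  have hc'pos : 0 < c' := by
    rcases Nat.eq_zero_or_pos c' with h|h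
    · rw [h, mul_zero] at hcc'; omega
    · exact h
  have hbceq : b + c = g0 * q ^ e := by rw [← hsum, Nat.mul_add, ← hbb', ← hcc']
  have hc'le : c' ≤ q ^ e := by omega
  -- choose the subset CS
  obtain ⟨CS, hCSsub, hCScard⟩ := Finset.exists_subset_card_eq
    (s := suppF q t Snat) (n := c' * q^(r-e))
    (by
      rw [card_suppF hq2 hSsub]
      calc c' * q^(r-e) ≤ q^e * q^(r-e) := Nat.mul_le_mul_right _ hc'le
        _ = q^r := by rw [← pow_add]; congr 1; omega)
  set W := Wpoly q t Snat CS with hW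
  set B := Bset q t Snat CS with hB
  have hcardB : B.card = c' * q^(t-e) := by
    rw [hB, card_Bset hq2 Snat CS hSsub hCSsub, hCScard, mul_assoc, ← pow_add]
    congr 2
    omega
  set N : Polynomial ℤ := ∑ j ∈ Finset.range (q^t), Polynomial.X ^ j with hN
  -- evaluation facts
  have hevalA : A.eval 1 = (b:ℤ) + c := by
    rw [hA, polyA]
    simp only [Polynomial.eval_add, Polynomial.eval_mul, Polynomial.eval_pow,
      Polynomial.eval_C, Polynomial.eval_X, one_pow, mul_one,
      Polynomial.eval_finset_sum]
    rw [Finset.sum_const, Finset.card_univ, Fintype.card_fin, nsmul_eq_mul]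
    push_cast
    ring
  have hevalW : W.eval 1 = ((c' * q^(t-e) : ℕ) : ℤ) := by
    rw [hW, eval_one_Wpoly, ← hB, hcardB]
  have hevalN : N.eval 1 = ((q^t : ℕ) : ℤ) := by
    rw [hN, Polynomial.eval_finset_sum]
    simp
  -- divisibility of the key combination by each cyclotomic
  have hdvd_each : ∀ d ∈ Nat.divisors (q^t),
      Polynomial.cyclotomic d ℤ ∣ A * W - Polynomial.C (c:ℤ) * N := by
    intro d hd
    obtain ⟨s, hst, rfl⟩ := (Nat.dvd_prime_pow hq).mp (Nat.dvd_of_mem_divisors hd)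
    rcases Nat.eq_zero_or_pos s with rfl|hs1
    · rw [pow_zero, Polynomial.cyclotomic_one,
        show (Polynomial.X : Polynomial ℤ) - 1 = Polynomial.X - Polynomial.C 1 by rw [map_one],
        Polynomial.dvd_iff_isRoot, Polynomial.IsRoot.def, Polynomial.eval_sub,
        Polynomial.eval_mul, Polynomial.eval_mul, Polynomial.eval_C,
        hevalA, hevalW, hevalN]
      have harith : (b + c) * (c' * q^(t-e)) = c * q^t := by
        rw [hbceq]
        calc g0 * q^e * (c' * q^(t-e)) = (g0 * c') * (q^e * q^(t-e)) := by ring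
          _ = (g0 * c') * q^t := by rw [← pow_add]; congr 2; omega
          _ = c * q^t := by rw [← hcc']
      have : ((b:ℤ) + c) * ((c' * q^(t-e) : ℕ) : ℤ) = (c:ℤ) * ((q^t : ℕ):ℤ) := by
        push_cast
        exact_mod_cast congrArg (fun x : ℕ => (x : ℤ)) harith
      rw [this]
      ring
    · have hΦN : Polynomial.cyclotomic (q^s) ℤ ∣ N := by
        rw [hN, ← Polynomial.prod_cyclotomic_eq_geom_sum (by omega) ℤ]
        apply Finset.dvd_prod_of_mem
        rw [Finset.mem_erase]
        refine ⟨?_, hd⟩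
        have h1lt : 1 < q ^ s := Nat.one_lt_pow (by omega) (by omega)
        omega
      have hΦAW : Polynomial.cyclotomic (q^s) ℤ ∣ A * W := by
        by_cases hcase : Polynomial.cyclotomic (q^s) ℤ ∣ A
        · exact Dvd.dvd.mul_right hcase W
        · have hsmem : s ∈ Finset.Icc 1 t := Finset.mem_Icc.mpr ⟨hs1, hst⟩
          have hsnot : s ∉ Snat := by
            rw [hSnat, Finset.mem_filter]
            exact fun h => hcase h.2
          exact Dvd.dvd.mul_left
            (cyclotomic_dvd_Wpoly hq2 Snat CS hSsub hCSsub hq hsmem hsnot) A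
      exact dvd_sub hΦAW (Dvd.dvd.mul_left hΦN _)
  -- combine over ℚ
  have hmain : ((Polynomial.X : Polynomial ℤ) ^ (q^t) - 1) ∣
      A * W - Polynomial.C (c:ℤ) * N := by
    have hQdvd : ((Polynomial.X : Polynomial ℚ) ^ (q^t) - 1) ∣
        (A * W - Polynomial.C (c:ℤ) * N).map (Int.castRingHom ℚ) := by
      rw [← Polynomial.prod_cyclotomic_eq_X_pow_sub_one (by omega) ℚ]
      apply Finset.prod_dvd_of_coprime
      · intro d1 h1 d2 h2 hne
        exact Polynomial.cyclotomic.isCoprime_rat hne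
      · intro d hd
        rw [← Polynomial.map_cyclotomic_int d ℚ]
        exact Polynomial.map_dvd _ (hdvd_each d hd)
    have hmono : ((Polynomial.X : Polynomial ℤ) ^ (q^t) - 1).Monic := by
      have := Polynomial.monic_X_pow_sub_C (1:ℤ) (n := q^t) (by omega)
      simpa using this
    rw [← Polynomial.map_dvd_map (Int.castRingHom ℚ)
      Int.cast_injective hmono]
    have : ((Polynomial.X : Polynomial ℤ) ^ (q^t) - 1).map (Int.castRingHom ℚ)
        = (Polynomial.X : Polynomial ℚ) ^ (q^t) - 1 := by
      rw [Polynomial.map_sub, Polynomial.map_pow, Polynomial.map_X, Polynomial.map_one]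
    rw [this]
    exact hQdvd
  -- define v, prove 0/1 values
  set P := q ^ t with hPdef
  have hv01 : ∀ h0 : ZMod P, theta P W h0 = (if (ZMod.val h0) ∈ B then 1 else 0) := by
    intro h0
    rw [theta_eq_superset P (E := Finset.range P) (support_Wpoly Snat CS) h0,
      Finset.sum_eq_single (ZMod.val h0)]
    · rw [if_pos (by rw [ZMod.natCast_val, ZMod.cast_id])]
      exact coeff_Wpoly Snat CS (ZMod.val h0)
    · intro j hj hne
      rw [if_neg]
      intro hcast
      apply hne
      have : ((j : ZMod P)).val = j := ZMod.val_cast_of_lt (Finset.mem_range.mp hj)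
      rw [← hcast, this]
    · intro habs
      exact absurd (Finset.mem_range.mpr (ZMod.val_lt h0)) habs
  -- key convolution lemma
  have hKL : ∀ (w : ZMod P → ℤ) (m : ℕ) (gg : ZMod P),
      (∑ a ∈ Finset.range P, (if ((m:ℕ) : ZMod P) = gg - (a : ZMod P) then 1 else 0) * w (a : ZMod P))
        = w (gg - (m : ZMod P)) := by
    intro w m gg
    rw [Finset.sum_eq_single ((gg - (m : ZMod P)).val)]
    · have hcast : (((gg - (m : ZMod P)).val : ℕ) : ZMod P) = gg - (m : ZMod P) := by
        rw [ZMod.natCast_val, ZMod.cast_id]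
      rw [if_pos (by rw [hcast]; ring), hcast, one_mul]
    · intro a ha hne
      rw [if_neg, zero_mul]
      intro hcond
      apply hne
      have h1 : ((a : ℕ) : ZMod P) = gg - (m : ZMod P) := by
        rw [eq_sub_iff_add_eq] at hcond ⊢
        rw [← hcond]
        ring
      have : ((a : ZMod P)).val = a := ZMod.val_cast_of_lt (Finset.mem_range.mp ha)
      rw [← h1, this]
    · intro habs
      exact absurd (Finset.mem_range.mpr (ZMod.val_lt _)) habs
  have hthetaN : ∀ gg : ZMod P, theta P N gg = 1 := by
    intro gg
    rw [hN, theta_sum]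
    rw [Finset.sum_congr rfl (fun j _ => theta_X_pow P j gg)]
    rw [Finset.sum_eq_single (ZMod.val gg)]
    · rw [if_pos (by rw [ZMod.natCast_val, ZMod.cast_id])]
    · intro j hj hne
      rw [if_neg]
      intro hcast
      apply hne
      have : ((j : ZMod P)).val = j := ZMod.val_cast_of_lt (Finset.mem_range.mp hj)
      rw [← hcast, this]
    · intro habs
      exact absurd (Finset.mem_range.mpr (ZMod.val_lt _)) habs
  refine ⟨theta P W, ?_, ?_⟩
  · -- multitiling
    intro gg
    obtain ⟨D, hD⟩ := hmain
    set α : ℤ := (b:ℤ) + (c:ℤ) - 2*(k:ℤ) with hα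
    have hAW : A * W = Polynomial.C α * (W * Polynomial.X ^ (Finset.univ.sup l))
        + ∑ i : Fin k, (W * Polynomial.X ^ (Finset.univ.sup l + l i)
          + W * Polynomial.X ^ (Finset.univ.sup l - l i)) := by
      rw [hA, polyA, add_mul, Finset.sum_mul]
      congr 1
      · ring
      · exact Finset.sum_congr rfl (fun i _ => by ring)
    have h1 : theta P (A * W) gg
        = α * theta P W (gg - ((Finset.univ.sup l : ℕ) : ZMod P))
          + ∑ i : Fin k, (theta P W (gg - ((Finset.univ.sup l + l i : ℕ) : ZMod P))
            + theta P W (gg - ((Finset.univ.sup l - l i : ℕ) : ZMod P))) := by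
      rw [hAW, theta_add, theta_C_mul, theta_mul_X_pow, theta_sum]
      congr 1
      exact Finset.sum_congr rfl
        (fun i _ => by rw [theta_add, theta_mul_X_pow, theta_mul_X_pow])
    have h2 : theta P (A * W) gg = c := by
      have hrw : A * W = Polynomial.C (c:ℤ) * N
          + ((Polynomial.X : Polynomial ℤ) ^ P - 1) * D := by
        rw [← hD]; ring
      rw [hrw, theta_add, theta_C_mul, hthetaN, theta_X_pow_sub_one_mul P D (by omega),
        mul_one, add_zero]
    show ∑ a ∈ Finset.range P, tileU P k l b c (gg - (a : ZMod P)) * theta P W (a : ZMod P) = (c:ℤ)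
    have hexp : ∀ a : ℕ, tileU P k l b c (gg - (a : ZMod P)) * theta P W (a : ZMod P)
        = α * ((if ((Finset.univ.sup l : ℕ) : ZMod P) = gg - (a : ZMod P) then 1 else 0)
            * theta P W (a : ZMod P))
          + ∑ i : Fin k,
            ((if ((Finset.univ.sup l + l i : ℕ) : ZMod P) = gg - (a : ZMod P) then 1 else 0)
              * theta P W (a : ZMod P)
            + (if ((Finset.univ.sup l - l i : ℕ) : ZMod P) = gg - (a : ZMod P) then 1 else 0)
              * theta P W (a : ZMod P)) := by
      intro a
      rw [tileU, add_mul, Finset.sum_mul, mul_assoc]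
      congr 1
      exact Finset.sum_congr rfl (fun i _ => by ring)
    rw [Finset.sum_congr rfl (fun a _ => hexp a), Finset.sum_add_distrib,
      ← Finset.mul_sum, hKL (theta P W) (Finset.univ.sup l) gg, Finset.sum_comm]
    rw [Finset.sum_congr rfl (fun (i : Fin k) _ => by
      rw [Finset.sum_add_distrib, hKL (theta P W) (Finset.univ.sup l + l i) gg,
        hKL (theta P W) (Finset.univ.sup l - l i) gg] :
      ∀ i ∈ Finset.univ, _ = theta P W (gg - ((Finset.univ.sup l + l i : ℕ) : ZMod P))
        + theta P W (gg - ((Finset.univ.sup l - l i : ℕ) : ZMod P)))]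
    rw [← h1, h2]
  · -- 0/1 values
    intro h0
    rw [hv01 h0]
    split_ifs
    · right; rfl
    · left; rfl
end

section
/- Let A ∈ ℤ[x] be a polynomial, M a nonnegative integer, and suppose every coefficient of A is nonnegative except possibly the coefficient at x^M. For a prime q and integers j ≥ 0 and r, write h_{j,r} = Σ a_{r'}, the sum of the coefficients a_{r'} of A over all exponents r' with r' ≡ r (mod q^j). If s is a positive integer with j < s such that the cyclotomic polynomial Φ_{q^s}(x) divides A(x), then h_{j,M} ≥ q·h_{s,M}. -/
open Polynomial

open scoped Classical

/-- `h_{j,r}`: the sum of the coefficients of `A` over all exponents congruent to `r`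
modulo `q^j`. -/
noncomputable def hsum (A : Polynomial ℤ) (q j r : ℕ) : ℤ :=
  ∑ r' ∈ A.support.filter (fun r' => r' % q ^ j = r % q ^ j), A.coeff r'

lemma hsum_eq_sum_ite (A : Polynomial ℤ) (q j r : ℕ) :
    hsum A q j r = ∑ n ∈ A.support, if n % q ^ j = r % q ^ j then A.coeff n else 0 := by
  unfold hsum; rw [Finset.sum_filter]

lemma hsum_congr (A : Polynomial ℤ) (q j : ℕ) {r r' : ℕ} (h : r % q ^ j = r' % q ^ j) :
    hsum A q j r = hsum A q j r' := by
  unfold hsum; rw [h]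

lemma hsum_add (A B : Polynomial ℤ) (q j r : ℕ) :
    hsum (A + B) q j r = hsum A q j r + hsum B q j r := by
  simp only [hsum_eq_sum_ite]
  have hfun : ∀ (P : Polynomial ℤ),
      (∑ n ∈ P.support, if n % q ^ j = r % q ^ j then P.coeff n else 0)
        = P.sum (fun n a => if n % q ^ j = r % q ^ j then a else 0) := fun P => rfl
  rw [hfun, hfun, hfun]
  exact Polynomial.sum_add_index A B _ (fun n => by simp) (fun n a b => by split <;> simp)

lemma hsum_eq_range (A : Polynomial ℤ) (q j r m : ℕ) (hm : ∀ n, m ≤ n → A.coeff n = 0) :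
    hsum A q j r = ∑ n ∈ Finset.range m, if n % q ^ j = r % q ^ j then A.coeff n else 0 := by
  unfold hsum
  rw [← Finset.sum_filter]
  apply Finset.sum_subset
  · apply Finset.filter_subset_filter
    intro n hn
    simp only [Finset.mem_range, Polynomial.mem_support_iff] at hn ⊢
    by_contra hlt
    exact hn (hm n (le_of_not_gt hlt))
  · intro n hn hn'
    simp only [Finset.mem_filter, Finset.mem_range, Polynomial.mem_support_iff] at hn hn'
    by_contra h
    exact hn' ⟨by simpa using h, hn.2⟩

lemma mod_shift (p n r k : ℕ) : (k + n) % p = (r + k) % p ↔ n % p = r % p := by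
  constructor
  · intro h
    have h2 : n + k ≡ r + k [MOD p] := by rwa [Nat.add_comm k n] at h
    exact Nat.ModEq.add_right_cancel' k h2
  · intro h
    have h2 := Nat.ModEq.add_right k (h : Nat.ModEq (p) n r)
    rwa [Nat.add_comm n k] at h2

lemma hsum_mul_X_pow (A : Polynomial ℤ) (q j r k : ℕ) :
    hsum (A * X ^ k) q j (r + k) = hsum A q j r := by
  set m := A.natDegree + 1 with hm
  have hb : ∀ n, k + m ≤ n → (A * X ^ k).coeff n = 0 := by
    intro n hn
    rw [Polynomial.coeff_mul_X_pow']
    split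
    · exact Polynomial.coeff_eq_zero_of_natDegree_lt (by omega)
    · rfl
  rw [hsum_eq_range (A * X ^ k) q j (r + k) (k + m) hb,
      hsum_eq_range A q j r m (fun n hn => Polynomial.coeff_eq_zero_of_natDegree_lt (by omega)),
      Finset.sum_range_add]
  have h1 : ∀ n ∈ Finset.range k,
      (if n % q ^ j = (r + k) % q ^ j then (A * X ^ k).coeff n else 0) = 0 := by
    intro n hn
    have hz : (A * X ^ k).coeff n = 0 := by
      rw [Polynomial.coeff_mul_X_pow', if_neg (by simp at hn; omega)]
    simp [hz]
  rw [Finset.sum_eq_zero h1, zero_add]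
  apply Finset.sum_congr rfl
  intro n _
  have hc : (A * X ^ k).coeff (k + n) = A.coeff n := by
    rw [Polynomial.coeff_mul_X_pow', if_pos (by omega)]
    congr 1
    omega
  rw [hc]
  simp only [mod_shift]

lemma natmod_iff (a b m : ℕ) : a % m = b % m ↔ (a : ℤ) % (m : ℤ) = (b : ℤ) % (m : ℤ) := by
  rw [← Int.natCast_mod a m, ← Int.natCast_mod b m, Int.natCast_inj]

lemma hsumInnerSum {q N : ℕ} (hq : 0 < q) (hN : 0 < N) (n M : ℕ) (c : ℤ) :
    (∑ t ∈ Finset.range q, if n % (N * q) = (M + t * N) % (N * q) then c else 0)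
      = if n % N = M % N then c else 0 := by
  by_cases h : n % N = M % N
  · rw [if_pos h]
    have h' : (n : ℤ) % N = (M : ℤ) % N := (natmod_iff n M N).mp h
    have hInt : (N : ℤ) ∣ (n : ℤ) - (M : ℤ) := (Int.ModEq.symm h').dvd
    obtain ⟨e, he⟩ := hInt
    set t0 : ℕ := (e % q).toNat with ht0
    have hqZ : (0 : ℤ) < q := by exact_mod_cast hq
    have het : (t0 : ℤ) = e % q := Int.toNat_of_nonneg (Int.emod_nonneg e hqZ.ne')
    have ht0q : t0 < q := by
      have := Int.emod_lt_of_pos e hqZ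
      omega
    have hd := Int.mul_ediv_add_emod e q
    have hP : n % (N * q) = (M + t0 * N) % (N * q) := by
      rw [natmod_iff]
      push_cast
      have : ((M : ℤ) + t0 * N) - n = (N * q) * (-(e / q)) := by
        rw [het]
        linear_combination -he + (N : ℤ) * hd
      exact Int.modEq_iff_dvd.mpr ⟨-(e / q), this⟩
    rw [Finset.sum_eq_single_of_mem t0 (Finset.mem_range.mpr ht0q)]
    · rw [if_pos hP]
    · intro b hb hbne
      rw [if_neg]
      intro hPb
      apply hbne
      have h1 : (M + b * N) % (N * q) = (M + t0 * N) % (N * q) := hPb.symm.trans hP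
      rw [natmod_iff] at h1
      push_cast at h1
      have hdvd : ((N : ℤ) * q) ∣ (((M : ℤ) + t0 * N) - ((M : ℤ) + b * N)) :=
        Int.ModEq.dvd h1
      have hdvd2 : (q : ℤ) ∣ ((t0 : ℤ) - b) := by
        have heq : ((M : ℤ) + t0 * N) - ((M : ℤ) + b * N) = ((t0 : ℤ) - b) * N := by ring
        rw [heq] at hdvd
        rcases hdvd with ⟨u, hu⟩
        refine ⟨u, ?_⟩
        have hN' : (N : ℤ) ≠ 0 := by exact_mod_cast hN.ne'
        exact mul_right_cancel₀ hN' (by linear_combination hu)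
      have hbq : b < q := Finset.mem_range.mp hb
      have habs : |(t0 : ℤ) - b| < q := by
        rw [abs_lt]
        constructor <;> omega
      have := Int.eq_zero_of_abs_lt_dvd hdvd2 habs
      omega
  · rw [if_neg h]
    apply Finset.sum_eq_zero
    intro t _
    rw [if_neg]
    intro hPt
    apply h
    have h2 : n ≡ M + t * N [MOD N] := Nat.ModEq.of_dvd ⟨q, rfl⟩ (hPt : n ≡ M + t * N [MOD N * q])
    calc n % N = (M + t * N) % N := h2
      _ = M % N := Nat.add_mul_mod_self_right M t N

/-- If all coefficients of `A` except possibly the one at `x^M` are nonnegative, `j < s`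
with `s > 0`, and `Φ_{q^s} ∣ A`, then `h_{j,M} ≥ q·h_{s,M}`. -/
theorem stmt14 (A : Polynomial ℤ) (M : ℕ) (hA : ∀ n : ℕ, n ≠ M → 0 ≤ A.coeff n)
    (q : ℕ) (hq : q.Prime) (j s : ℕ) (hjs : j < s) (hs : 0 < s)
    (hdvd : Polynomial.cyclotomic (q ^ s) ℤ ∣ A) :
    (q : ℤ) * hsum A q s M ≤ hsum A q j M := by
  have hq0 : 0 < q := hq.pos
  set N := q ^ (s - 1) with hNdef
  have hN0 : 0 < N := pow_pos hq0 _
  have hQ : q ^ s = N * q := by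
    rw [hNdef, ← pow_succ]
    congr 1
    omega
  obtain ⟨B, hB⟩ := hdvd
  have hfac : cyclotomic (q ^ s) ℤ * (X ^ N - 1) = X ^ (q ^ s) - 1 := by
    haveI : Fact q.Prime := ⟨hq⟩
    have h := Polynomial.cyclotomic_prime_pow_mul_X_pow_sub_one ℤ q (s - 1)
    rwa [show s - 1 + 1 = s from by omega] at h
  have key : ∀ r, hsum A q s r = hsum A q s (r + N) := by
    intro r
    have E : A * X ^ N + B = B * X ^ (q ^ s) + A := by
      linear_combination (X ^ N - 1) * hB + B * hfac
    have h1 := congrArg (fun P => hsum P q s (r + N)) E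
    simp only [hsum_add] at h1
    rw [hsum_mul_X_pow A q s r N] at h1
    have h2 : hsum (B * X ^ (q ^ s)) q s (r + N) = hsum B q s (r + N) := by
      rw [← hsum_mul_X_pow B q s (r + N) (q ^ s)]
      exact hsum_congr _ _ _ (Nat.add_mod_right _ _).symm
    rw [h2] at h1
    linarith
  have key2 : ∀ t, hsum A q s (M + t * N) = hsum A q s M := by
    intro t
    induction t with
    | zero => simp
    | succ t ih =>
      have hrw : M + (t + 1) * N = (M + t * N) + N := by ring
      rw [hrw, ← key (M + t * N), ih]
  have step1 : (q : ℤ) * hsum A q s M = ∑ t ∈ Finset.range q, hsum A q s (M + t * N) := by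
    rw [Finset.sum_congr rfl (fun t _ => key2 t), Finset.sum_const, Finset.card_range,
      nsmul_eq_mul]
  rw [step1]
  have step2 : (∑ t ∈ Finset.range q, hsum A q s (M + t * N))
      = ∑ n ∈ A.support, if n % N = M % N then A.coeff n else 0 := by
    rw [Finset.sum_congr rfl (fun t _ => hsum_eq_sum_ite A q s (M + t * N)), Finset.sum_comm]
    refine Finset.sum_congr rfl fun n _ => ?_
    rw [hQ]
    exact hsumInnerSum hq0 hN0 n M (A.coeff n)
  rw [step2, hsum_eq_sum_ite, ← Finset.sum_filter, ← Finset.sum_filter]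
  apply Finset.sum_le_sum_of_subset_of_nonneg
  · apply Finset.monotone_filter_right
    intro n _ hn
    exact Nat.ModEq.of_dvd (pow_dvd_pow q (by omega)) hn
  · intro n hn hn'
    simp only [Finset.mem_filter] at hn hn'
    apply hA
    intro hnM
    exact hn' ⟨hn.1, by rw [hnM]⟩
end

section
/- Let A ∈ ℤ[x] be a polynomial, M a nonnegative integer, and suppose every coefficient of A is nonnegative except possibly the coefficient at x^M. Let q be a prime and suppose there exist t distinct positive integers s_1 < s_2 < ... < s_t such that the cyclotomic polynomial Φ_{q^{s_i}}(x) divides A(x) for each i = 1,...,t. Then A(1) ≥ q^t · (the coefficient of A at x^M). -/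
open Polynomial

open scoped Classical

namespace Stmt15Aux

noncomputable def csum (A : Polynomial ℤ) (D N : ℕ) (r : ℤ) : ℤ :=
  ∑ n ∈ Finset.range D, if (N : ℤ) ∣ ((n : ℤ) - r) then A.coeff n else 0

lemma csum_congr_bound {A : Polynomial ℤ} {D D' : ℕ} (h : A.natDegree < D)
    (h' : A.natDegree < D') (N : ℕ) (r : ℤ) : csum A D N r = csum A D' N r := by
  wlog hDD : D ≤ D' generalizing D D'
  · exact (this h' h (le_of_not_ge hDD)).symm
  unfold csum
  apply Finset.sum_subset (Finset.range_subset_range.2 hDD)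
  intro n hn hn'
  simp only [Finset.mem_range] at hn hn'
  simp [Polynomial.coeff_eq_zero_of_natDegree_lt (show A.natDegree < n by omega)]

lemma csum_eval_one {A : Polynomial ℤ} {D : ℕ} (h : A.natDegree < D) (r : ℤ) :
    csum A D 1 r = A.eval 1 := by
  rw [Polynomial.eval_eq_sum_range' h]
  unfold csum
  simp

lemma coeff_le_csum {A : Polynomial ℤ} {M : ℕ} (hA : ∀ n : ℕ, n ≠ M → 0 ≤ A.coeff n)
    {D : ℕ} (h : A.natDegree < D) (N : ℕ) :
    A.coeff M ≤ csum A D N M := by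
  classical
  have key : ∀ n ∈ Finset.range D, (if n = M then A.coeff M else 0) ≤
      (if (N : ℤ) ∣ ((n : ℤ) - (M : ℤ)) then A.coeff n else 0) := by
    intro n _
    by_cases hn : n = M
    · subst hn; simp
    · have h1 := hA n hn
      by_cases hc : (N : ℤ) ∣ ((n : ℤ) - (M : ℤ)) <;> simp [hn, hc, h1]
  have h2 : ∑ n ∈ Finset.range D, (if n = M then A.coeff M else 0) ≤ csum A D N M :=
    Finset.sum_le_sum key
  rw [Finset.sum_ite_eq' (Finset.range D) M fun _ => A.coeff M] at h2
  by_cases hM : M ∈ Finset.range D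
  · simpa [hM] using h2
  · have h0 : A.coeff M = 0 := by
      apply Polynomial.coeff_eq_zero_of_natDegree_lt
      simp only [Finset.mem_range] at hM; omega
    simp only [hM, if_false] at h2
    omega

lemma csum_anti {A : Polynomial ℤ} {M : ℕ} (hA : ∀ n : ℕ, n ≠ M → 0 ≤ A.coeff n)
    {D d N : ℕ} (hdN : d ∣ N) :
    csum A D N M ≤ csum A D d M := by
  refine Finset.sum_le_sum ?_
  intro n _
  by_cases h1 : (N : ℤ) ∣ ((n : ℤ) - (M : ℤ))
  · have h2 : (d : ℤ) ∣ ((n : ℤ) - (M : ℤ)) := dvd_trans (Int.natCast_dvd_natCast.2 hdN) h1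
    simp [h1, h2]
  · rw [if_neg h1]
    by_cases h2 : (d : ℤ) ∣ ((n : ℤ) - (M : ℤ))
    · rw [if_pos h2]
      by_cases hn : n = M
      · exfalso; apply h1; subst hn; simp
      · exact hA n hn
    · rw [if_neg h2]

lemma csum_partition (A : Polynomial ℤ) (D : ℕ) {m q : ℕ} (hm : 0 < m) (hq : 0 < q) (r : ℤ) :
    csum A D m r = ∑ i ∈ Finset.range q, csum A D (m * q) (r + m * i) := by
  unfold csum
  rw [Finset.sum_comm]
  refine Finset.sum_congr rfl ?_
  intro n _
  have hm' : (m : ℤ) ≠ 0 := by exact_mod_cast hm.ne'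
  have hq' : (0 : ℤ) < (q : ℤ) := by exact_mod_cast hq
  by_cases h : (m : ℤ) ∣ ((n : ℤ) - r)
  · obtain ⟨k, hk⟩ := h
    rw [if_pos ⟨k, hk⟩]
    have hmem : (k % q).toNat ∈ Finset.range q := by
      simp only [Finset.mem_range]
      have h1 : 0 ≤ k % q := Int.emod_nonneg k (by exact_mod_cast hq.ne')
      have h2 : k % q < q := Int.emod_lt_of_pos k hq'
      omega
    rw [Finset.sum_eq_single_of_mem _ hmem]
    · rw [if_pos]
      have h1 : 0 ≤ k % q := Int.emod_nonneg k (by exact_mod_cast hq.ne')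
      have h2 : ((k % q).toNat : ℤ) = k % q := Int.toNat_of_nonneg h1
      have h3 : (q : ℤ) ∣ (k - k % q) := ⟨k / q, by rw [Int.emod_def]; ring⟩
      obtain ⟨c, hc⟩ := h3
      refine ⟨c, ?_⟩
      push_cast
      rw [h2]
      linear_combination hk + (m : ℤ) * hc
    · intro b hb hbne
      rw [if_neg]
      intro hdvd
      apply hbne
      have h1 : 0 ≤ k % q := Int.emod_nonneg k (by exact_mod_cast hq.ne')
      have h2 : k % q < q := Int.emod_lt_of_pos k hq'
      -- hdvd : (m*q : ℤ) ∣ n - (r + m*b)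
      have h3 : (n : ℤ) - (r + m * b) = m * (k - b) := by linear_combination hk
      rw [h3] at hdvd
      have h4 : (q : ℤ) ∣ (k - b) := by
        have : (m : ℤ) * q ∣ m * (k - b) := by push_cast at hdvd ⊢; exact hdvd
        exact (mul_dvd_mul_iff_left hm').1 this
      -- also q ∣ k - k%q
      have h5 : (q : ℤ) ∣ (k - k % q) := ⟨k / q, by rw [Int.emod_def]; ring⟩
      have h6 : (q : ℤ) ∣ ((k % q) - b) := by
        obtain ⟨c, hc⟩ := dvd_sub h4 h5
        exact ⟨c, by linarith⟩
      have hb' : (b : ℤ) < q := by simp only [Finset.mem_range] at hb; exact_mod_cast hb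
      have h7 : (k % q) - b = 0 := by
        apply Int.eq_zero_of_abs_lt_dvd h6
        have hb0 : (0 : ℤ) ≤ b := Int.natCast_nonneg b
        rw [abs_lt]; omega
      omega
  · rw [if_neg h]
    refine (Finset.sum_eq_zero ?_).symm
    intro i _
    rw [if_neg]
    intro hdvd
    apply h
    have h2 : (m : ℤ) ∣ ((n : ℤ) - (r + m * i)) :=
      dvd_trans ⟨(q : ℤ), by push_cast; ring⟩ hdvd
    have h3 : (m : ℤ) ∣ ((m : ℤ) * i) := ⟨i, rfl⟩
    obtain ⟨c, hc⟩ := dvd_add h2 h3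
    exact ⟨c, by linarith⟩


lemma csum_decomp {A B : Polynomial ℤ} {q u : ℕ} (hq : q.Prime)
    (hB : A = Polynomial.cyclotomic (q ^ (u + 1)) ℤ * B) (hA0 : A ≠ 0) (x : ℤ) :
    csum A (A.natDegree + 1) (q ^ (u + 1)) x
      = ∑ i ∈ Finset.range q, csum B (B.natDegree + 1) (q ^ (u + 1)) (x - (q ^ u : ℕ) * i) := by
  classical
  set m := q ^ u with hm
  set N := q ^ (u + 1) with hN
  have hB0 : B ≠ 0 := fun h => hA0 (by rw [hB, h, mul_zero])
  have hcyc0 : Polynomial.cyclotomic N ℤ ≠ 0 := Polynomial.cyclotomic_ne_zero N ℤ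
  have hdegΦ : (Polynomial.cyclotomic N ℤ).natDegree = m * (q - 1) := by
    rw [Polynomial.natDegree_cyclotomic, hN, Nat.totient_prime_pow hq (Nat.succ_pos u)]
    simp [hm]
  have hdegA : A.natDegree = m * (q - 1) + B.natDegree := by
    rw [hB, Polynomial.natDegree_mul hcyc0 hB0, hdegΦ]
  have hcoeff : ∀ n : ℕ, A.coeff n
      = ∑ i ∈ Finset.range q, if m * i ≤ n then B.coeff (n - m * i) else 0 := by
    intro n
    have h1 : A = ∑ i ∈ Finset.range q, B * X ^ (m * i) := by
      rw [hB, Polynomial.cyclotomic_prime_pow_eq_geom_sum hq, Finset.sum_mul]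
      refine Finset.sum_congr rfl fun i _ => ?_
      rw [← pow_mul, mul_comm]
    rw [h1, Polynomial.finset_sum_coeff]
    exact Finset.sum_congr rfl fun i _ => Polynomial.coeff_mul_X_pow' B (m * i) n
  unfold csum
  have hswap : ∑ n ∈ Finset.range (A.natDegree + 1),
        (if (N : ℤ) ∣ ((n : ℤ) - x) then A.coeff n else 0)
      = ∑ i ∈ Finset.range q, ∑ n ∈ Finset.range (A.natDegree + 1),
        (if m * i ≤ n then (if (N : ℤ) ∣ ((n : ℤ) - x) then B.coeff (n - m * i) else 0) else 0) := by
    rw [Finset.sum_comm]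
    refine Finset.sum_congr rfl fun n _ => ?_
    by_cases hc : (N : ℤ) ∣ ((n : ℤ) - x)
    · rw [if_pos hc, hcoeff n]
      refine Finset.sum_congr rfl fun i _ => ?_
      by_cases hle : m * i ≤ n
      · rw [if_pos hle, if_pos hle, if_pos hc]
      · rw [if_neg hle, if_neg hle]
    · rw [if_neg hc]
      refine (Finset.sum_eq_zero fun i _ => ?_).symm
      by_cases hle : m * i ≤ n
      · rw [if_pos hle, if_neg hc]
      · rw [if_neg hle]
  rw [hswap]
  refine Finset.sum_congr rfl fun i hi => ?_
  have hiq : i < q := Finset.mem_range.1 hi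
  have hmi : m * i ≤ m * (q - 1) := Nat.mul_le_mul_left m (by omega)
  have hmiD : m * i ≤ A.natDegree + 1 := by omega
  -- drop the initial segment
  rw [Finset.range_eq_Ico, ← Finset.sum_Ico_consecutive _ (Nat.zero_le (m * i)) hmiD]
  have hzero : ∑ n ∈ Finset.Ico 0 (m * i),
      (if m * i ≤ n then (if (N : ℤ) ∣ ((n : ℤ) - x) then B.coeff (n - m * i) else 0) else 0) = 0 := by
    refine Finset.sum_eq_zero fun n hn => ?_
    rw [Finset.mem_Ico] at hn
    rw [if_neg (by omega)]
  rw [hzero, zero_add, Finset.sum_Ico_eq_sum_range]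
  have hterm : ∀ k : ℕ,
      (if m * i ≤ m * i + k then (if (N : ℤ) ∣ (((m * i + k : ℕ) : ℤ) - x) then B.coeff (m * i + k - m * i) else 0) else 0)
      = (if (N : ℤ) ∣ ((k : ℤ) - (x - (m : ℕ) * i)) then B.coeff k else 0) := by
    intro k
    rw [if_pos (Nat.le_add_right _ _)]
    have h1 : ((m * i + k : ℕ) : ℤ) - x = (k : ℤ) - (x - (m : ℕ) * i) := by push_cast; ring
    have h2 : m * i + k - m * i = k := by omega
    rw [h1, h2]
  simp only [hterm]
  -- now adjust the bound: A.natDegree + 1 - m * i vs B.natDegree + 1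
  have hb1 : B.natDegree < A.natDegree + 1 - m * i := by omega
  have hbig : ∀ D : ℕ, B.natDegree < D →
      ∑ k ∈ Finset.range D, (if (N : ℤ) ∣ ((k : ℤ) - (x - (m : ℕ) * i)) then B.coeff k else 0)
        = csum B (B.natDegree + 1) N (x - (m : ℕ) * i) := by
    intro D hD
    unfold csum
    symm
    apply Finset.sum_subset (Finset.range_subset_range.2 (by omega))
    intro n hn hn'
    simp only [Finset.mem_range] at hn hn'
    simp [Polynomial.coeff_eq_zero_of_natDegree_lt (show B.natDegree < n by omega)]
  rw [hbig _ hb1]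
  unfold csum
  rw [Finset.range_eq_Ico]

lemma csum_periodic {A B : Polynomial ℤ} {q u : ℕ} (hq : q.Prime)
    (hB : A = Polynomial.cyclotomic (q ^ (u + 1)) ℤ * B) (hA0 : A ≠ 0) (r : ℤ) :
    csum A (A.natDegree + 1) (q ^ (u + 1)) (r + (q ^ u : ℕ))
      = csum A (A.natDegree + 1) (q ^ (u + 1)) r := by
  have hW : ∀ x : ℤ, csum B (B.natDegree + 1) (q ^ (u + 1)) (x - (q ^ (u + 1) : ℕ))
      = csum B (B.natDegree + 1) (q ^ (u + 1)) x := by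
    intro x
    unfold csum
    refine Finset.sum_congr rfl fun k _ => ?_
    have : ((k : ℤ) - (x - (q ^ (u + 1) : ℕ))) = ((k : ℤ) - x) + (q ^ (u + 1) : ℕ) := by ring
    rw [this]
    by_cases hc : ((q ^ (u + 1) : ℕ) : ℤ) ∣ ((k : ℤ) - x)
    · rw [if_pos (dvd_add hc (dvd_refl _)), if_pos hc]
    · rw [if_neg (fun hd => hc (by simpa using dvd_sub hd (dvd_refl ((q ^ (u + 1) : ℕ) : ℤ)))),
        if_neg hc]
  rw [csum_decomp hq hB hA0 (r + (q ^ u : ℕ)), csum_decomp hq hB hA0 r]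
  set g : ℕ → ℤ := fun i => csum B (B.natDegree + 1) (q ^ (u + 1)) (r + (q ^ u : ℕ) - (q ^ u : ℕ) * i)
    with hg
  have hL : ∑ i ∈ Finset.range q, csum B (B.natDegree + 1) (q ^ (u + 1))
      (r + (q ^ u : ℕ) - (q ^ u : ℕ) * i) = ∑ i ∈ Finset.range q, g i := rfl
  have hR : ∑ i ∈ Finset.range q, csum B (B.natDegree + 1) (q ^ (u + 1))
      (r - (q ^ u : ℕ) * i) = ∑ i ∈ Finset.range q, g (i + 1) := by
    refine Finset.sum_congr rfl fun i _ => ?_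
    rw [hg]
    congr 1
    push_cast
    ring
  rw [hL, hR]
  have h1 : ∑ i ∈ Finset.range q, g (i + 1) = ∑ i ∈ Finset.range (q + 1), g i - g 0 := by
    rw [Finset.sum_range_succ' g q]; ring
  have h2 : ∑ i ∈ Finset.range (q + 1), g i = ∑ i ∈ Finset.range q, g i + g q :=
    Finset.sum_range_succ g q
  have h3 : g q = g 0 := by
    rw [hg]
    have : r + ((q ^ u : ℕ) : ℤ) - (q ^ u : ℕ) * (q : ℕ)
        = (r + ((q ^ u : ℕ) : ℤ) - (q ^ u : ℕ) * (0 : ℕ)) - ((q ^ (u + 1) : ℕ) : ℤ) := by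
      push_cast
      ring
    simp only [this, hW]
  rw [h1, h2, h3]
  ring

lemma csum_step {A : Polynomial ℤ} {q u : ℕ} (hq : q.Prime)
    (hdvd : Polynomial.cyclotomic (q ^ (u + 1)) ℤ ∣ A) (r : ℤ) :
    csum A (A.natDegree + 1) (q ^ u) r
      = q * csum A (A.natDegree + 1) (q ^ (u + 1)) r := by
  by_cases hA0 : A = 0
  · subst hA0; simp [csum]
  obtain ⟨B, hB⟩ := hdvd
  have hpart := csum_partition A (A.natDegree + 1) (pow_pos hq.pos u) hq.pos r
  have hpow : q ^ u * q = q ^ (u + 1) := (pow_succ q u).symm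
  rw [hpow] at hpart
  have hshift : ∀ i : ℕ, csum A (A.natDegree + 1) (q ^ (u + 1)) (r + (q ^ u : ℕ) * i)
      = csum A (A.natDegree + 1) (q ^ (u + 1)) r := by
    intro i
    induction i with
    | zero => simp
    | succ n ih =>
        have : r + ((q ^ u : ℕ) : ℤ) * ((n + 1 : ℕ) : ℤ)
            = (r + ((q ^ u : ℕ) : ℤ) * (n : ℕ)) + ((q ^ u : ℕ) : ℤ) := by push_cast; ring
        rw [this, csum_periodic hq hB hA0, ih]
  rw [hpart, Finset.sum_congr rfl (fun i _ => hshift i), Finset.sum_const, Finset.card_range,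
    nsmul_eq_mul]


end Stmt15Aux

/-- If all coefficients of `A` except possibly the one at `x^M` are nonnegative and
`Φ_{q^{s_1}},...,Φ_{q^{s_t}}` divide `A` for distinct positive `s_1 < ... < s_t`, then
`A(1) ≥ q^t · (coefficient of A at x^M)`. -/
theorem stmt15 (A : Polynomial ℤ) (M : ℕ) (hA : ∀ n : ℕ, n ≠ M → 0 ≤ A.coeff n)
    (q : ℕ) (hq : q.Prime) (t : ℕ) (s : Fin t → ℕ)
    (hmono : StrictMono s) (hpos : ∀ i, 0 < s i)
    (hdvd : ∀ i, Polynomial.cyclotomic (q ^ s i) ℤ ∣ A) :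
    (q : ℤ) ^ t * A.coeff M ≤ A.eval 1 := by
  classical
  open Stmt15Aux in
  have hDlt : A.natDegree < A.natDegree + 1 := Nat.lt_succ_self _
  set D := A.natDegree + 1 with hD
  set s' : ℕ → ℕ := fun n => if h : n < t then s ⟨n, h⟩ else 0 with hs'
  set e : ℕ → ℕ := fun j => if j = 0 then 0 else s' (j - 1) with he
  have key : ∀ j : ℕ, j ≤ t → (q : ℤ) ^ j * Stmt15Aux.csum A D (q ^ e j) M ≤ A.eval 1 := by
    intro j
    induction j with
    | zero =>
        intro _
        have h0 : e 0 = 0 := by simp [he]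
        rw [h0, pow_zero, pow_zero, one_mul, Stmt15Aux.csum_eval_one hDlt]
    | succ n ih =>
        intro hn1
        have hnt : n < t := Nat.lt_of_succ_le hn1
        have ihh := ih (le_of_lt hnt)
        have hs'n : s' n = s ⟨n, hnt⟩ := by simp [hs', hnt]
        have hge1 : 1 ≤ s' n := by rw [hs'n]; exact hpos _
        have hen : e n < s' n := by
          by_cases h0 : n = 0
          · subst h0
            have : e 0 = 0 := by simp [he]
            omega
          · have h1 : n - 1 < t := by omega
            have he' : e n = s' (n - 1) := by simp [he, h0]
            have hs'' : s' (n - 1) = s ⟨n - 1, h1⟩ := by simp [hs', h1]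
            rw [he', hs'', hs'n]
            exact hmono (show (⟨n - 1, h1⟩ : Fin t) < ⟨n, hnt⟩ from by
              rw [Fin.lt_def]; simp; omega)
        have hanti : Stmt15Aux.csum A D (q ^ (s' n - 1)) M ≤ Stmt15Aux.csum A D (q ^ e n) M :=
          Stmt15Aux.csum_anti hA (pow_dvd_pow q (by omega))
        have hstep : Stmt15Aux.csum A D (q ^ (s' n - 1)) M
            = q * Stmt15Aux.csum A D (q ^ (s' n)) M := by
          have h2 : s' n - 1 + 1 = s' n := by omega
          have hd : Polynomial.cyclotomic (q ^ (s' n - 1 + 1)) ℤ ∣ A := by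
            rw [h2, hs'n]; exact hdvd _
          have := Stmt15Aux.csum_step (u := s' n - 1) hq hd (M : ℤ)
          rw [h2] at this
          exact this
        have he1 : e (n + 1) = s' n := by simp [he]
        have hq0 : (0 : ℤ) ≤ (q : ℤ) ^ n := by positivity
        calc (q : ℤ) ^ (n + 1) * Stmt15Aux.csum A D (q ^ e (n + 1)) M
            = (q : ℤ) ^ n * (q * Stmt15Aux.csum A D (q ^ (s' n)) M) := by rw [he1]; ring
          _ = (q : ℤ) ^ n * Stmt15Aux.csum A D (q ^ (s' n - 1)) M := by rw [← hstep]
          _ ≤ (q : ℤ) ^ n * Stmt15Aux.csum A D (q ^ e n) M :=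
              mul_le_mul_of_nonneg_left hanti hq0
          _ ≤ A.eval 1 := ihh
  have hfin := key t le_rfl
  have hc : A.coeff M ≤ Stmt15Aux.csum A D (q ^ e t) M := Stmt15Aux.coeff_le_csum hA hDlt _
  calc (q : ℤ) ^ t * A.coeff M ≤ (q : ℤ) ^ t * Stmt15Aux.csum A D (q ^ e t) M :=
        mul_le_mul_of_nonneg_left hc (by positivity)
    _ ≤ A.eval 1 := hfin
end

section
/- Let k ≥ 1, let b, c be positive integers, let q be a prime and t a positive integer such that q^t divides (b+c)/gcd(b,c) and b + c ≤ 2k + (b+c)/q^t. Then there exist nonnegative integers l'_1,...,l'_k with the following property: for all nonnegative integers l_1,...,l_k and every integer P > 1 such that (i) l_j ≡ l'_j (mod q^t) for all j if q > 2, (ii) l_j ≡ l'_j (mod 2^{t+1}) for all j if q = 2, (iii) M = max(l_1,...,l_k) > q^{t+1}, (iv) q^t divides P if q > 2, and (v) 2^{t+1} divides P if q = 2, it holds that q^t divides S̃_P(1), where S̃_P(x) = Π Φ_n(x), the product being over all n dividing P such that n is a prime power and Φ_n(x) divides A(x) = (b+c-2k)·x^M + Σ_{i=1}^{k} (x^{M+l_i}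 + x^{M-l_i}). -/
open Polynomial

open scoped Classical

section AuxStmt16
open Finset


lemma dvd_pow_sub_pow_modN (N a : ℕ) : ((X:ℤ[X])^N - 1) ∣ X^a - X^(a % N) := by
  have e : (X:ℤ[X])^a = ((X:ℤ[X])^N)^(a/N) * X^(a%N) := by
    rw [← pow_mul, ← pow_add, Nat.div_add_mod]
  have h : ((X:ℤ[X])^N - 1) ∣ ((X:ℤ[X])^N)^(a/N) - 1 := by
    simpa using sub_dvd_pow_sub_pow ((X:ℤ[X])^N) 1 (a/N)
  rw [e]
  calc ((X:ℤ[X])^N - 1) ∣ (((X:ℤ[X])^N)^(a/N) - 1) * X^(a % N) := h.mul_right _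
    _ = ((X:ℤ[X])^N)^(a/N) * X^(a%N) - X^(a%N) := by ring

lemma dvd_pow_sub_pow_of_modEq {N a b : ℕ} (h : a ≡ b [MOD N]) :
    ((X:ℤ[X])^N - 1) ∣ X^a - X^b := by
  have h1 := dvd_pow_sub_pow_modN N a
  have h2 := dvd_pow_sub_pow_modN N b
  have e : (X:ℤ[X])^a - X^b = (X^a - X^(a % N)) - (X^b - X^(b % N)) := by
    rw [show a % N = b % N from h]; ring
  rw [e]; exact dvd_sub h1 h2

lemma sum_range_div {A : Type*} [AddCommMonoid A] (g : ℕ → A) (m K : ℕ) :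
    ∑ j ∈ Finset.range (m * K), g (j / m) = ∑ a ∈ Finset.range K, m • g a := by
  rcases Nat.eq_zero_or_pos m with rfl | hm
  · simp
  induction K with
  | zero => simp
  | succ K ih =>
      rw [Nat.mul_succ, Finset.sum_range_add, ih, Finset.sum_range_succ]
      congr 1
      have h : ∀ i ∈ Finset.range m, g ((m * K + i) / m) = g K := by
        intro i hi
        rw [Nat.mul_add_div hm, Nat.div_eq_of_lt (Finset.mem_range.1 hi), add_zero]
      rw [Finset.sum_congr rfl h, Finset.sum_const, Finset.card_range]


lemma keyLemma (k N : ℕ) (hN : 0 < N) (l l' : Fin k → ℕ) (c0 : ℤ)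
    (hcong : ∀ j, l j ≡ l' j [MOD N]) (hl' : ∀ j, l' j ≤ N) :
    ((X:ℤ[X])^N - 1) ∣
      (C c0 * X ^ (Finset.univ.sup l)
        + ∑ j : Fin k, ((X:ℤ[X])^(Finset.univ.sup l + l j) + X^(Finset.univ.sup l - l j)))
        * X^(Finset.univ.sup l * (N-1))
      - (C c0 + ∑ j : Fin k, ((X:ℤ[X])^(l' j) + X^(N - l' j))) := by
  set M := Finset.univ.sup l with hMdef
  have hM : ∀ j, l j ≤ M := fun j => Finset.le_sup (Finset.mem_univ j)
  have hMN : M * (N-1) + M = M * N := by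
    calc M * (N-1) + M = M * ((N-1)+1) := (Nat.mul_succ _ _).symm
      _ = M * N := by rw [Nat.sub_add_cancel hN]
  have hlMN : ∀ j, l j ≤ M * N := fun j => (hM j).trans (Nat.le_mul_of_pos_right M hN)
  have hexp : (C c0 * X ^ M + ∑ j : Fin k, ((X:ℤ[X])^(M + l j) + X^(M - l j))) * X^(M*(N-1))
      = C c0 * X^(M*N) + ∑ j : Fin k, ((X:ℤ[X])^(M*N + l j) + X^(M*N - l j)) := by
    rw [add_mul, Finset.sum_mul]
    congr 1
    · rw [mul_assoc, ← pow_add]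
      congr 2
      omega
    · refine Finset.sum_congr rfl fun j _ => ?_
      have h1 := hM j
      rw [add_mul, ← pow_add, ← pow_add]
      have e1 : M + l j + M*(N-1) = M*N + l j := by omega
      have e2 : M - l j + M*(N-1) = M*N - l j := by omega
      rw [e1, e2]
  rw [hexp]
  have hsplit : C c0 * X^(M*N) + (∑ j : Fin k, ((X:ℤ[X])^(M*N + l j) + X^(M*N - l j)))
      - (C c0 + ∑ j : Fin k, ((X:ℤ[X])^(l' j) + X^(N - l' j)))
      = C c0 * (X^(M*N) - X^0)
        + ∑ j : Fin k, (((X:ℤ[X])^(M*N + l j) - X^(l' j)) + (X^(M*N - l j) - X^(N - l' j))) := by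
    simp only [Finset.sum_add_distrib, Finset.sum_sub_distrib]
    ring
  rw [hsplit]
  have hMN0 : M * N ≡ 0 [MOD N] := Nat.modEq_zero_iff_dvd.2 ⟨M, mul_comm M N⟩
  refine dvd_add (Dvd.dvd.mul_left (dvd_pow_sub_pow_of_modEq hMN0) _) (Finset.dvd_sum ?_)
  intro j _
  refine dvd_add (dvd_pow_sub_pow_of_modEq ?_) (dvd_pow_sub_pow_of_modEq ?_)
  · calc M*N + l j ≡ 0 + l' j [MOD N] := hMN0.add (hcong j)
      _ = l' j := by ring
  · have h1 : (M*N - l j) + l j = M*N := Nat.sub_add_cancel (hlMN j)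
    have h2 : (N - l' j) + l' j = N := Nat.sub_add_cancel (hl' j)
    refine Nat.ModEq.add_right_cancel' (l j) ?_
    calc (M*N - l j) + l j = M*N := h1
      _ ≡ 0 [MOD N] := hMN0
      _ ≡ N [MOD N] := Nat.modEq_zero_iff_dvd.2 dvd_rfl |>.symm
      _ = (N - l' j) + l' j := h2.symm
      _ ≡ (N - l' j) + l j [MOD N] := Nat.ModEq.add_left _ (hcong j).symm

lemma concludeLemma {q t N P : ℕ} (hq : q.Prime) (hN : 0 < N) (hP : 1 < P) (hNP : N ∣ P)
    (A T : Polynomial ℤ) (D : ℕ) (hAT : ((X:ℤ[X])^N - 1) ∣ A * X^D - T)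
    (E : Finset ℕ) (hcard : E.card = t)
    (hE : ∀ e ∈ E, 1 ≤ e ∧ q^e ∣ N ∧ cyclotomic (q^e) ℤ ∣ T) :
    ((q:ℤ))^t ∣ (cycloProdPP P A).eval 1 := by
  haveI : Fact q.Prime := ⟨hq⟩
  have hXN : ∀ e ∈ E, cyclotomic (q^e) ℤ ∣ (X:ℤ[X])^N - 1 := by
    intro e he
    obtain ⟨d, hd⟩ := (hE e he).2.1
    calc cyclotomic (q^e) ℤ ∣ (X:ℤ[X])^(q^e) - 1 := cyclotomic.dvd_X_pow_sub_one _ _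
      _ ∣ (X:ℤ[X])^N - 1 := by
          rw [hd, pow_mul]
          simpa using sub_dvd_pow_sub_pow ((X:ℤ[X])^(q^e)) 1 d
  have hdvdA : ∀ e ∈ E, cyclotomic (q^e) ℤ ∣ A := by
    intro e he
    have h1 : cyclotomic (q^e) ℤ ∣ A * X^D := by
      have := (hXN e he).trans hAT
      have h2 := dvd_add this ((hE e he).2.2)
      simpa using h2
    have h3 : cyclotomic (q^e) ℤ ∣ (X:ℤ[X])^(D*N) - 1 := by
      refine (hXN e he).trans ?_
      rw [mul_comm, pow_mul]
      simpa using sub_dvd_pow_sub_pow ((X:ℤ[X])^N) 1 D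
    have h4 : cyclotomic (q^e) ℤ ∣ A * X^(D*N) := by
      have e1 : A * X^(D*N) = A * X^D * X^(D*N - D) := by
        rw [mul_assoc, ← pow_add]
        congr 2
        have : D ≤ D * N := Nat.le_mul_of_pos_right D hN
        omega
      rw [e1]; exact h1.mul_right _
    have e2 : A = A * X^(D*N) - A * ((X:ℤ[X])^(D*N) - 1) := by ring
    rw [e2]
    exact dvd_sub h4 (h3.mul_left A)
  have hsub : E.image (q ^ ·) ⊆ (Nat.divisors P).filter
      (fun n => IsPrimePow n ∧ Polynomial.cyclotomic n ℤ ∣ A) := by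
    intro n hn
    obtain ⟨e, he, rfl⟩ := Finset.mem_image.1 hn
    rw [Finset.mem_filter, Nat.mem_divisors]
    exact ⟨⟨(hE e he).2.1.trans hNP, by omega⟩,
      ⟨q, e, hq.prime, (hE e he).1, rfl⟩, hdvdA e he⟩
  have hprod : ∏ n ∈ E.image (q ^ ·), cyclotomic n ℤ ∣ cycloProdPP P A :=
    Finset.prod_dvd_prod_of_subset _ _ _ hsub
  have heval := Polynomial.eval_dvd (x := (1:ℤ)) hprod
  have hval : (∏ n ∈ E.image (q ^ ·), cyclotomic n ℤ).eval 1 = (q:ℤ)^t := by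
    rw [Polynomial.eval_prod,
      Finset.prod_image (fun e _ f _ h => Nat.pow_right_injective hq.two_le h)]
    have : ∀ e ∈ E, (cyclotomic (q^e) ℤ).eval 1 = (q:ℤ) := by
      intro e he
      have h1 := (hE e he).1
      have : e = (e - 1) + 1 := by omega
      rw [this, eval_one_cyclotomic_prime_pow]
    rw [Finset.prod_congr rfl this, Finset.prod_const, hcard]
  rw [hval] at heval
  exact heval


lemma sum_l'_odd (k m K h N : ℕ) (hm : 0 < m) (hN : N = 2*K+1) (hh : h = m*K) (hhk : h ≤ k) :
    (∑ j : Fin k, ((X:ℤ[X])^(if (j:ℕ) < h then (j:ℕ)/m + 1 else 0)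
        + X^(N - (if (j:ℕ) < h then (j:ℕ)/m + 1 else 0))))
    = C (m:ℤ) * ((∑ a ∈ Finset.range N, (X:ℤ[X])^a) - 1) + C ((k:ℤ) - (h:ℤ)) * (1 + X^N) := by
  rw [Fin.sum_univ_eq_sum_range (fun j =>
    ((X:ℤ[X])^(if j < h then j/m + 1 else 0) + X^(N - (if j < h then j/m + 1 else 0))))]
  rw [← Finset.sum_range_add_sum_Ico _ hhk]
  have hIco : ∑ j ∈ Finset.Ico h k,
      ((X:ℤ[X])^(if j < h then j/m + 1 else 0) + X^(N - (if j < h then j/m + 1 else 0)))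
      = (k - h) • ((1:ℤ[X]) + X^N) := by
    rw [Finset.sum_congr rfl (fun j hj => ?_), Finset.sum_const, Nat.card_Ico]
    have : ¬ (j < h) := by have := (Finset.mem_Ico.1 hj).1; omega
    rw [if_neg this]
    simp
  rw [hIco]
  have hR : ∑ j ∈ Finset.range h,
      ((X:ℤ[X])^(if j < h then j/m + 1 else 0) + X^(N - (if j < h then j/m + 1 else 0)))
      = ∑ j ∈ Finset.range (m*K), ((X:ℤ[X])^(j/m + 1) + X^(N - (j/m + 1))) := by
    rw [← hh]
    refine Finset.sum_congr rfl fun j hj => ?_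
    rw [if_pos (Finset.mem_range.1 hj)]
  rw [hR, sum_range_div (fun a => (X:ℤ[X])^(a+1) + X^(N - (a+1))) m K]
  rw [← Finset.smul_sum]
  have hGsum : ∑ a ∈ Finset.range K, ((X:ℤ[X])^(a+1) + X^(N - (a+1)))
      = (∑ a ∈ Finset.range N, (X:ℤ[X])^a) - 1 := by
    rw [Finset.sum_add_distrib]
    have hrefl : ∑ a ∈ Finset.range K, (X:ℤ[X])^(N - (a+1))
        = ∑ a ∈ Finset.range K, (X:ℤ[X])^(K+1+a) := by
      rw [← Finset.sum_range_reflect (fun a => (X:ℤ[X])^(K+1+a)) K]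
      refine Finset.sum_congr rfl fun a ha => ?_
      have := Finset.mem_range.1 ha
      congr 1
      omega
    rw [hrefl, hN]
    rw [Finset.sum_range_succ' (fun a => (X:ℤ[X])^a) (2*K)]
    rw [show 2*K = K + K from by omega, Finset.sum_range_add]
    have : ∀ i ∈ Finset.range K, (X:ℤ[X])^(K+i+1) = (X:ℤ[X])^(K+1+i) := by
      intro i _; congr 1; omega
    rw [Finset.sum_congr rfl this]
    simp only [pow_zero]
    ring
  rw [hGsum]
  simp only [nsmul_eq_mul]
  have hsm : ((m:ℤ[X])) = C (m:ℤ) := by simp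
  have hkh : ((k - h : ℕ) : ℤ[X]) = C ((k:ℤ) - (h:ℤ)) := by
    push_cast [hhk]
    simp
  rw [hsm, hkh]
  try ring


lemma sum_l'_two (k H α β γ s1 s2 s3 N : ℕ) (hH : 0 < H) (hN : N = 4*H)
    (hα : α = 2*γ) (hβ : β ≤ 1) (hs1 : s1 = α*(H-1)) (hs2 : s2 = s1 + γ)
    (hs3 : s3 = s2 + β*H) (hs3k : s3 ≤ k) :
    (∑ j : Fin k, ((X:ℤ[X])^(if (j:ℕ) < s1 then 2*((j:ℕ)/α)+2 else
          if (j:ℕ) < s2 then 2*H else if (j:ℕ) < s3 then 2*((j:ℕ)-s2)+1 else 0)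
        + X^(N - (if (j:ℕ) < s1 then 2*((j:ℕ)/α)+2 else
          if (j:ℕ) < s2 then 2*H else if (j:ℕ) < s3 then 2*((j:ℕ)-s2)+1 else 0))))
    = C (α:ℤ) * ((∑ i ∈ Finset.range (2*H), (X:ℤ[X])^(2*i)) - 1)
      + C (β:ℤ) * (X * (∑ i ∈ Finset.range (2*H), (X:ℤ[X])^(2*i)))
      + C ((k:ℤ) - (s3:ℤ)) * (1 + X^N) := by
  set G2 : ℤ[X] := ∑ i ∈ Finset.range (2*H), (X:ℤ[X])^(2*i) with hG2
  set L : ℕ → ℕ := fun j => if j < s1 then 2*(j/α)+2 else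
    if j < s2 then 2*H else if j < s3 then 2*(j-s2)+1 else 0 with hL
  have hs12 : s1 ≤ s2 := by omega
  have hs23 : s2 ≤ s3 := by omega
  rw [Fin.sum_univ_eq_sum_range (fun j => (X:ℤ[X])^(L j) + X^(N - L j))]
  rw [← Finset.sum_range_add_sum_Ico _ hs3k,
    ← Finset.sum_range_add_sum_Ico (fun j => (X:ℤ[X])^(L j) + X^(N - L j)) hs23,
    ← Finset.sum_range_add_sum_Ico (fun j => (X:ℤ[X])^(L j) + X^(N - L j)) hs12]
  -- Piece 4
  have hP4 : ∑ j ∈ Finset.Ico s3 k, ((X:ℤ[X])^(L j) + X^(N - L j))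
      = (k - s3) • ((1:ℤ[X]) + X^N) := by
    rw [Finset.sum_congr rfl (fun j hj => ?_), Finset.sum_const, Nat.card_Ico]
    have hj' := Finset.mem_Ico.1 hj
    have h0 : L j = 0 := by simp only [hL]; rw [if_neg, if_neg, if_neg] <;> omega
    rw [h0]
    simp
  -- Piece 2
  have hP2 : ∑ j ∈ Finset.Ico s1 s2, ((X:ℤ[X])^(L j) + X^(N - L j))
      = γ • ((X:ℤ[X])^(2*H) + X^(2*H)) := by
    rw [Finset.sum_congr rfl (fun j hj => ?_), Finset.sum_const, Nat.card_Ico, hs2,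
      Nat.add_sub_cancel_left]
    have hj' := Finset.mem_Ico.1 hj
    have h1 : L j = 2*H := by simp only [hL]; rw [if_neg, if_pos] <;> omega
    rw [h1, show N - 2*H = 2*H from by omega]
  -- X * G2 as odd powers
  have hXG2 : (X:ℤ[X]) * G2 = ∑ i ∈ Finset.range (2*H), (X:ℤ[X])^(2*i+1) := by
    rw [hG2, Finset.mul_sum]
    exact Finset.sum_congr rfl fun i _ => (pow_succ' X (2*i)).symm
  -- Piece 3
  have hP3 : ∑ j ∈ Finset.Ico s2 s3, ((X:ℤ[X])^(L j) + X^(N - L j))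
      = β • ((X:ℤ[X]) * G2) := by
    rcases Nat.le_one_iff_eq_zero_or_eq_one.1 hβ with h0 | h1
    · rw [h0] at hs3 ⊢
      simp only [zero_mul, add_zero] at hs3
      rw [hs3]
      simp
    · rw [h1] at hs3 ⊢
      simp only [one_mul] at hs3
      rw [Finset.sum_Ico_eq_sum_range, show s3 - s2 = H from by omega]
      have hcong : ∀ i ∈ Finset.range H,
          ((X:ℤ[X])^(L (s2 + i)) + X^(N - L (s2 + i)))
          = ((X:ℤ[X])^(2*i+1) + X^(2*(H+(H-1-i))+1)) := by
        intro i hi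
        have hiH := Finset.mem_range.1 hi
        have hLv : L (s2 + i) = 2*i+1 := by
          simp only [hL]; rw [if_neg, if_neg, if_pos] <;> omega
        rw [hLv, show N - (2*i+1) = 2*(H+(H-1-i))+1 from by omega]
      have hrefl : ∑ i ∈ Finset.range H, (X:ℤ[X])^(2*(H+(H-1-i))+1)
          = ∑ i ∈ Finset.range H, (X:ℤ[X])^(2*(H+i)+1) :=
        Finset.sum_range_reflect (fun i => (X:ℤ[X])^(2*(H+i)+1)) H
      rw [Finset.sum_congr rfl hcong, Finset.sum_add_distrib, hrefl,
        hXG2, one_smul, show 2*H = H + H from by ring, Finset.sum_range_add]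
  -- Piece 1
  have hP1 : ∑ j ∈ Finset.range s1, ((X:ℤ[X])^(L j) + X^(N - L j))
      = α • (G2 - 1 - X^(2*H)) := by
    have hstep : ∑ j ∈ Finset.range s1, ((X:ℤ[X])^(L j) + X^(N - L j))
        = ∑ j ∈ Finset.range (α*(H-1)),
            (fun a => (X:ℤ[X])^(2*a+2) + X^(N - (2*a+2))) (j / α) := by
      rw [← hs1]
      refine Finset.sum_congr rfl fun j hj => ?_
      have hjs := Finset.mem_range.1 hj
      have hLv : L j = 2*(j/α)+2 := by simp only [hL]; rw [if_pos] ; omega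
      rw [hLv]
    rw [hstep, sum_range_div (fun a => (X:ℤ[X])^(2*a+2) + X^(N - (2*a+2))) α (H-1), ← Finset.smul_sum]
    congr 1
    have hcong : ∀ a ∈ Finset.range (H-1),
        ((X:ℤ[X])^(2*a+2) + X^(N - (2*a+2)))
        = ((X:ℤ[X])^(2*a+2) + X^(2*(H+1+(H-1-1-a)))) := by
      intro a ha
      have haH := Finset.mem_range.1 ha
      rw [show N - (2*a+2) = 2*(H+1+(H-1-1-a)) from by omega]
    have hrefl : ∑ a ∈ Finset.range (H-1), (X:ℤ[X])^(2*(H+1+(H-1-1-a)))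
        = ∑ a ∈ Finset.range (H-1), (X:ℤ[X])^(2*(H+1+a)) :=
      Finset.sum_range_reflect (fun a => (X:ℤ[X])^(2*(H+1+a))) (H-1)
    rw [Finset.sum_congr rfl hcong, Finset.sum_add_distrib, hrefl]
    have d1 : ∑ i ∈ Finset.range (2*H), (X:ℤ[X])^(2*i)
        = ∑ i ∈ Finset.range H, (X:ℤ[X])^(2*i)
          + ∑ i ∈ Finset.range H, (X:ℤ[X])^(2*(H+i)) := by
      rw [show 2*H = H + H from by ring, Finset.sum_range_add]
    have d2 : ∑ i ∈ Finset.range H, (X:ℤ[X])^(2*i)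
        = (∑ i ∈ Finset.range (H-1), (X:ℤ[X])^(2*(i+1))) + 1 := by
      have h := Finset.sum_range_succ' (fun i => (X:ℤ[X])^(2*i)) (H-1)
      rw [show (H-1)+1 = H from by omega] at h
      rw [h]
      norm_num
    have d3 : ∑ i ∈ Finset.range H, (X:ℤ[X])^(2*(H+i))
        = (∑ i ∈ Finset.range (H-1), (X:ℤ[X])^(2*(H+(i+1)))) + X^(2*H) := by
      have h := Finset.sum_range_succ' (fun i => (X:ℤ[X])^(2*(H+i))) (H-1)
      rw [show (H-1)+1 = H from by omega] at h
      rw [h]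
      norm_num
    have e1 : ∑ i ∈ Finset.range (H-1), (X:ℤ[X])^(2*(i+1))
        = ∑ i ∈ Finset.range (H-1), (X:ℤ[X])^(2*i+2) :=
      Finset.sum_congr rfl fun i _ => by rw [show 2*(i+1) = 2*i+2 from by ring]
    have e2 : ∑ i ∈ Finset.range (H-1), (X:ℤ[X])^(2*(H+(i+1)))
        = ∑ i ∈ Finset.range (H-1), (X:ℤ[X])^(2*(H+1+i)) :=
      Finset.sum_congr rfl fun i _ => by rw [show H+(i+1) = H+1+i from by ring]
    have hsplit : G2 = (∑ a ∈ Finset.range (H-1), (X:ℤ[X])^(2*a+2))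
        + ((∑ a ∈ Finset.range (H-1), (X:ℤ[X])^(2*(H+1+a))) + X^(2*H) + 1) := by
      rw [hG2, d1, d2, d3, e1, e2]
      ring
    rw [hsplit]
    ring
  rw [hP1, hP2, hP3, hP4]
  simp only [nsmul_eq_mul]
  have c1 : ((α:ℕ) : ℤ[X]) = C (α:ℤ) := by simp
  have c2 : ((γ:ℕ) : ℤ[X]) = C (γ:ℤ) := by simp
  have c3 : ((β:ℕ) : ℤ[X]) = C (β:ℤ) := by simp
  have c4 : ((k - s3 : ℕ) : ℤ[X]) = C ((k:ℤ) - (s3:ℤ)) := by push_cast [hs3k]; simp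
  have c5 : C (α:ℤ) = 2 * C (γ:ℤ) := by
    have : ((α:ℤ)) = 2 * (γ:ℤ) := by exact_mod_cast hα
    rw [this, map_mul]
    norm_num
  rw [c1, c2, c3, c4, c5]
  ring

lemma cyclo_dvd_XN_sub_one {n N : ℕ} (h : n ∣ N) :
    cyclotomic n ℤ ∣ (X:ℤ[X])^N - 1 := by
  obtain ⟨d, hd⟩ := h
  calc cyclotomic n ℤ ∣ (X:ℤ[X])^n - 1 := cyclotomic.dvd_X_pow_sub_one _ _
    _ ∣ (X:ℤ[X])^N - 1 := by
        rw [hd, pow_mul]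
        simpa using sub_dvd_pow_sub_pow ((X:ℤ[X])^n) 1 d


end AuxStmt16

/-- There exist residues `l'_1,...,l'_k` such that for all distances `l_1,...,l_k` and all
`P > 1` satisfying conditions (i)–(v), `q^t` divides `S̃_P(1)`. -/
theorem stmt16 (k : ℕ) (hk : 1 ≤ k) (b c : ℕ) (hb : 0 < b) (hc : 0 < c)
    (q t : ℕ) (hq : q.Prime) (ht : 0 < t)
    (hdvd : q ^ t ∣ (b + c) / Nat.gcd b c) (hle : b + c ≤ 2 * k + (b + c) / q ^ t) :
    ∃ l' : Fin k → ℕ, ∀ (l : Fin k → ℕ) (P : ℕ), 1 < P →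
      (2 < q → ∀ j : Fin k, l j ≡ l' j [MOD q ^ t]) →
      (q = 2 → ∀ j : Fin k, l j ≡ l' j [MOD 2 ^ (t + 1)]) →
      q ^ (t + 1) < Finset.univ.sup l →
      (2 < q → q ^ t ∣ P) →
      (q = 2 → 2 ^ (t + 1) ∣ P) →
      ((q : ℤ) ^ t) ∣ (cycloProdPP P (polyA k l b c)).eval 1 := by
  have hg : Nat.gcd b c ∣ b + c := Nat.dvd_add (Nat.gcd_dvd_left b c) (Nat.gcd_dvd_right b c)
  have hqt : q ^ t ∣ b + c := hdvd.trans (Nat.div_dvd_of_dvd hg)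
  set m := (b + c) / q ^ t with hmdef
  have hbc : b + c = q ^ t * m := (Nat.mul_div_cancel' hqt).symm
  have hm : 0 < m := Nat.div_pos (Nat.le_of_dvd (by omega) hqt) (pow_pos hq.pos t)
  have hle' : b + c ≤ 2 * k + m := hle
  rcases eq_or_ne q 2 with hq2 | hqne
  -- Case q = 2
  · subst hq2
    obtain ⟨u, rfl⟩ : ∃ u, t = u + 1 := ⟨t - 1, by omega⟩
    set N := 2 ^ (u + 1 + 1) with hNdef
    set H := 2 ^ u with hHdef
    have hH : 0 < H := pow_pos (by norm_num) u
    have hN4 : N = 4 * H := by rw [hNdef, hHdef, pow_succ, pow_succ]; ring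
    have hbc2 : b + c = 2 * (H * m) := by
      rw [hbc, hHdef, pow_succ]; ring
    set γ := m / 2 with hγdef
    set β := m % 2 with hβdef
    set α := 2 * γ with hαdef
    have hβ1 : β ≤ 1 := by omega
    have hαβ : α + β = m := by
      rw [hαdef, hγdef, hβdef]; omega
    set s1 := α * (H - 1) with hs1def
    set s2 := s1 + γ with hs2def
    set s3 := s2 + β * H with hs3def
    obtain ⟨H', hH'⟩ : ∃ H', H = H' + 1 := ⟨H - 1, by omega⟩
    have hw : 2 * s3 + α = 2 * (H * m) := by
      rw [hs3def, hs2def, hs1def, hαdef, ← hαβ, hαdef, hH']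
      simp only [Nat.add_sub_cancel]
      ring
    have hs3k : s3 ≤ k := by omega
    refine ⟨fun j => if (j:ℕ) < s1 then 2*((j:ℕ)/α)+2 else
      if (j:ℕ) < s2 then 2*H else if (j:ℕ) < s3 then 2*((j:ℕ)-s2)+1 else 0, ?_⟩
    intro l P hP _ hcongTwo _ _ hPtwo
    have hcong : ∀ j : Fin k, l j ≡ (if (j:ℕ) < s1 then 2*((j:ℕ)/α)+2 else
        if (j:ℕ) < s2 then 2*H else if (j:ℕ) < s3 then 2*((j:ℕ)-s2)+1 else 0) [MOD N] :=
      hcongTwo rfl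
    have hNP : N ∣ P := hPtwo rfl
    have hNpos : 0 < N := by omega
    have hl'N : ∀ j : Fin k, (if (j:ℕ) < s1 then 2*((j:ℕ)/α)+2 else
        if (j:ℕ) < s2 then 2*H else if (j:ℕ) < s3 then 2*((j:ℕ)-s2)+1 else 0) ≤ N := by
      intro j
      split_ifs with h1 h2 h3
      · have hα0 : 0 < α := by
          rcases Nat.eq_zero_or_pos α with h | h
          · rw [hs1def, h] at h1; omega
          · exact h
        have := Nat.div_lt_of_lt_mul (hs1def ▸ h1)
        omega
      · omega
      · have hβH : β * H ≤ 1 * H := Nat.mul_le_mul_right H hβ1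
        have : (j:ℕ) - s2 < H := by
          rw [hs3def] at h3
          omega
        omega
      · omega
    set c0 : ℤ := (b:ℤ) + (c:ℤ) - 2 * (k:ℤ) with hc0def
    set G2 : ℤ[X] := ∑ i ∈ Finset.range (2*H), (X:ℤ[X])^(2*i) with hG2def
    have hTid : C c0 + ∑ j : Fin k, ((X:ℤ[X])^(if (j:ℕ) < s1 then 2*((j:ℕ)/α)+2 else
          if (j:ℕ) < s2 then 2*H else if (j:ℕ) < s3 then 2*((j:ℕ)-s2)+1 else 0)
        + X^(N - (if (j:ℕ) < s1 then 2*((j:ℕ)/α)+2 else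
          if (j:ℕ) < s2 then 2*H else if (j:ℕ) < s3 then 2*((j:ℕ)-s2)+1 else 0)))
        = C (α:ℤ) * G2 + C (β:ℤ) * ((X:ℤ[X]) * G2)
          + C ((k:ℤ) - (s3:ℤ)) * ((X:ℤ[X])^N - 1) := by
      rw [sum_l'_two k H α β γ s1 s2 s3 N hH hN4 hαdef hβ1 hs1def hs2def hs3def hs3k]
      have hbcs : b + c = 2 * s3 + α := by omega
      have hc0v : c0 = (α:ℤ) - 2 * ((k:ℤ) - (s3:ℤ)) := by
        rw [hc0def]
        have : (b:ℤ) + (c:ℤ) = 2 * (s3:ℤ) + (α:ℤ) := by exact_mod_cast hbcs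
        rw [this]; ring
      have hc0C : C c0 = C (α:ℤ) - 2 * C ((k:ℤ) - (s3:ℤ)) := by
        rw [hc0v, map_sub, map_mul]; norm_num
      rw [hc0C, ← hG2def]
      ring
    have hA : polyA k l b c = C c0 * X ^ (Finset.univ.sup l)
        + ∑ j : Fin k, ((X:ℤ[X])^(Finset.univ.sup l + l j)
          + X^(Finset.univ.sup l - l j)) := rfl
    have hAT := keyLemma k N hNpos l _ c0 hcong hl'N
    rw [← hA] at hAT
    refine concludeLemma hq hNpos hP hNP (polyA k l b c) _ _ hAT
      (Finset.Icc 2 (u+1+1)) (by rw [Nat.card_Icc]; omega) ?_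
    intro e he
    rw [Finset.mem_Icc] at he
    refine ⟨by omega, ?_, ?_⟩
    · rw [hNdef]; exact pow_dvd_pow 2 he.2
    · rw [hTid]
      have hG2dvd : cyclotomic (2^e) ℤ ∣ G2 := by
        have h1 : (2:ℕ)^(e-1) ∣ 2*H := by
          rw [hHdef, ← pow_succ']
          exact pow_dvd_pow 2 (by omega)
        have h2 : (2:ℕ)^(e-1) ≠ 1 := by
          have : 1 ≤ e - 1 := by omega
          have := Nat.one_lt_two_pow_iff.2 (by omega : e - 1 ≠ 0)
          omega
        have h3 : cyclotomic (2^(e-1)) ℤ ∣ ∑ i ∈ Finset.range (2*H), (X:ℤ[X])^i :=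
          cyclotomic_dvd_geom_sum_of_dvd ℤ h1 h2
        have h4 := map_dvd (Polynomial.expand ℤ 2) h3
        have h5 : (Polynomial.expand ℤ 2) (∑ i ∈ Finset.range (2*H), (X:ℤ[X])^i) = G2 := by
          rw [map_sum, hG2def]
          exact Finset.sum_congr rfl fun i _ => by
            rw [map_pow, Polynomial.expand_X, ← pow_mul, mul_comm]
        have h6 : (Polynomial.expand ℤ 2) (cyclotomic (2^(e-1)) ℤ) = cyclotomic (2^e) ℤ := by
          rw [cyclotomic_expand_eq_cyclotomic Nat.prime_two
            (dvd_pow_self 2 (by omega : e - 1 ≠ 0)) ℤ]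
          congr 1
          rw [← pow_succ]
          congr 1
          omega
        rw [← h5, ← h6]
        exact h4
      have hXNdvd : cyclotomic (2^e) ℤ ∣ (X:ℤ[X])^N - 1 :=
        cyclo_dvd_XN_sub_one (by rw [hNdef]; exact pow_dvd_pow 2 he.2)
      exact dvd_add (dvd_add (hG2dvd.mul_left _) ((hG2dvd.mul_left X).mul_left _))
        (hXNdvd.mul_left _)
  -- Case q odd
  · have hq3 : 2 < q := by have := hq.two_le; omega
    set N := q ^ t with hNdef
    have hNpos : 0 < N := pow_pos hq.pos t
    have hNodd : Odd N := (hq.odd_of_ne_two hqne).pow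
    obtain ⟨K, hK⟩ := hNodd
    set h := m * K with hhdef
    have hlin : N * m = 2 * (m * K) + m := by rw [hK]; ring
    have hNm : b + c = N * m := hbc
    have hhk : h ≤ k := by omega
    refine ⟨fun j => if (j:ℕ) < h then (j:ℕ)/m + 1 else 0, ?_⟩
    intro l P hP hcongOdd _ _ hPodd _
    have hcong : ∀ j : Fin k, l j ≡ (if (j:ℕ) < h then (j:ℕ)/m + 1 else 0) [MOD N] :=
      hcongOdd hq3
    have hNP : N ∣ P := hPodd hq3
    have hl'N : ∀ j : Fin k, (if (j:ℕ) < h then (j:ℕ)/m + 1 else 0) ≤ N := by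
      intro j
      split_ifs with h1
      · have := Nat.div_lt_of_lt_mul (hhdef ▸ h1)
        omega
      · omega
    set c0 : ℤ := (b:ℤ) + (c:ℤ) - 2 * (k:ℤ) with hc0def
    have hTid : C c0 + ∑ j : Fin k, ((X:ℤ[X])^(if (j:ℕ) < h then (j:ℕ)/m + 1 else 0)
          + X^(N - (if (j:ℕ) < h then (j:ℕ)/m + 1 else 0)))
        = C (m:ℤ) * (∑ a ∈ Finset.range N, (X:ℤ[X])^a)
          + C ((k:ℤ) - (h:ℤ)) * ((X:ℤ[X])^N - 1) := by
      rw [sum_l'_odd k m K h N hm hK hhdef hhk]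
      have hbch : b + c = 2 * h + m := by omega
      have hc0v : c0 = (m:ℤ) - 2 * ((k:ℤ) - (h:ℤ)) := by
        rw [hc0def]
        have : (b:ℤ) + (c:ℤ) = 2 * (h:ℤ) + (m:ℤ) := by exact_mod_cast hbch
        rw [this]; ring
      have hc0C : C c0 = C (m:ℤ) - 2 * C ((k:ℤ) - (h:ℤ)) := by
        rw [hc0v, map_sub, map_mul]; norm_num
      rw [hc0C]
      ring
    have hA : polyA k l b c = C c0 * X ^ (Finset.univ.sup l)
        + ∑ j : Fin k, ((X:ℤ[X])^(Finset.univ.sup l + l j)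
          + X^(Finset.univ.sup l - l j)) := rfl
    have hAT := keyLemma k N hNpos l _ c0 hcong hl'N
    rw [← hA] at hAT
    refine concludeLemma hq hNpos hP hNP (polyA k l b c) _ _ hAT
      (Finset.Icc 1 t) (by rw [Nat.card_Icc]; omega) ?_
    intro e he
    rw [Finset.mem_Icc] at he
    refine ⟨he.1, ?_, ?_⟩
    · rw [hNdef]; exact pow_dvd_pow q he.2
    · rw [hTid]
      have hGdvd : cyclotomic (q^e) ℤ ∣ ∑ a ∈ Finset.range N, (X:ℤ[X])^a := by
        refine cyclotomic_dvd_geom_sum_of_dvd ℤ (by rw [hNdef]; exact pow_dvd_pow q he.2) ?_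
        have := Nat.one_lt_pow (by omega : e ≠ 0) hq.one_lt
        omega
      have hXNdvd : cyclotomic (q^e) ℤ ∣ (X:ℤ[X])^N - 1 :=
        cyclo_dvd_XN_sub_one (by rw [hNdef]; exact pow_dvd_pow q he.2)
      exact dvd_add (hGdvd.mul_left _) (hXNdvd.mul_left _)
end

section
/- Let k ≥ 1, let l_1,...,l_k be nonnegative integers with M = max(l_1,...,l_k), let b, c be positive integers, and let P > 1 be an integer. A function f : ℤ/Pℤ → {black, white} is a perfect 2-colouring of the circulant graph C_P(l_1,...,l_k) with parameters (b,c) if and only if the indicator function v : ℤ/Pℤ → ℤ of the black vertices (v(g) = 1 if f(g) = black, v(g) = 0 otherwise) is a c-tiling of ℤ/Pℤ with tile u_{l_1,...,l_k;b,c;P}. -/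
open Polynomial

open scoped Classical

lemma sum_range_zmod_s17 (P : ℕ) [NeZero P] (F : ZMod P → ℤ) :
    ∑ a ∈ Finset.range P, F (a : ZMod P) = ∑ x : ZMod P, F x := by
  refine Finset.sum_nbij' (fun a => (a : ZMod P)) (fun x => x.val) ?_ ?_ ?_ ?_ ?_
  · intro a _; exact Finset.mem_univ _
  · intro x _; exact Finset.mem_range.mpr (ZMod.val_lt x)
  · intro a ha; exact ZMod.val_cast_of_lt (Finset.mem_range.mp ha)
  · intro x _; exact ZMod.natCast_rightInverse x
  · intro a _; rfl

lemma delta_sum (P : ℕ) [NeZero P] (g t : ZMod P) (v : ZMod P → ℤ) :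
    ∑ x : ZMod P, (if t = g - x then (1 : ℤ) else 0) * v x = v (g - t) := by
  rw [Finset.sum_eq_single (g - t)]
  · simp [sub_sub_cancel]
  · intro x _ hx
    rw [if_neg, zero_mul]
    intro h
    exact hx ((sub_sub_cancel g x) ▸ congrArg (fun y => g - y) h.symm)
  · simp

/-- `f` is a perfect 2-colouring of `C_P(l_1,...,l_k)` with parameters `(b,c)` if and only
if the indicator function of the black vertices is a `c`-tiling of `ℤ/Pℤ` with tile
`u_{l_1,...,l_k;b,c;P}`. -/
theorem stmt17 (k : ℕ) (hk : 1 ≤ k) (l : Fin k → ℕ) (b c : ℕ) (hb : 0 < b) (hc : 0 < c)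
    (P : ℕ) (hP : 1 < P) (f : ZMod P → Bool) :
    IsPerfectColouring P k l b c f ↔
      (IsMultitiling P (tileU P k l b c)
          (fun g => if f g = true then (1 : ℤ) else 0) (c : ℤ) ∧
        ∀ h : ZMod P,
          (if f h = true then (1 : ℤ) else 0) = 0 ∨
            (if f h = true then (1 : ℤ) else 0) = 1) := by
  haveI : NeZero P := ⟨by omega⟩
  set M : ℕ := Finset.univ.sup l with hM
  set v : ZMod P → ℤ := fun g => if f g = true then (1 : ℤ) else 0 with hv
  have hlM : ∀ i : Fin k, l i ≤ M := fun i => Finset.le_sup (Finset.mem_univ i)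
  -- key identity
  have key : ∀ g : ZMod P,
      ∑ a ∈ Finset.range P, tileU P k l b c (g - (a : ZMod P)) * v (a : ZMod P)
      = ((b : ℤ) + (c : ℤ) - 2 * (k : ℤ)) * v (g - (M : ZMod P))
        + ∑ i : Fin k, (v (g - (M : ZMod P) - (l i : ZMod P))
            + v (g - (M : ZMod P) + (l i : ZMod P))) := by
    intro g
    rw [sum_range_zmod_s17 P (fun x => tileU P k l b c (g - x) * v x)]
    have step : ∀ x : ZMod P, tileU P k l b c (g - x) * v x
        = ((b : ℤ) + (c : ℤ) - 2 * (k : ℤ))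
            * ((if ((M : ℕ) : ZMod P) = g - x then (1 : ℤ) else 0) * v x)
          + ∑ i : Fin k,
            ((if ((M + l i : ℕ) : ZMod P) = g - x then (1 : ℤ) else 0) * v x
              + (if ((M - l i : ℕ) : ZMod P) = g - x then (1 : ℤ) else 0) * v x) := by
      intro x
      simp only [tileU, ← hM, add_mul, Finset.sum_mul, mul_assoc]
    rw [Finset.sum_congr rfl (fun x _ => step x)]
    rw [Finset.sum_add_distrib, ← Finset.mul_sum, delta_sum, Finset.sum_comm]
    congr 1
    refine Finset.sum_congr rfl fun i _ => ?_
    rw [Finset.sum_add_distrib, delta_sum, delta_sum]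
    congr 2
    · push_cast
      ring
    · rw [Nat.cast_sub (hlM i)]
      ring
  have pair2 : ∀ w : ZMod P,
      (∑ i : Fin k, ((if f (w + (l i : ZMod P)) = false then (1 : ℤ) else 0)
          + (if f (w - (l i : ZMod P)) = false then 1 else 0)))
      + (∑ i : Fin k, (v (w + (l i : ZMod P)) + v (w - (l i : ZMod P)))) = 2 * k := by
    intro w
    rw [← Finset.sum_add_distrib]
    have : ∀ i ∈ Finset.univ, ((if f (w + (l i : ZMod P)) = false then (1 : ℤ) else 0)
          + (if f (w - (l i : ZMod P)) = false then 1 else 0))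
        + (v (w + (l i : ZMod P)) + v (w - (l i : ZMod P))) = 2 := by
      intro i _
      simp only [hv]
      cases f (w + (l i : ZMod P)) <;> cases f (w - (l i : ZMod P)) <;> norm_num
    rw [Finset.sum_congr rfl this, Finset.sum_const, Finset.card_univ, Fintype.card_fin]
    simp [nsmul_eq_mul, mul_comm]
  have swap : ∀ w : ZMod P,
      ∑ i : Fin k, (v (w - (l i : ZMod P)) + v (w + (l i : ZMod P)))
      = ∑ i : Fin k, (v (w + (l i : ZMod P)) + v (w - (l i : ZMod P))) := by
    intro w; exact Finset.sum_congr rfl fun i _ => add_comm _ _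
  have whiteB : ∀ w : ZMod P,
      ((∑ i : Fin k, ((if f (w + (l i : ZMod P)) = true then 1 else 0)
          + (if f (w - (l i : ZMod P)) = true then 1 else 0)) : ℕ) : ℤ)
      = ∑ i : Fin k, (v (w + (l i : ZMod P)) + v (w - (l i : ZMod P))) := by
    intro w
    push_cast
    refine Finset.sum_congr rfl fun i _ => ?_
    simp only [hv]
  have whiteW : ∀ w : ZMod P,
      ((∑ i : Fin k, ((if f (w + (l i : ZMod P)) = false then 1 else 0)
          + (if f (w - (l i : ZMod P)) = false then 1 else 0)) : ℕ) : ℤ)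
      = ∑ i : Fin k, ((if f (w + (l i : ZMod P)) = false then (1 : ℤ) else 0)
          + (if f (w - (l i : ZMod P)) = false then 1 else 0)) := by
    intro w
    push_cast
    rfl
  constructor
  · rintro ⟨hB, hW⟩
    refine ⟨?_, fun h => by by_cases hfh : f h = true <;> simp [hfh]⟩
    intro g
    rw [key g]
    set w : ZMod P := g - (M : ZMod P) with hw
    rw [swap w]
    by_cases hfw : f w = true
    · have h1 := hB w hfw
      have h2 : (((b : ℕ)) : ℤ) = ∑ i : Fin k, ((if f (w + (l i : ZMod P)) = false then (1 : ℤ) else 0)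
          + (if f (w - (l i : ZMod P)) = false then 1 else 0)) := by
        rw [← h1, whiteW]
      have h3 := pair2 w
      have hvw : v w = 1 := by simp [hv, hfw]
      rw [hvw]
      linarith
    · have hfw' : f w = false := by simpa using hfw
      have h1 := hW w hfw'
      have h2 : (((c : ℕ)) : ℤ) = ∑ i : Fin k, (v (w + (l i : ZMod P)) + v (w - (l i : ZMod P))) := by
        rw [← h1, whiteB]
      have hvw : v w = 0 := by simp [hv, hfw']
      rw [hvw]
      linarith
  · rintro ⟨hm, -⟩
    constructor
    · intro w hfw
      have h1 := hm (w + (M : ZMod P))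
      rw [key (w + (M : ZMod P))] at h1
      rw [add_sub_cancel_right] at h1
      rw [swap w] at h1
      have hvw : v w = 1 := by simp [hv, hfw]
      rw [hvw] at h1
      have h3 := pair2 w
      have : ((∑ i : Fin k, ((if f (w + (l i : ZMod P)) = false then 1 else 0)
          + (if f (w - (l i : ZMod P)) = false then 1 else 0)) : ℕ) : ℤ) = (b : ℤ) := by
        rw [whiteW]; linarith
      exact_mod_cast this
    · intro w hfw
      have h1 := hm (w + (M : ZMod P))
      rw [key (w + (M : ZMod P))] at h1
      rw [add_sub_cancel_right] at h1
      rw [swap w] at h1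
      have hvw : v w = 0 := by simp [hv, hfw]
      rw [hvw] at h1
      have : ((∑ i : Fin k, ((if f (w + (l i : ZMod P)) = true then 1 else 0)
          + (if f (w - (l i : ZMod P)) = true then 1 else 0)) : ℕ) : ℤ) = (c : ℤ) := by
        rw [whiteB]; linarith
      exact_mod_cast this
end
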